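/- arXiv:2602.14053 — 6 statements merged into one kernel-verified Lean document; each statement's English description precedes it below -/
import Mathlib

section
/- Let (Ω, F, P) be a probability space, m ≥ 1, and fix constants C > 0, C_LTE > 0, T > 0. Let δt ∈ (0,1] satisfy C·δt² ≤ 1, and let N ∈ ℕ satisfy N·δt ≤ T. Let Ψ : ℝ^m → ℝ^m satisfy ‖Ψ(a) − Ψ(b)‖ ≤ (1 + C·δt²)·‖a − b‖ for all a, b ∈ ℝ^m. Let z_n, w_n, τ_n : Ω → ℝ^m (0 ≤ n ≤ N) be measurable maps such that z_0 = w_0, w_{n+1}(ω) = Ψ(w_n(ω)) and z_{n+1}(ω) = Ψ(z_n(ω)) + τ_n(ω) for every ω and every n < N, and E[‖τ_n‖²] ≤ C_LTE·δt⁴ for every n < N. Then, with K = 3C + 2 and K' = 3·C_LTE, the global error satisfies √(E[‖z_N − w_N‖²]) ≤ √((K'/K)·(e^{K·T} − 1)) · δt. -/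
open MeasureTheory

open scoped ENNReal

lemma elp_toReal' {Ω E : Type*} [MeasurableSpace Ω] [NormedAddCommGroup E]
    {P : Measure Ω} {f : Ω → E} (hf : MemLp f 2 P) :
    (eLpNorm f 2 P).toReal = Real.sqrt (∫ ω, ‖f ω‖ ^ 2 ∂P) := by
  rw [hf.eLpNorm_eq_integral_rpow_norm two_ne_zero ENNReal.ofNat_ne_top,
    ENNReal.toReal_ofReal (by positivity)]
  have h2 : (2 : ℝ≥0∞).toReal = (2 : ℝ) := by simp
  rw [h2, Real.sqrt_eq_rpow]
  norm_num

set_option maxHeartbeats 1000000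

/-- Abstract mean-square convergence theorem: if the numerical sequence `w` is generated
by a one-step map `Ψ` with Lipschitz-type stability constant `1 + C·δt²`, and the exact
sequence `z` follows the same recursion up to a local truncation error `τ_n` with
`E[‖τ_n‖²] ≤ C_LTE·δt⁴`, both starting from the same data, then with `K = 3C + 2` and
`K' = 3·C_LTE` the global error satisfies
`√(E[‖z_N − w_N‖²]) ≤ √((K'/K)·(exp(K·T) − 1)) · δt`. -/
theorem stmt0
    {Ω : Type*} [MeasurableSpace Ω] (P : Measure Ω) [IsProbabilityMeasure P]
    (m : ℕ) (hm : 1 ≤ m)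
    (C C_LTE T δt : ℝ) (hC : 0 < C) (hCLTE : 0 < C_LTE) (hT : 0 < T)
    (hδt0 : 0 < δt) (hδt1 : δt ≤ 1) (hCδt : C * δt ^ 2 ≤ 1)
    (N : ℕ) (hN : (N : ℝ) * δt ≤ T)
    (Ψ : EuclideanSpace ℝ (Fin m) → EuclideanSpace ℝ (Fin m))
    (hΨ : ∀ a b, ‖Ψ a - Ψ b‖ ≤ (1 + C * δt ^ 2) * ‖a - b‖)
    (z w τ : ℕ → Ω → EuclideanSpace ℝ (Fin m))
    (hzm : ∀ n ≤ N, Measurable (z n)) (hwm : ∀ n ≤ N, Measurable (w n))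
    (hτm : ∀ n ≤ N, Measurable (τ n))
    (h0 : z 0 = w 0)
    (hw : ∀ ω, ∀ n < N, w (n + 1) ω = Ψ (w n ω))
    (hz : ∀ ω, ∀ n < N, z (n + 1) ω = Ψ (z n ω) + τ n ω)
    (hτint : ∀ n < N, Integrable (fun ω => ‖τ n ω‖ ^ 2) P)
    (hτ : ∀ n < N, ∫ ω, ‖τ n ω‖ ^ 2 ∂P ≤ C_LTE * δt ^ 4) :
    Real.sqrt (∫ ω, ‖z N ω - w N ω‖ ^ 2 ∂P) ≤
      Real.sqrt ((3 * C_LTE) / (3 * C + 2) * (Real.exp ((3 * C + 2) * T) - 1)) * δt := by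
  have hA1 : (1:ℝ) ≤ 1 + C * δt ^ 2 := by nlinarith
  have hA0 : (0:ℝ) ≤ 1 + C * δt ^ 2 := by linarith
  set A : ℝ := 1 + C * δt ^ 2 with hAdef
  set β : ℝ := Real.sqrt C_LTE * δt ^ 2 with hβdef
  set M : ℝ := Real.sqrt C_LTE / C with hMdef
  have hβ0 : 0 ≤ β := by positivity
  have hM0 : 0 ≤ M := by positivity
  have hMβ : β = M * (A - 1) := by
    rw [hβdef, hMdef, hAdef]; field_simp; ring
  -- continuity of Ψ
  have hΨc : Continuous Ψ := by
    have : LipschitzWith (⟨A, hA0⟩ : NNReal) Ψ :=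
      LipschitzWith.of_dist_le_mul (fun a b => by
        rw [dist_eq_norm, dist_eq_norm]; exact hΨ a b)
    exact this.continuous
  -- main induction
  have main : ∀ n ≤ N, MemLp (fun ω => z n ω - w n ω) 2 P ∧
      (eLpNorm (fun ω => z n ω - w n ω) 2 P).toReal ≤ M * (A ^ n - 1) := by
    intro n
    induction n with
    | zero =>
      intro _
      have hg0 : (fun ω => z 0 ω - w 0 ω) = (0 : Ω → EuclideanSpace ℝ (Fin m)) := by
        funext ω; rw [h0]; simp
      rw [hg0]
      refine ⟨MemLp.zero, ?_⟩
      simp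
    | succ n ih =>
      intro hn1
      have hn : n < N := Nat.lt_of_succ_le hn1
      obtain ⟨hgmem, hgle⟩ := ih hn.le
      set u : Ω → EuclideanSpace ℝ (Fin m) := fun ω => Ψ (z n ω) - Ψ (w n ω) with hudef
      have hum : AEStronglyMeasurable u P :=
        ((hΨc.measurable.comp (hzm n hn.le)).sub
          (hΨc.measurable.comp (hwm n hn.le))).aestronglyMeasurable
      have hule : ∀ ω, ‖u ω‖ ≤ A * ‖z n ω - w n ω‖ := fun ω => hΨ (z n ω) (w n ω)
      have humem : MemLp u 2 P :=
        hgmem.of_le_mul hum (Filter.Eventually.of_forall hule)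
      have hτmem : MemLp (τ n) 2 P :=
        (memLp_two_iff_integrable_sq_norm (hτm n hn.le).aestronglyMeasurable).2 (hτint n hn)
      have hgsucc : (fun ω => z (n+1) ω - w (n+1) ω) = fun ω => u ω + τ n ω := by
        funext ω
        rw [hz ω n hn, hw ω n hn, hudef]
        exact add_sub_right_comm _ _ _
      have hmem' : MemLp (fun ω => z (n+1) ω - w (n+1) ω) 2 P := by
        rw [hgsucc]; exact humem.add hτmem
      refine ⟨hmem', ?_⟩
      have h1 : eLpNorm (fun ω => z (n+1) ω - w (n+1) ω) 2 P ≤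
          eLpNorm u 2 P + eLpNorm (τ n) 2 P := by
        rw [hgsucc]
        exact eLpNorm_add_le hum hτmem.aestronglyMeasurable one_le_two
      have hnn : ∀ ω, ‖u ω‖₊ ≤ A.toNNReal * ‖(fun ω' => z n ω' - w n ω') ω‖₊ := fun ω => by
        rw [← NNReal.coe_le_coe]
        push_cast
        rw [Real.coe_toNNReal _ hA0]
        exact hule ω
      have h2 : eLpNorm u 2 P ≤ A.toNNReal • eLpNorm (fun ω => z n ω - w n ω) 2 P :=
        eLpNorm_le_nnreal_smul_eLpNorm_of_ae_le_mul (Filter.Eventually.of_forall hnn) 2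
      have hufin : eLpNorm u 2 P ≠ ∞ := humem.eLpNorm_ne_top
      have hτfin : eLpNorm (τ n) 2 P ≠ ∞ := hτmem.eLpNorm_ne_top
      have hgfin : eLpNorm (fun ω => z n ω - w n ω) 2 P ≠ ∞ := hgmem.eLpNorm_ne_top
      have h2' : (eLpNorm u 2 P).toReal ≤ A * (eLpNorm (fun ω => z n ω - w n ω) 2 P).toReal := by
        have hfin : A.toNNReal • eLpNorm (fun ω => z n ω - w n ω) 2 P ≠ ∞ := by
          rw [ENNReal.smul_def, smul_eq_mul]
          exact ENNReal.mul_ne_top ENNReal.coe_ne_top hgfin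
        have := ENNReal.toReal_mono hfin h2
        rwa [ENNReal.smul_def, smul_eq_mul, ENNReal.toReal_mul, ENNReal.coe_toReal,
          Real.coe_toNNReal _ hA0] at this
      have hτ' : (eLpNorm (τ n) 2 P).toReal ≤ β := by
        rw [elp_toReal' hτmem]
        calc Real.sqrt (∫ ω, ‖τ n ω‖ ^ 2 ∂P) ≤ Real.sqrt (C_LTE * δt ^ 4) :=
              Real.sqrt_le_sqrt (hτ n hn)
          _ = β := by
              rw [hβdef, Real.sqrt_mul hCLTE.le]
              congr 1
              rw [show δt ^ 4 = (δt ^ 2) ^ 2 by ring, Real.sqrt_sq (by positivity)]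
      calc (eLpNorm (fun ω => z (n+1) ω - w (n+1) ω) 2 P).toReal
          ≤ (eLpNorm u 2 P + eLpNorm (τ n) 2 P).toReal :=
            ENNReal.toReal_mono (ENNReal.add_ne_top.2 ⟨hufin, hτfin⟩) h1
        _ = (eLpNorm u 2 P).toReal + (eLpNorm (τ n) 2 P).toReal :=
            ENNReal.toReal_add hufin hτfin
        _ ≤ A * (M * (A ^ n - 1)) + β := by
            have := mul_le_mul_of_nonneg_left hgle hA0
            have h3 := h2'.trans this
            linarith
        _ = M * (A ^ (n+1) - 1) := by rw [hMβ]; ring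
  obtain ⟨hmemN, hrN⟩ := main N le_rfl
  have hstart : Real.sqrt (∫ ω, ‖z N ω - w N ω‖ ^ 2 ∂P) =
      (eLpNorm (fun ω => z N ω - w N ω) 2 P).toReal := (elp_toReal' hmemN).symm
  rw [hstart]
  -- chain of exponential bounds
  have hECT := Real.exp_pos (C * T)
  have step1 : A ^ N ≤ Real.exp (C * T * δt) := by
    calc A ^ N ≤ Real.exp (C * δt ^ 2) ^ N := by
          apply pow_le_pow_left₀ hA0
          have := Real.add_one_le_exp (C * δt ^ 2)
          linarith
      _ = Real.exp ((N : ℝ) * (C * δt ^ 2)) := by rw [← Real.exp_nat_mul]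
      _ ≤ Real.exp (C * T * δt) := by
          apply Real.exp_le_exp.2
          have : (N : ℝ) * (C * δt ^ 2) = C * ((N : ℝ) * δt) * δt := by ring
          rw [this]
          have h1 : C * ((N:ℝ) * δt) ≤ C * T := by
            apply mul_le_mul_of_nonneg_left hN hC.le
          exact mul_le_mul_of_nonneg_right h1 hδt0.le
  have step2 : Real.exp (C * T * δt) - 1 ≤ δt * (Real.exp (C * T) - 1) := by
    have hcv := convexOn_exp.2 (Set.mem_univ (0:ℝ)) (Set.mem_univ (C * T))
      (by linarith : (0:ℝ) ≤ 1 - δt) hδt0.le (by ring)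
    simp only [smul_eq_mul, mul_zero, zero_add, Real.exp_zero, mul_one] at hcv
    have : δt * (C * T) = C * T * δt := by ring
    rw [this] at hcv
    linarith
  have step3 : Real.exp (C * T) - 1 ≤ C * T * Real.exp (C * T) := by
    have h := Real.add_one_le_exp (-(C * T))
    rw [Real.exp_neg] at h
    have he : (1 - C * T) * Real.exp (C * T) ≤ 1 := by
      calc (1 - C * T) * Real.exp (C * T) ≤ (Real.exp (C * T))⁻¹ * Real.exp (C * T) :=
            mul_le_mul_of_nonneg_right (by linarith) hECT.le
        _ = 1 := inv_mul_cancel₀ hECT.ne'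
    nlinarith
  have hr2 : (eLpNorm (fun ω => z N ω - w N ω) 2 P).toReal ≤
      Real.sqrt C_LTE * T * Real.exp (C * T) * δt := by
    calc (eLpNorm (fun ω => z N ω - w N ω) 2 P).toReal ≤ M * (A ^ N - 1) := hrN
      _ ≤ M * (δt * (Real.exp (C * T) - 1)) := by
          apply mul_le_mul_of_nonneg_left _ hM0
          have : A ^ N - 1 ≤ Real.exp (C * T * δt) - 1 := by linarith
          linarith
      _ ≤ M * (δt * (C * T * Real.exp (C * T))) := by
          apply mul_le_mul_of_nonneg_left _ hM0
          exact mul_le_mul_of_nonneg_left step3 hδt0.le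
      _ = Real.sqrt C_LTE * T * Real.exp (C * T) * δt := by
          rw [hMdef]; field_simp
  refine hr2.trans ?_
  apply mul_le_mul_of_nonneg_right _ hδt0.le
  -- final constant comparison
  have hrw : Real.sqrt C_LTE * T * Real.exp (C * T) =
      Real.sqrt (C_LTE * (T * Real.exp (C * T)) ^ 2) := by
    rw [Real.sqrt_mul hCLTE.le, Real.sqrt_sq (by positivity)]
    ring
  rw [hrw]
  apply Real.sqrt_le_sqrt
  set E := Real.exp (C * T) with hE
  set F := Real.exp ((C + 2) * T) with hF
  have hE1 : 1 ≤ E := Real.one_le_exp (by positivity)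
  have hF1 : 1 + (C + 2) * T + ((C + 2) * T) ^ 2 / 2 ≤ F :=
    Real.quadratic_le_exp_of_nonneg (by positivity)
  have hsplit : Real.exp ((3 * C + 2) * T) = E ^ 2 * F := by
    rw [hE, hF, ← Real.exp_nat_mul, ← Real.exp_add]
    congr 1
    push_cast
    ring
  rw [hsplit]
  rw [div_mul_eq_mul_div, le_div_iff₀ (by linarith : (0:ℝ) < 3 * C + 2)]
  have key : (3 * C + 2) * T ^ 2 ≤ 3 * (F - 1) := by nlinarith [sq_nonneg T, sq_nonneg (C*T)]
  have hE2 : 1 ≤ E ^ 2 := by nlinarith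
  nlinarith [mul_le_mul_of_nonneg_left key (by positivity : (0:ℝ) ≤ C_LTE * E ^ 2),
    mul_le_mul_of_nonneg_left hE2 (by positivity : (0:ℝ) ≤ 3 * C_LTE)]
end

section
/- Work in ℝ^d with A : ℝ^d → ℝ^d continuous linear, ‖A‖ ≤ C_M, and V : ℝ^d → ℝ three times continuously differentiable with ‖∇V(z)‖ ≤ G₁, ‖D²V(z)‖ ≤ G₂ and ‖D³V(z)‖ ≤ G₃ for all z ∈ ℝ^d. Consider the parameterized leapfrog step (y, x) ↦ (y⁺, x⁺) with parameter expansions α = 1 + α₁·δt + α₂·δt² + α̃(δt), β = 1 + β₁·δt + β₂·δt² + β̃(δt), |α̃(δt)| ≤ C_α·δt³, |β̃(δt)| ≤ C_β·δt³. Then there exists a constant C, depending only on R, C_M, C_α, C_β, α₁, α₂, β₁, β₂, G₁, G₂, G₃, such that for all δt ∈ (0,1] and all y, x ∈ ℝ^d with ‖y‖ ≤ R and ‖x‖ ≤ R: ‖x⁺ − x − δt·(2α₁·x − ∇V(y)) − δt²·((α₁² + 2α₂)·x − (α₁/2)·∇V(y) − (1/2)·D²V(y)(β₁·y + A·x))‖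 ≤ C·δt³. -/
theorem taylor2 {E F : Type*} [NormedAddCommGroup E] [NormedSpace ℝ E]
    [NormedAddCommGroup F] [NormedSpace ℝ F] {f : E → F} (hf : Differentiable ℝ f)
    {L : ℝ} (hL : 0 ≤ L)
    (hlip : ∀ a b, ‖fderiv ℝ f a - fderiv ℝ f b‖ ≤ L * ‖a - b‖) (y h : E) :
    ‖f (y + h) - f y - fderiv ℝ f y h‖ ≤ L * ‖h‖ ^ 2 := by
  have hmem : y + h ∈ Metric.closedBall y ‖h‖ := by
    simp [Metric.mem_closedBall, dist_eq_norm]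
  have key := Convex.norm_image_sub_le_of_norm_fderiv_le' (f := f) (φ := fderiv ℝ f y)
    (s := Metric.closedBall y ‖h‖) (C := L * ‖h‖) (x := y) (y := y + h)
    (fun z _ => hf z)
    (fun z hz => by
      refine (hlip z y).trans ?_
      have hz' : ‖z - y‖ ≤ ‖h‖ := by
        simpa [Metric.mem_closedBall, dist_eq_norm] using hz
      nlinarith [norm_nonneg (z - y)])
    (convex_closedBall _ _)
    (Metric.mem_closedBall_self (norm_nonneg _))
    hmem
  have e : y + h - y = h := by abel
  rw [e] at key
  calc ‖f (y + h) - f y - fderiv ℝ f y h‖ ≤ L * ‖h‖ * ‖h‖ := key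
    _ = L * ‖h‖ ^ 2 := by ring


set_option maxHeartbeats 4000000 in
/-- Pathwise expansion of the momentum update of the parameterized leapfrog scheme:
under uniform bounds `G₁, G₂, G₃` on `∇V`, `D²V`, `D³V`, there is a constant `C`
(depending only on `R, C_M, C_α, C_β, α₁, α₂, β₁, β₂, G₁, G₂, G₃`) such that for all
`δt ∈ (0,1]` and `‖y‖, ‖x‖ ≤ R` the update
`x⁺ = α²·x − (δt/2)(α·∇V(y) + ∇V(y⁺))` satisfies
`‖x⁺ − x − δt·(2α₁·x − ∇V(y))
   − δt²·((α₁² + 2α₂)·x − (α₁/2)·∇V(y) − (1/2)·D²V(y)(β₁·y + A·x))‖ ≤ C·δt³`. -/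
theorem stmt5
    (d : ℕ) (hd : 1 ≤ d)
    (A : EuclideanSpace ℝ (Fin d) →L[ℝ] EuclideanSpace ℝ (Fin d))
    (C_M : ℝ) (hA : ‖A‖ ≤ C_M)
    (V : EuclideanSpace ℝ (Fin d) → ℝ) (hV : ContDiff ℝ 3 V)
    (G₁ G₂ G₃ : ℝ)
    (hG₁ : ∀ z, ‖gradient V z‖ ≤ G₁)
    (hG₂ : ∀ z, ‖fderiv ℝ (gradient V) z‖ ≤ G₂)
    (hG₃ : ∀ z, ‖fderiv ℝ (fderiv ℝ (gradient V)) z‖ ≤ G₃)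
    (α₁ α₂ β₁ β₂ C_α C_β R : ℝ) :
    ∃ C : ℝ, ∀ δt : ℝ, 0 < δt → δt ≤ 1 →
      ∀ αt βt : ℝ, |αt| ≤ C_α * δt ^ 3 → |βt| ≤ C_β * δt ^ 3 →
      ∀ y x : EuclideanSpace ℝ (Fin d), ‖y‖ ≤ R → ‖x‖ ≤ R →
      ‖(1 + α₁ * δt + α₂ * δt ^ 2 + αt) ^ 2 • x
          - (δt / 2) • ((1 + α₁ * δt + α₂ * δt ^ 2 + αt) • gradient V y
            + gradient V ((1 + β₁ * δt + β₂ * δt ^ 2 + βt) • y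
              + δt • A ((1 + α₁ * δt + α₂ * δt ^ 2 + αt) • x - (δt / 2) • gradient V y)))
        - x - δt • ((2 * α₁) • x - gradient V y)
        - δt ^ 2 • ((α₁ ^ 2 + 2 * α₂) • x - (α₁ / 2) • gradient V y
            - (1 / 2 : ℝ) • fderiv ℝ (gradient V) y (β₁ • y + A x))‖
        ≤ C * δt ^ 3 := by
  -- differentiability facts
  have hgrad : ContDiff ℝ 2 (gradient V) := by
    have h1 : ContDiff ℝ 2 (fderiv ℝ V) := hV.fderiv_right (by norm_num)
    have h2 : gradient V = fun z =>
        (InnerProductSpace.toDual ℝ (EuclideanSpace ℝ (Fin d))).symm (fderiv ℝ V z) := rfl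
    rw [h2]
    exact (InnerProductSpace.toDual ℝ _).symm.contDiff.comp h1
  have hdiff_g : Differentiable ℝ (gradient V) := hgrad.differentiable (by norm_num)
  have hdiff_Dg : Differentiable ℝ (fderiv ℝ (gradient V)) :=
    (hgrad.fderiv_right (m := 1) (by norm_num)).differentiable one_ne_zero
  have hG₃0 : 0 ≤ G₃ := le_trans (ContinuousLinearMap.opNorm_nonneg _) (hG₃ 0)
  have hG₂0 : 0 ≤ G₂ := le_trans (norm_nonneg _) (hG₂ 0)
  have hG₁0 : 0 ≤ G₁ := le_trans (norm_nonneg _) (hG₁ 0)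
  have hCM0 : 0 ≤ C_M := le_trans (norm_nonneg _) hA
  have hlip : ∀ a b, ‖fderiv ℝ (gradient V) a - fderiv ℝ (gradient V) b‖ ≤ G₃ * ‖a - b‖ :=
    fun a b => Convex.norm_image_sub_le_of_norm_fderiv_le (f := fderiv ℝ (gradient V))
      (s := Set.univ) (fun z _ => hdiff_Dg z) (fun z _ => hG₃ z) convex_univ trivial trivial
  set Ka := |α₁| + |α₂| + C_α with hKa
  set Kh := (|β₁| + |β₂| + C_β) * R + C_M * ((1 + Ka) * R + G₁ / 2) with hKh
  set Kw := (|β₂| + C_β) * R + C_M * (Ka * R + G₁ / 2) with hKwdef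
  clear_value Ka Kh Kw
  refine ⟨R * (2 * C_α + (|α₂| + C_α) * (2 * |α₁| + |α₂| + C_α)) + (|α₂| + C_α) / 2 * G₁
      + G₃ * Kh ^ 2 / 2 + G₂ * Kw / 2, ?_⟩
  intro δt hδt hδt1 αt βt hαt hβt y x hy hx
  have hR0 : 0 ≤ R := le_trans (norm_nonneg y) hy
  have hCα0 : 0 ≤ C_α := by nlinarith [abs_nonneg αt, pow_pos hδt 3]
  have hCβ0 : 0 ≤ C_β := by nlinarith [abs_nonneg βt, pow_pos hδt 3]
  have hKa0 : 0 ≤ Ka := by rw [hKa]; positivity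
  have hd2 : δt ^ 2 ≤ δt := by nlinarith
  have hd3 : δt ^ 3 ≤ δt ^ 2 := by nlinarith
  have hd31 : δt ^ 3 ≤ δt := by nlinarith
  set g := gradient V y with hg
  set H := fderiv ℝ (gradient V) y with hHdef
  set u := (1 + α₁ * δt + α₂ * δt ^ 2 + αt) • x - (δt / 2) • g with hu
  set yp := (1 + β₁ * δt + β₂ * δt ^ 2 + βt) • y + δt • A u with hypdef
  set gp := gradient V yp with hgp
  set v := β₁ • y + A x with hv
  set h := yp - y with hh
  set w := h - δt • v with hwdef
  have hgn : ‖g‖ ≤ G₁ := hg ▸ hG₁ y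
  clear_value g H u yp gp v h w
  -- basic scalar bounds
  have habs_a : |α₁ * δt + α₂ * δt ^ 2 + αt| ≤ Ka * δt := by
    calc |α₁ * δt + α₂ * δt ^ 2 + αt| ≤ |α₁ * δt| + |α₂ * δt ^ 2| + |αt| := abs_add_three _ _ _
      _ = |α₁| * δt + |α₂| * δt ^ 2 + |αt| := by
          rw [abs_mul, abs_mul, abs_of_nonneg hδt.le, abs_of_nonneg (by positivity : (0:ℝ) ≤ δt ^ 2)]
      _ ≤ Ka * δt := by
          rw [hKa]
          have f1 : |α₂| * δt ^ 2 ≤ |α₂| * δt := mul_le_mul_of_nonneg_left hd2 (abs_nonneg α₂)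
          have f2 : C_α * δt ^ 3 ≤ C_α * δt := mul_le_mul_of_nonneg_left hd31 hCα0
          linarith
  have habs_b : |α₂ * δt ^ 2 + αt| ≤ (|α₂| + C_α) * δt ^ 2 := by
    calc |α₂ * δt ^ 2 + αt| ≤ |α₂ * δt ^ 2| + |αt| := abs_add_le _ _
      _ = |α₂| * δt ^ 2 + |αt| := by
          rw [abs_mul, abs_of_nonneg (by positivity : (0:ℝ) ≤ δt ^ 2)]
      _ ≤ (|α₂| + C_α) * δt ^ 2 := by
          have f2 : C_α * δt ^ 3 ≤ C_α * δt ^ 2 := mul_le_mul_of_nonneg_left hd3 hCα0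
          linarith
  -- norm of u
  have hun : ‖u‖ ≤ (1 + Ka) * R + G₁ / 2 := by
    have h0 : ‖u‖ ≤ |1 + α₁ * δt + α₂ * δt ^ 2 + αt| * ‖x‖ + |δt / 2| * ‖g‖ := by
      rw [hu]
      refine (norm_sub_le _ _).trans ?_
      rw [norm_smul, norm_smul, Real.norm_eq_abs, Real.norm_eq_abs]
    have h2 : |1 + α₁ * δt + α₂ * δt ^ 2 + αt| ≤ 1 + Ka := by
      have h3 : Ka * δt ≤ Ka := by nlinarith
      calc |1 + α₁ * δt + α₂ * δt ^ 2 + αt|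
          = |1 + (α₁ * δt + α₂ * δt ^ 2 + αt)| := by ring_nf
        _ ≤ |(1:ℝ)| + |α₁ * δt + α₂ * δt ^ 2 + αt| := abs_add_le _ _
        _ ≤ 1 + Ka := by rw [abs_one]; linarith
    have h4 : |δt / 2| * ‖g‖ ≤ G₁ / 2 := by
      rw [abs_of_nonneg (by linarith : (0:ℝ) ≤ δt / 2)]
      nlinarith [norm_nonneg g]
    have h5 : |1 + α₁ * δt + α₂ * δt ^ 2 + αt| * ‖x‖ ≤ (1 + Ka) * R :=
      mul_le_mul h2 hx (norm_nonneg x) (by linarith)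
    linarith
  have hAu : ‖A u‖ ≤ C_M * ((1 + Ka) * R + G₁ / 2) :=
    (A.le_opNorm u).trans (mul_le_mul hA hun (norm_nonneg u) hCM0)
  -- norm of h
  have hh_eq : h = (β₁ * δt + β₂ * δt ^ 2 + βt) • y + δt • A u := by
    rw [hh, hypdef]; module
  have hh_norm : ‖h‖ ≤ Kh * δt := by
    have h1 : ‖h‖ ≤ |β₁ * δt + β₂ * δt ^ 2 + βt| * ‖y‖ + δt * ‖A u‖ := by
      rw [hh_eq]
      refine (norm_add_le _ _).trans ?_
      rw [norm_smul, norm_smul, Real.norm_eq_abs, Real.norm_eq_abs, abs_of_nonneg hδt.le]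
    have h2 : |β₁ * δt + β₂ * δt ^ 2 + βt| ≤ (|β₁| + |β₂| + C_β) * δt := by
      calc |β₁ * δt + β₂ * δt ^ 2 + βt| ≤ |β₁ * δt| + |β₂ * δt ^ 2| + |βt| := abs_add_three _ _ _
        _ = |β₁| * δt + |β₂| * δt ^ 2 + |βt| := by
            rw [abs_mul, abs_mul, abs_of_nonneg hδt.le,
              abs_of_nonneg (by positivity : (0:ℝ) ≤ δt ^ 2)]
        _ ≤ (|β₁| + |β₂| + C_β) * δt := by
            have f1 : |β₂| * δt ^ 2 ≤ |β₂| * δt := mul_le_mul_of_nonneg_left hd2 (abs_nonneg β₂)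
            have f2 : C_β * δt ^ 3 ≤ C_β * δt := mul_le_mul_of_nonneg_left hd31 hCβ0
            linarith
    have h3 : |β₁ * δt + β₂ * δt ^ 2 + βt| * ‖y‖ ≤ (|β₁| + |β₂| + C_β) * δt * R :=
      mul_le_mul h2 hy (norm_nonneg y) (by positivity)
    have h4 : δt * ‖A u‖ ≤ δt * (C_M * ((1 + Ka) * R + G₁ / 2)) :=
      mul_le_mul_of_nonneg_left hAu hδt.le
    rw [hKh]; linarith
  -- norm of w
  have hw_eq : w = (β₂ * δt ^ 2 + βt) • y
      + δt • A ((α₁ * δt + α₂ * δt ^ 2 + αt) • x - (δt / 2) • g) := by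
    have hA2 : A ((α₁ * δt + α₂ * δt ^ 2 + αt) • x - (δt / 2) • g) = A u - A x := by
      rw [← map_sub]; congr 1; rw [hu]; module
    rw [hwdef, hh_eq, hv, hA2]; module
  have hw_norm : ‖w‖ ≤ Kw * δt ^ 2 := by
    have h1 : ‖(α₁ * δt + α₂ * δt ^ 2 + αt) • x - (δt / 2) • g‖ ≤ δt * (Ka * R + G₁ / 2) := by
      refine (norm_sub_le _ _).trans ?_
      rw [norm_smul, norm_smul, Real.norm_eq_abs, Real.norm_eq_abs,
        abs_of_nonneg (by linarith : (0:ℝ) ≤ δt / 2)]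
      have h2 : |α₁ * δt + α₂ * δt ^ 2 + αt| * ‖x‖ ≤ Ka * δt * R :=
        mul_le_mul habs_a hx (norm_nonneg x) (by positivity)
      have h3 : δt / 2 * ‖g‖ ≤ δt / 2 * G₁ :=
        mul_le_mul_of_nonneg_left hgn (by linarith)
      linarith
    have h2 : |β₂ * δt ^ 2 + βt| ≤ (|β₂| + C_β) * δt ^ 2 := by
      calc |β₂ * δt ^ 2 + βt| ≤ |β₂ * δt ^ 2| + |βt| := abs_add_le _ _
        _ = |β₂| * δt ^ 2 + |βt| := by
            rw [abs_mul, abs_of_nonneg (by positivity : (0:ℝ) ≤ δt ^ 2)]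
        _ ≤ (|β₂| + C_β) * δt ^ 2 := by
            have f2 : C_β * δt ^ 3 ≤ C_β * δt ^ 2 := mul_le_mul_of_nonneg_left hd3 hCβ0
            linarith
    have h3 : ‖w‖ ≤ |β₂ * δt ^ 2 + βt| * ‖y‖
        + δt * ‖A ((α₁ * δt + α₂ * δt ^ 2 + αt) • x - (δt / 2) • g)‖ := by
      rw [hw_eq]
      refine (norm_add_le _ _).trans ?_
      rw [norm_smul, norm_smul, Real.norm_eq_abs, Real.norm_eq_abs, abs_of_nonneg hδt.le]
    have h4 : ‖A ((α₁ * δt + α₂ * δt ^ 2 + αt) • x - (δt / 2) • g)‖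
        ≤ C_M * (δt * (Ka * R + G₁ / 2)) :=
      (A.le_opNorm _).trans (mul_le_mul hA h1 (norm_nonneg _) hCM0)
    have h5 : |β₂ * δt ^ 2 + βt| * ‖y‖ ≤ (|β₂| + C_β) * δt ^ 2 * R :=
      mul_le_mul h2 hy (norm_nonneg y) (by positivity)
    have h6 : δt * ‖A ((α₁ * δt + α₂ * δt ^ 2 + αt) • x - (δt / 2) • g)‖
        ≤ δt * (C_M * (δt * (Ka * R + G₁ / 2))) := mul_le_mul_of_nonneg_left h4 hδt.le
    rw [hKwdef]; linarith
  -- Taylor remainder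
  have hyp_sum : y + h = yp := by rw [hh]; abel
  have hr : ‖gp - g - H h‖ ≤ G₃ * (Kh * δt) ^ 2 := by
    have t := taylor2 hdiff_g hG₃0 hlip y h
    rw [hyp_sum, ← hgp, ← hg, ← hHdef] at t
    refine t.trans ?_
    have h1 : ‖h‖ ^ 2 ≤ (Kh * δt) ^ 2 := pow_le_pow_left₀ (norm_nonneg h) hh_norm 2
    exact mul_le_mul_of_nonneg_left h1 hG₃0
  -- the decomposition identity
  have hHw : H w = H h - δt • H v := by rw [hwdef, map_sub, map_smul]
  have key : (1 + α₁ * δt + α₂ * δt ^ 2 + αt) ^ 2 • x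
          - (δt / 2) • ((1 + α₁ * δt + α₂ * δt ^ 2 + αt) • g + gp)
        - x - δt • ((2 * α₁) • x - g)
        - δt ^ 2 • ((α₁ ^ 2 + 2 * α₂) • x - (α₁ / 2) • g - (1 / 2 : ℝ) • H v)
      = (2 * αt + (α₂ * δt ^ 2 + αt) * (2 * α₁ * δt + α₂ * δt ^ 2 + αt)) • x
        + (-(δt / 2) * (α₂ * δt ^ 2 + αt)) • g
        + (-(δt / 2)) • (gp - g - H h) + (-(δt / 2)) • H w := by
    rw [hHw]; module
  rw [key]
  -- scalar coefficient bounds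
  have hc : |2 * αt + (α₂ * δt ^ 2 + αt) * (2 * α₁ * δt + α₂ * δt ^ 2 + αt)|
      ≤ (2 * C_α + (|α₂| + C_α) * (2 * |α₁| + |α₂| + C_α)) * δt ^ 3 := by
    have h2 : |2 * α₁ * δt + α₂ * δt ^ 2 + αt| ≤ (2 * |α₁| + |α₂| + C_α) * δt := by
      calc |2 * α₁ * δt + α₂ * δt ^ 2 + αt|
          ≤ |2 * α₁ * δt| + |α₂ * δt ^ 2| + |αt| := abs_add_three _ _ _
        _ = 2 * |α₁| * δt + |α₂| * δt ^ 2 + |αt| := by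
            rw [abs_mul, abs_mul, abs_mul, abs_of_nonneg hδt.le,
              abs_of_nonneg (by positivity : (0:ℝ) ≤ δt ^ 2)]
            norm_num
        _ ≤ (2 * |α₁| + |α₂| + C_α) * δt := by
            have f1 : |α₂| * δt ^ 2 ≤ |α₂| * δt := mul_le_mul_of_nonneg_left hd2 (abs_nonneg α₂)
            have f2 : C_α * δt ^ 3 ≤ C_α * δt := mul_le_mul_of_nonneg_left hd31 hCα0
            linarith
    have h2a : |2 * αt| ≤ 2 * C_α * δt ^ 3 := by
      rw [abs_mul, abs_two]; linarith
    have hprod : |(α₂ * δt ^ 2 + αt) * (2 * α₁ * δt + α₂ * δt ^ 2 + αt)|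
        ≤ ((|α₂| + C_α) * δt ^ 2) * ((2 * |α₁| + |α₂| + C_α) * δt) := by
      rw [abs_mul]
      exact mul_le_mul habs_b h2 (abs_nonneg _) (by positivity)
    calc |2 * αt + (α₂ * δt ^ 2 + αt) * (2 * α₁ * δt + α₂ * δt ^ 2 + αt)|
        ≤ |2 * αt| + |(α₂ * δt ^ 2 + αt) * (2 * α₁ * δt + α₂ * δt ^ 2 + αt)| := abs_add_le _ _
      _ ≤ (2 * C_α + (|α₂| + C_α) * (2 * |α₁| + |α₂| + C_α)) * δt ^ 3 := by linarith
  have hs : |(-(δt / 2) * (α₂ * δt ^ 2 + αt))| ≤ (|α₂| + C_α) / 2 * δt ^ 3 := by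
    rw [abs_mul, abs_neg, abs_of_nonneg (by linarith : (0:ℝ) ≤ δt / 2)]
    have f1 : δt / 2 * |α₂ * δt ^ 2 + αt| ≤ δt / 2 * ((|α₂| + C_α) * δt ^ 2) :=
      mul_le_mul_of_nonneg_left habs_b (by linarith)
    linarith
  have hHwn : ‖H w‖ ≤ G₂ * (Kw * δt ^ 2) := by
    refine (H.le_opNorm w).trans ?_
    exact mul_le_mul (hHdef ▸ hG₂ y) hw_norm (norm_nonneg w) hG₂0
  -- triangle inequality
  have e1 : |(-(δt / 2))| = δt / 2 := by
    rw [abs_neg, abs_of_nonneg (by linarith : (0:ℝ) ≤ δt / 2)]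
  have tri : ‖(2 * αt + (α₂ * δt ^ 2 + αt) * (2 * α₁ * δt + α₂ * δt ^ 2 + αt)) • x
        + (-(δt / 2) * (α₂ * δt ^ 2 + αt)) • g
        + (-(δt / 2)) • (gp - g - H h) + (-(δt / 2)) • H w‖
      ≤ ‖(2 * αt + (α₂ * δt ^ 2 + αt) * (2 * α₁ * δt + α₂ * δt ^ 2 + αt)) • x‖
        + ‖(-(δt / 2) * (α₂ * δt ^ 2 + αt)) • g‖
        + ‖(-(δt / 2)) • (gp - g - H h)‖ + ‖(-(δt / 2)) • H w‖ := by
    refine (norm_add_le _ _).trans ?_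
    gcongr
    refine (norm_add_le _ _).trans ?_
    gcongr
    exact norm_add_le _ _
  refine tri.trans ?_
  have b1 : ‖(2 * αt + (α₂ * δt ^ 2 + αt) * (2 * α₁ * δt + α₂ * δt ^ 2 + αt)) • x‖
      ≤ (2 * C_α + (|α₂| + C_α) * (2 * |α₁| + |α₂| + C_α)) * δt ^ 3 * R := by
    rw [norm_smul, Real.norm_eq_abs]
    exact mul_le_mul hc hx (norm_nonneg x) (by positivity)
  have b2 : ‖(-(δt / 2) * (α₂ * δt ^ 2 + αt)) • g‖ ≤ (|α₂| + C_α) / 2 * δt ^ 3 * G₁ := by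
    rw [norm_smul, Real.norm_eq_abs]
    exact mul_le_mul hs hgn (norm_nonneg g) (by positivity)
  have b3 : ‖(-(δt / 2)) • (gp - g - H h)‖ ≤ G₃ * Kh ^ 2 / 2 * δt ^ 3 := by
    rw [norm_smul, Real.norm_eq_abs, e1]
    calc δt / 2 * ‖gp - g - H h‖ ≤ δt / 2 * (G₃ * (Kh * δt) ^ 2) :=
          mul_le_mul_of_nonneg_left hr (by linarith)
      _ = G₃ * Kh ^ 2 / 2 * δt ^ 3 := by ring
  have b4 : ‖(-(δt / 2)) • H w‖ ≤ G₂ * Kw / 2 * δt ^ 3 := by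
    rw [norm_smul, Real.norm_eq_abs, e1]
    calc δt / 2 * ‖H w‖ ≤ δt / 2 * (G₂ * (Kw * δt ^ 2)) :=
          mul_le_mul_of_nonneg_left hHwn (by linarith)
      _ = G₂ * Kw / 2 * δt ^ 3 := by ring
  linarith
end

section
/- Work in ℝ^d with A : ℝ^d → ℝ^d continuous linear, ‖A‖ ≤ C_M, and V : ℝ^d → ℝ three times continuously differentiable with ‖∇V(z)‖ ≤ G₁, ‖D²V(z)‖ ≤ G₂ and ‖D³V(z)‖ ≤ G₃ for all z ∈ ℝ^d. Fix constants α₁, α₂, β₁, β₂, C_α, C_β, R, R' and the leapfrog parameters α = 1 + α₁·δt + α₂·δt² + α̃(δt), β = 1 + β₁·δt + β₂·δt² + β̃(δt) with |α̃(δt)| ≤ C_α·δt³, |β̃(δt)| ≤ C_β·δt³. Then there exists a constant C, depending only on these constants, with the following property: for every δt ∈ (0,1], every y, x ∈ ℝ^d with ‖y‖ ≤ R, ‖x‖ ≤ R, and every pair of differentiable curves Y, X : [0, δt] → ℝ^d satisfying Y(0) = y, X(0) = x, ‖Y(t)‖ ≤ R', ‖X(t)‖ ≤ R' for all t ∈ [0,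 δt], together with the modified differential equations Y'(t) = β₁·Y(t) + A·X(t) + δt·((β₂ − β₁²/2)·Y(t) − (β₁/2)·A·X(t)) and X'(t) = 2α₁·X(t) − ∇V(Y(t)) + δt·((2α₂ − α₁²)·X(t) + (α₁/2)·∇V(Y(t))), one has ‖Y(δt) − y⁺‖ ≤ C·δt³ and ‖X(δt) − x⁺‖ ≤ C·δt³, where (y⁺, x⁺) is one step of the parameterized leapfrog scheme from (y, x). -/
open Set

lemma mvt0 {E : Type*} [NormedAddCommGroup E] [NormedSpace ℝ E]
    {F f : ℝ → E} {h C : ℝ}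
    (hF : ∀ t ∈ Set.Icc (0:ℝ) h, HasDerivAt F (f t) t)
    (hb : ∀ t ∈ Set.Icc (0:ℝ) h, ‖f t‖ ≤ C) :
    ∀ t ∈ Set.Icc (0:ℝ) h, ‖F t - F 0‖ ≤ C * t := by
  intro t ht
  have := norm_image_sub_le_of_norm_deriv_le_segment'
    (f := F) (f' := f) (a := 0) (b := h)
    (fun s hs => (hF s hs).hasDerivWithinAt)
    (fun s hs => hb s (Set.Ico_subset_Icc_self hs)) t ht
  simpa using this

lemma taylor2_s7 {E : Type*} [NormedAddCommGroup E] [NormedSpace ℝ E]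
    (F f g : ℝ → E) (h L : ℝ) (h0 : 0 < h)
    (hF : ∀ t ∈ Set.Icc (0:ℝ) h, HasDerivAt F (f t) t)
    (hf : ∀ t ∈ Set.Icc (0:ℝ) h, HasDerivAt f (g t) t)
    (hg : ∀ t ∈ Set.Icc (0:ℝ) h, ‖g t - g 0‖ ≤ L * t) :
    ‖F h - (F 0 + h • f 0 + (h^2/2) • g 0)‖ ≤ L * h^3 := by
  have hL : 0 ≤ L := by
    have h1 := (norm_nonneg (g h - g 0)).trans (hg h ⟨h0.le, le_rfl⟩)
    nlinarith
  set ψ : ℝ → E := fun t => f t - f 0 - t • g 0 with hψ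
  have hψd : ∀ t ∈ Set.Icc (0:ℝ) h, HasDerivAt ψ (g t - g 0) t := by
    intro t ht
    have h1 : HasDerivAt (fun t : ℝ => t • g 0) (g 0) t := by
      simpa using (hasDerivAt_id t).smul_const (g 0)
    exact ((hf t ht).sub_const (f 0)).sub h1
  have hψb : ∀ t ∈ Set.Icc (0:ℝ) h, ‖ψ t‖ ≤ (L * h) * t := by
    intro t ht
    have := mvt0 hψd (fun s hs => (hg s hs).trans
      (by nlinarith [hs.1, hs.2] : L * s ≤ L * h)) t ht
    simpa [hψ] using this
  set φ : ℝ → E := fun t => F t - F 0 - t • f 0 - (t^2/2) • g 0 with hφ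
  have hφd : ∀ t ∈ Set.Icc (0:ℝ) h, HasDerivAt φ (ψ t) t := by
    intro t ht
    have h1 : HasDerivAt (fun t : ℝ => t • f 0) (f 0) t := by
      simpa using (hasDerivAt_id t).smul_const (f 0)
    have h2 : HasDerivAt (fun t : ℝ => (t^2/2) • g 0) (t • g 0) t := by
      have := ((hasDerivAt_pow 2 t).div_const 2).smul_const (g 0)
      simpa using this
    have := (((hF t ht).sub_const (F 0)).sub h1).sub h2
    exact this
  have hfin := mvt0 hφd (fun t ht => (hψb t ht).trans
    (mul_le_mul_of_nonneg_left ht.2 (mul_nonneg hL h0.le))) h ⟨h0.le, le_rfl⟩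
  have heq : F h - (F 0 + h • f 0 + (h^2/2) • g 0) = φ h - φ 0 := by
    simp [hφ]; abel
  rw [heq]
  calc ‖φ h - φ 0‖ ≤ (L * h * h) * h := hfin
    _ = L * h^3 := by ring

lemma taylorGrad {E : Type*} [NormedAddCommGroup E] [NormedSpace ℝ E]
    {G : E → E} {K : ℝ} (hG : Differentiable ℝ G)
    (hlip : ∀ z w, ‖fderiv ℝ G z - fderiv ℝ G w‖ ≤ K * ‖z - w‖)
    (z w : E) : ‖G (z + w) - G z - fderiv ℝ G z w‖ ≤ K * ‖w‖^2 := by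
  have hK : 0 ≤ K * ‖w‖ := by
    have := (norm_nonneg _).trans (hlip (z + w) z)
    simpa using this
  set φ : ℝ → E := fun t => G (z + t • w) - t • (fderiv ℝ G z w) with hφ
  have hφd : ∀ t ∈ Set.Icc (0:ℝ) 1,
      HasDerivAt φ (fderiv ℝ G (z + t • w) w - fderiv ℝ G z w) t := by
    intro t ht
    have hpath : HasDerivAt (fun t : ℝ => z + t • w) w t := by
      simpa using ((hasDerivAt_id t).smul_const w).const_add z
    have h1 := (hG (z + t • w)).hasFDerivAt.comp_hasDerivAt t hpath
    have h2 : HasDerivAt (fun t : ℝ => t • (fderiv ℝ G z w)) (fderiv ℝ G z w) t := by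
      simpa using (hasDerivAt_id t).smul_const (fderiv ℝ G z w)
    exact h1.sub h2
  have hb : ∀ t ∈ Set.Icc (0:ℝ) 1,
      ‖fderiv ℝ G (z + t • w) w - fderiv ℝ G z w‖ ≤ (K * ‖w‖) * ‖w‖ := by
    intro t ht
    calc ‖fderiv ℝ G (z + t • w) w - fderiv ℝ G z w‖
        = ‖(fderiv ℝ G (z + t • w) - fderiv ℝ G z) w‖ := by
          rw [ContinuousLinearMap.sub_apply]
      _ ≤ ‖fderiv ℝ G (z + t • w) - fderiv ℝ G z‖ * ‖w‖ :=
          ContinuousLinearMap.le_opNorm _ _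
      _ ≤ (K * ‖z + t • w - z‖) * ‖w‖ := by
          gcongr
          exact hlip _ _
      _ ≤ (K * ‖w‖) * ‖w‖ := by
          have : ‖z + t • w - z‖ = |t| * ‖w‖ := by
            simp [norm_smul]
          rw [this]
          have ht1 : |t| ≤ 1 := by
            rw [abs_le]; exact ⟨by linarith [ht.1], ht.2⟩
          nlinarith [mul_nonneg (mul_nonneg hK (norm_nonneg w)) (sub_nonneg.2 ht1), abs_nonneg t, norm_nonneg w]
  have := mvt0 hφd hb 1 ⟨zero_le_one, le_rfl⟩
  have heq : φ 1 - φ 0 = G (z + w) - G z - fderiv ℝ G z w := by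
    simp [hφ]; abel
  rw [heq] at this
  calc ‖G (z + w) - G z - fderiv ℝ G z w‖ ≤ (K * ‖w‖) * ‖w‖ * 1 := this
    _ = K * ‖w‖^2 := by ring

lemma mono_bound {δt : ℝ} (h0 : 0 ≤ δt) (h1 : δt ≤ 1) (q : ℝ) {k : ℕ} (hk : 3 ≤ k) :
    |q * δt^k| ≤ |q| * δt^3 := by
  rw [abs_mul, abs_pow, abs_of_nonneg h0]
  exact mul_le_mul_of_nonneg_left (pow_le_pow_of_le_one h0 h1 hk) (abs_nonneg q)

set_option maxHeartbeats 12000000 in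
/-- The parameterized leapfrog scheme follows the flow of the modified ODE
`Y' = β₁·Y + A·X + δt·((β₂ − β₁²/2)·Y − (β₁/2)·A·X)`,
`X' = 2α₁·X − ∇V(Y) + δt·((2α₂ − α₁²)·X + (α₁/2)·∇V(Y))`
up to a one-step defect of order `δt³`: there is a constant `C` depending only on the
fixed constants such that for all `δt ∈ (0,1]`, all initial data with `‖y‖, ‖x‖ ≤ R`,
and all solution curves of the modified ODE staying in the ball of radius `R'`,
`‖Y(δt) − y⁺‖ ≤ C·δt³` and `‖X(δt) − x⁺‖ ≤ C·δt³`. -/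
theorem stmt7
    (d : ℕ) (hd : 1 ≤ d)
    (A : EuclideanSpace ℝ (Fin d) →L[ℝ] EuclideanSpace ℝ (Fin d))
    (C_M : ℝ) (hA : ‖A‖ ≤ C_M)
    (V : EuclideanSpace ℝ (Fin d) → ℝ) (hV : ContDiff ℝ 3 V)
    (G₁ G₂ G₃ : ℝ)
    (hG₁ : ∀ z, ‖gradient V z‖ ≤ G₁)
    (hG₂ : ∀ z, ‖fderiv ℝ (gradient V) z‖ ≤ G₂)
    (hG₃ : ∀ z, ‖fderiv ℝ (fderiv ℝ (gradient V)) z‖ ≤ G₃)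
    (α₁ α₂ β₁ β₂ C_α C_β R R' : ℝ) :
    ∃ C : ℝ, ∀ δt : ℝ, 0 < δt → δt ≤ 1 →
      ∀ αt βt : ℝ, |αt| ≤ C_α * δt ^ 3 → |βt| ≤ C_β * δt ^ 3 →
      ∀ y x : EuclideanSpace ℝ (Fin d), ‖y‖ ≤ R → ‖x‖ ≤ R →
      ∀ Y X : ℝ → EuclideanSpace ℝ (Fin d), Y 0 = y → X 0 = x →
      (∀ t ∈ Set.Icc (0 : ℝ) δt, ‖Y t‖ ≤ R') →
      (∀ t ∈ Set.Icc (0 : ℝ) δt, ‖X t‖ ≤ R') →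
      (∀ t ∈ Set.Icc (0 : ℝ) δt, HasDerivAt Y
        (β₁ • Y t + A (X t)
          + δt • ((β₂ - β₁ ^ 2 / 2) • Y t - (β₁ / 2) • A (X t))) t) →
      (∀ t ∈ Set.Icc (0 : ℝ) δt, HasDerivAt X
        ((2 * α₁) • X t - gradient V (Y t)
          + δt • ((2 * α₂ - α₁ ^ 2) • X t + (α₁ / 2) • gradient V (Y t))) t) →
      ‖Y δt - ((1 + β₁ * δt + β₂ * δt ^ 2 + βt) • y
          + δt • A ((1 + α₁ * δt + α₂ * δt ^ 2 + αt) • x - (δt / 2) • gradient V y))‖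
        ≤ C * δt ^ 3 ∧
      ‖X δt - ((1 + α₁ * δt + α₂ * δt ^ 2 + αt) ^ 2 • x
          - (δt / 2) • ((1 + α₁ * δt + α₂ * δt ^ 2 + αt) • gradient V y
            + gradient V ((1 + β₁ * δt + β₂ * δt ^ 2 + βt) • y
              + δt • A ((1 + α₁ * δt + α₂ * δt ^ 2 + αt) • x
                - (δt / 2) • gradient V y))))‖
        ≤ C * δt ^ 3 := by
  -- regularity of the gradient
  have hgrad2 : ContDiff ℝ 2 (gradient V) := by
    have h1 : ContDiff ℝ 2 (fderiv ℝ V) := hV.fderiv_right (by norm_num)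
    exact ((InnerProductSpace.toDual ℝ (EuclideanSpace ℝ (Fin d))).symm.contDiff).comp h1
  have hgd : Differentiable ℝ (gradient V) := hgrad2.differentiable (by norm_num)
  have hHd : Differentiable ℝ (fderiv ℝ (gradient V)) :=
    (hgrad2.fderiv_right (m := 1) (by norm_num)).differentiable one_ne_zero
  have hHlip : ∀ z w : EuclideanSpace ℝ (Fin d),
      ‖fderiv ℝ (gradient V) z - fderiv ℝ (gradient V) w‖ ≤ |G₃| * ‖z - w‖ := fun z w =>
    Convex.norm_image_sub_le_of_norm_fderiv_le (fun u _ => hHd u)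
      (fun u _ => (hG₃ u).trans (le_abs_self _)) convex_univ (Set.mem_univ w) (Set.mem_univ z)
  -- constants
  obtain ⟨B1, hB1⟩ : ∃ r : ℝ, r = |β₁| * |R'| + |C_M| * |R'| + 1*(|β₂ - β₁^2/2| * |R'| + |β₁/2| *(|C_M| * |R'|)) := ⟨_, rfl⟩
  obtain ⟨B2, hB2⟩ : ∃ r : ℝ, r = |2*α₁| * |R'| + |G₁| + 1*(|2*α₂ - α₁^2| * |R'| + |α₁/2| * |G₁|) := ⟨_, rfl⟩
  obtain ⟨B3, hB3⟩ : ∃ r : ℝ, r = |β₁| *B1 + |C_M| *B2 + 1*(|β₂ - β₁^2/2| *B1 + |β₁/2| *(|C_M| *B2)) := ⟨_, rfl⟩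
  obtain ⟨B4, hB4⟩ : ∃ r : ℝ, r = |2*α₁| *B2 + |G₂| *B1 + 1*(|2*α₂ - α₁^2| *B2 + |α₁/2| *(|G₂| *B1)) := ⟨_, rfl⟩
  obtain ⟨LW, hLW⟩ : ∃ r : ℝ, r = |G₃| *B1*B1 + |G₂| *B3 := ⟨_, rfl⟩
  obtain ⟨LY, hLY⟩ : ∃ r : ℝ, r = |β₁| *B3 + |C_M| *B4 + 1*(|β₂ - β₁^2/2| *B3 + |β₁/2| *(|C_M| *B4)) := ⟨_, rfl⟩
  obtain ⟨LX, hLX⟩ : ∃ r : ℝ, r = |2*α₁| *B4 + LW + 1*(|2*α₂ - α₁^2| *B4 + |α₁/2| *LW) := ⟨_, rfl⟩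
  obtain ⟨K, hK⟩ : ∃ r : ℝ, r = (|β₁|+|β₂|+|C_β|)* |R| + |C_M| *((1+|α₁|+|α₂|+|C_α|)* |R| + (1/2)* |G₁|) := ⟨_, rfl⟩
  obtain ⟨EY, hEY⟩ : ∃ r : ℝ, r = (|β₁*(β₂-β₁^2/2)| + |(β₂-β₁^2/2)^2/2| + |C_β|)* |R| + (|((β₂-β₁^2/2)+(2*α₂-α₁^2))/2 - β₁*(β₁+2*α₁)/4 - α₂| + |β₁*((β₂-β₁^2/2)+(2*α₂-α₁^2))/4| + |C_α|)*(|C_M| * |R|) + (|(α₁+β₁)/4| + |α₁*β₁/8|)*(|C_M| * |G₁|) := ⟨_, rfl⟩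
  obtain ⟨EX, hEX⟩ : ∃ r : ℝ, r = (|2*α₁*(2*α₂-α₁^2) - 2*α₁*α₂| + |(2*α₂-α₁^2)^2/2 - α₂^2| + (|(2:ℝ)| + |2*α₁| + |2*α₂|)* |C_α| + |C_α|^2)* |R| + (|(α₁^2 - (2*α₂-α₁^2) + α₂)/2| + |(2*α₂-α₁^2)*α₁/4| + (1/2)* |C_α|)* |G₁| + (|(α₁*β₁/2 - (β₂-β₁^2/2) + β₂)/2| + |α₁*(β₂-β₁^2/2)/4| + (1/2)* |C_β|)*(|G₂| * |R|) + (|(3*α₁+β₁)/4| + |(α₂-α₁*β₁/4)/2| + (1/2)* |C_α|)*(|G₂| *(|C_M| * |R|)) + (1/4)*(|G₂| *(|C_M| * |G₁|)) + (1/2)*(|G₃| *K^2) := ⟨_, rfl⟩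
  refine ⟨LY + EY + LX + EX, ?_⟩
  intro δt hδ0 hδ1 αt βt hαt hβt y x hy hx Y X hY0 hX0 hYb hXb hYd hXd
  have hδ0' : (0:ℝ) ≤ δt := hδ0.le
  have h3pos : (0:ℝ) < δt^3 := by positivity
  have hαt' : |αt| ≤ |C_α| * δt^3 :=
    hαt.trans (mul_le_mul_of_nonneg_right (le_abs_self _) h3pos.le)
  have hβt' : |βt| ≤ |C_β| * δt^3 :=
    hβt.trans (mul_le_mul_of_nonneg_right (le_abs_self _) h3pos.le)
  have hy' : ‖y‖ ≤ |R| := hy.trans (le_abs_self R)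
  have hx' : ‖x‖ ≤ |R| := hx.trans (le_abs_self R)
  have hu : ‖gradient V y‖ ≤ |G₁| := (hG₁ y).trans (le_abs_self _)
  have hax : ‖A x‖ ≤ |C_M| * |R| :=
    (A.le_opNorm x).trans (mul_le_mul (hA.trans (le_abs_self _)) hx' (norm_nonneg _) (abs_nonneg _))
  have hau : ‖A (gradient V y)‖ ≤ |C_M| * |G₁| :=
    (A.le_opNorm _).trans (mul_le_mul (hA.trans (le_abs_self _)) hu (norm_nonneg _) (abs_nonneg _))
  -- the vector fields
  set fY : ℝ → EuclideanSpace ℝ (Fin d) := fun t => β₁ • Y t + A (X t)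
      + δt • ((β₂ - β₁ ^ 2 / 2) • Y t - (β₁ / 2) • A (X t)) with hfY
  set fX : ℝ → EuclideanSpace ℝ (Fin d) := fun t => (2 * α₁) • X t - gradient V (Y t)
      + δt • ((2 * α₂ - α₁ ^ 2) • X t + (α₁ / 2) • gradient V (Y t)) with hfX
  set gY : ℝ → EuclideanSpace ℝ (Fin d) := fun t => β₁ • fY t + A (fX t)
      + δt • ((β₂ - β₁ ^ 2 / 2) • fY t - (β₁ / 2) • A (fX t)) with hgY
  set W : ℝ → EuclideanSpace ℝ (Fin d) := fun t => (fderiv ℝ (gradient V) (Y t)) (fY t) with hW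
  set gX : ℝ → EuclideanSpace ℝ (Fin d) := fun t => (2 * α₁) • fX t - W t
      + δt • ((2 * α₂ - α₁ ^ 2) • fX t + (α₁ / 2) • W t) with hgX
  have hYd' : ∀ t ∈ Set.Icc (0:ℝ) δt, HasDerivAt Y (fY t) t := fun t ht => by
    simp only [hfY]; exact hYd t ht
  have hXd' : ∀ t ∈ Set.Icc (0:ℝ) δt, HasDerivAt X (fX t) t := fun t ht => by
    simp only [hfX]; exact hXd t ht
  -- pointwise bounds
  have hfYb : ∀ t ∈ Set.Icc (0:ℝ) δt, ‖fY t‖ ≤ B1 := by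
    intro t ht
    have h1 : ‖Y t‖ ≤ |R'| := (hYb t ht).trans (le_abs_self _)
    have h2 : ‖X t‖ ≤ |R'| := (hXb t ht).trans (le_abs_self _)
    have h3 : ‖A (X t)‖ ≤ |C_M| * |R'| :=
      (A.le_opNorm _).trans (mul_le_mul (hA.trans (le_abs_self _)) h2 (norm_nonneg _) (abs_nonneg _))
    have hin : ‖(β₂ - β₁^2/2) • Y t - (β₁/2) • A (X t)‖
        ≤ |β₂ - β₁^2/2| * |R'| + |β₁/2| *(|C_M| * |R'|) := by
      refine (norm_sub_le _ _).trans ?_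
      rw [norm_smul, norm_smul, Real.norm_eq_abs, Real.norm_eq_abs]
      gcongr
    simp only [hfY]
    refine (norm_add₃_le).trans ?_
    rw [norm_smul, norm_smul, Real.norm_eq_abs, Real.norm_eq_abs, abs_of_nonneg hδ0']
    rw [hB1]
    gcongr
  have hfXb : ∀ t ∈ Set.Icc (0:ℝ) δt, ‖fX t‖ ≤ B2 := by
    intro t ht
    have h1 : ‖Y t‖ ≤ |R'| := (hYb t ht).trans (le_abs_self _)
    have h2 : ‖X t‖ ≤ |R'| := (hXb t ht).trans (le_abs_self _)
    have h4 : ‖gradient V (Y t)‖ ≤ |G₁| := (hG₁ _).trans (le_abs_self _)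
    have hin : ‖(2*α₂ - α₁^2) • X t + (α₁/2) • gradient V (Y t)‖
        ≤ |2*α₂ - α₁^2| * |R'| + |α₁/2| * |G₁| := by
      refine (norm_add_le _ _).trans ?_
      rw [norm_smul, norm_smul, Real.norm_eq_abs, Real.norm_eq_abs]
      gcongr
    simp only [hfX]
    refine (norm_add_le _ _).trans ?_
    refine le_trans (add_le_add (norm_sub_le _ _) le_rfl) ?_
    rw [norm_smul, norm_smul, Real.norm_eq_abs, Real.norm_eq_abs, abs_of_nonneg hδ0']
    rw [hB2]
    have := mul_le_mul hδ1 hin (norm_nonneg _) zero_le_one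
    gcongr
  -- derivatives of the vector fields
  have hfYd : ∀ t ∈ Set.Icc (0:ℝ) δt, HasDerivAt fY (gY t) t := by
    intro t ht
    have h1 := (hYd t ht).const_smul β₁
    have h2 := A.hasFDerivAt.comp_hasDerivAt t (hXd t ht)
    have h3 := (((hYd t ht).const_smul (β₂ - β₁^2/2)).sub
      ((A.hasFDerivAt.comp_hasDerivAt t (hXd t ht)).const_smul (β₁/2))).const_smul δt
    simp only [hgY, hfY, hfX]
    exact (h1.add h2).add h3
  have hfXd : ∀ t ∈ Set.Icc (0:ℝ) δt, HasDerivAt fX (gX t) t := by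
    intro t ht
    have hgr := (hgd (Y t)).hasFDerivAt.comp_hasDerivAt t (hYd t ht)
    have h1 := (hXd t ht).const_smul (2*α₁)
    have h3 := (((hXd t ht).const_smul (2*α₂ - α₁^2)).add
      (hgr.const_smul (α₁/2))).const_smul δt
    simp only [hgX, hW, hfX, hfY]
    exact ((h1.sub hgr).add h3)
  have hgYb : ∀ t ∈ Set.Icc (0:ℝ) δt, ‖gY t‖ ≤ B3 := by
    intro t ht
    have h1 := hfYb t ht
    have h2 := hfXb t ht
    have h3 : ‖A (fX t)‖ ≤ |C_M| *B2 :=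
      (A.le_opNorm _).trans (mul_le_mul (hA.trans (le_abs_self _)) h2 (norm_nonneg _) (abs_nonneg _))
    have hin : ‖(β₂ - β₁^2/2) • fY t - (β₁/2) • A (fX t)‖
        ≤ |β₂ - β₁^2/2| *B1 + |β₁/2| *(|C_M| *B2) := by
      refine (norm_sub_le _ _).trans ?_
      rw [norm_smul, norm_smul, Real.norm_eq_abs, Real.norm_eq_abs]
      gcongr
    simp only [hgY]
    refine (norm_add₃_le).trans ?_
    rw [norm_smul, norm_smul, Real.norm_eq_abs, Real.norm_eq_abs, abs_of_nonneg hδ0']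
    rw [hB3]
    gcongr
  have hgXb : ∀ t ∈ Set.Icc (0:ℝ) δt, ‖gX t‖ ≤ B4 := by
    intro t ht
    have h1 := hfYb t ht
    have h2 := hfXb t ht
    have hWb : ‖W t‖ ≤ |G₂| *B1 := by
      simp only [hW]
      exact (ContinuousLinearMap.le_opNorm _ _).trans
        (mul_le_mul ((hG₂ _).trans (le_abs_self _)) h1 (norm_nonneg _) (abs_nonneg _))
    have hin : ‖(2*α₂ - α₁^2) • fX t + (α₁/2) • W t‖
        ≤ |2*α₂ - α₁^2| *B2 + |α₁/2| *(|G₂| *B1) := by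
      refine (norm_add_le _ _).trans ?_
      rw [norm_smul, norm_smul, Real.norm_eq_abs, Real.norm_eq_abs]
      gcongr
    simp only [hgX]
    refine (norm_add_le _ _).trans ?_
    refine le_trans (add_le_add (norm_sub_le _ _) le_rfl) ?_
    rw [norm_smul, norm_smul, Real.norm_eq_abs, Real.norm_eq_abs, abs_of_nonneg hδ0']
    rw [hB4]
    gcongr
  -- Lipschitz-in-time bounds
  have hYlip := mvt0 hYd' hfYb
  have hfYlip := mvt0 hfYd hgYb
  have hfXlip := mvt0 hfXd hgXb
  have hWlip : ∀ t ∈ Set.Icc (0:ℝ) δt, ‖W t - W 0‖ ≤ LW * t := by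
    intro t ht
    have hid : W t - W 0
        = (fderiv ℝ (gradient V) (Y t) - fderiv ℝ (gradient V) (Y 0)) (fY t)
          + (fderiv ℝ (gradient V) (Y 0)) (fY t - fY 0) := by
      simp only [hW, ContinuousLinearMap.sub_apply, map_sub]; abel
    rw [hid]
    refine (norm_add_le _ _).trans ?_
    have hp1 : ‖(fderiv ℝ (gradient V) (Y t) - fderiv ℝ (gradient V) (Y 0)) (fY t)‖
        ≤ (|G₃| *(B1*t))*B1 := by
      refine (ContinuousLinearMap.le_opNorm _ _).trans ?_
      have hB1nn : (0:ℝ) ≤ B1 := le_trans (norm_nonneg _) (hfYb t ht)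
      refine mul_le_mul ?_ (hfYb t ht) (norm_nonneg _) (mul_nonneg (abs_nonneg G₃) (mul_nonneg hB1nn ht.1))
      exact (hHlip _ _).trans (by gcongr; exact hYlip t ht)
    have hp2 : ‖(fderiv ℝ (gradient V) (Y 0)) (fY t - fY 0)‖ ≤ |G₂| *(B3*t) := by
      refine (ContinuousLinearMap.le_opNorm _ _).trans ?_
      exact mul_le_mul ((hG₂ _).trans (le_abs_self _)) (hfYlip t ht) (norm_nonneg _) (abs_nonneg _)
    calc _ ≤ (|G₃| *(B1*t))*B1 + |G₂| *(B3*t) := add_le_add hp1 hp2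
      _ = LW * t := by rw [hLW]; ring
  have hgYlip : ∀ t ∈ Set.Icc (0:ℝ) δt, ‖gY t - gY 0‖ ≤ LY * t := by
    intro t ht
    have hid : gY t - gY 0 = β₁ • (fY t - fY 0) + A (fX t - fX 0)
        + δt • ((β₂ - β₁^2/2) • (fY t - fY 0) - (β₁/2) • A (fX t - fX 0)) := by
      simp only [hgY, map_sub]; module
    rw [hid]
    have h1 := hfYlip t ht
    have h2 := hfXlip t ht
    have h3 : ‖A (fX t - fX 0)‖ ≤ |C_M| *(B4*t) := by
      refine (A.le_opNorm _).trans ?_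
      exact mul_le_mul (hA.trans (le_abs_self _)) h2 (norm_nonneg _) (abs_nonneg _)
    have hin : ‖(β₂ - β₁^2/2) • (fY t - fY 0) - (β₁/2) • A (fX t - fX 0)‖
        ≤ |β₂ - β₁^2/2| *(B3*t) + |β₁/2| *(|C_M| *(B4*t)) := by
      refine (norm_sub_le _ _).trans ?_
      rw [norm_smul, norm_smul, Real.norm_eq_abs, Real.norm_eq_abs]
      gcongr
    refine le_trans (norm_add₃_le) ?_
    rw [norm_smul, norm_smul, Real.norm_eq_abs, Real.norm_eq_abs, abs_of_nonneg hδ0']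
    have hδin : δt * ‖(β₂ - β₁^2/2) • (fY t - fY 0) - (β₁/2) • A (fX t - fX 0)‖
        ≤ 1 * (|β₂ - β₁^2/2| *(B3*t) + |β₁/2| *(|C_M| *(B4*t))) :=
      mul_le_mul hδ1 hin (norm_nonneg _) zero_le_one
    calc |β₁| * ‖fY t - fY 0‖ + ‖A (fX t - fX 0)‖ + δt * ‖_‖
        ≤ |β₁| *(B3*t) + |C_M| *(B4*t)
          + 1 * (|β₂ - β₁^2/2| *(B3*t) + |β₁/2| *(|C_M| *(B4*t))) := by
          refine add_le_add (add_le_add ?_ h3) hδin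
          exact mul_le_mul_of_nonneg_left h1 (abs_nonneg _)
      _ = LY * t := by rw [hLY]; ring
  have hgXlip : ∀ t ∈ Set.Icc (0:ℝ) δt, ‖gX t - gX 0‖ ≤ LX * t := by
    intro t ht
    have hid : gX t - gX 0 = (2*α₁) • (fX t - fX 0) - (W t - W 0)
        + δt • ((2*α₂ - α₁^2) • (fX t - fX 0) + (α₁/2) • (W t - W 0)) := by
      simp only [hgX]; module
    rw [hid]
    have h2 := hfXlip t ht
    have h5 := hWlip t ht
    have hin : ‖(2*α₂ - α₁^2) • (fX t - fX 0) + (α₁/2) • (W t - W 0)‖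
        ≤ |2*α₂ - α₁^2| *(B4*t) + |α₁/2| *(LW*t) := by
      refine (norm_add_le _ _).trans ?_
      rw [norm_smul, norm_smul, Real.norm_eq_abs, Real.norm_eq_abs]
      gcongr
    refine le_trans (norm_add_le _ _) ?_
    refine le_trans (add_le_add (norm_sub_le _ _) le_rfl) ?_
    rw [norm_smul, norm_smul, Real.norm_eq_abs, Real.norm_eq_abs, abs_of_nonneg hδ0']
    have hδin : δt * ‖(2*α₂ - α₁^2) • (fX t - fX 0) + (α₁/2) • (W t - W 0)‖
        ≤ 1 * (|2*α₂ - α₁^2| *(B4*t) + |α₁/2| *(LW*t)) :=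
      mul_le_mul hδ1 hin (norm_nonneg _) zero_le_one
    calc |2*α₁| * ‖fX t - fX 0‖ + ‖W t - W 0‖ + δt * ‖_‖
        ≤ |2*α₁| *(B4*t) + LW*t + 1*(|2*α₂ - α₁^2| *(B4*t) + |α₁/2| *(LW*t)) := by
          refine add_le_add (add_le_add ?_ h5) hδin
          exact mul_le_mul_of_nonneg_left h2 (abs_nonneg _)
      _ = LX * t := by rw [hLX]; ring
  -- Taylor expansions
  have hTY := taylor2_s7 Y fY gY δt LY hδ0 hYd' hfYd hgYlip
  have hTX := taylor2_s7 X fX gX δt LX hδ0 hXd' hfXd hgXlip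
  -- nonnegativity of the constants
  have hLXnn : (0:ℝ) ≤ LX := by
    simp only [hLX, hLW, hB4, hB3, hB2, hB1]; positivity
  have hEXnn : (0:ℝ) ≤ EX := by simp only [hEX, hK]; positivity
  have hLYnn : (0:ℝ) ≤ LY := by
    simp only [hLY, hB4, hB3, hB2, hB1]; positivity
  have hEYnn : (0:ℝ) ≤ EY := by simp only [hEY]; positivity
  have hδ31 : δt^3 ≤ 1 := pow_le_one₀ hδ0' hδ1
  have hδ21 : δt^2 ≤ 1 := pow_le_one₀ hδ0' hδ1
  have hδ2δ : δt^2 ≤ δt := by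
    calc δt^2 ≤ δt^1 := pow_le_pow_of_le_one hδ0' hδ1 one_le_two
      _ = δt := pow_one δt
  have hδ3δ : δt^3 ≤ δt := by
    calc δt^3 ≤ δt^1 := pow_le_pow_of_le_one hδ0' hδ1 (by norm_num)
      _ = δt := pow_one δt
  have hhalfδ : δt/2 ≤ 1/2 := (div_le_div_iff_of_pos_right (by norm_num : (0:ℝ) < 2)).mpr hδ1
  have hhalfδ2 : δt^2/2 ≤ 1/2 := (div_le_div_iff_of_pos_right (by norm_num : (0:ℝ) < 2)).mpr hδ21
  constructor
  · -- Y component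
    have hidY : (Y 0 + δt • fY 0 + (δt ^ 2 / 2) • gY 0)
        - ((1 + β₁ * δt + β₂ * δt ^ 2 + βt) • y
          + δt • A ((1 + α₁ * δt + α₂ * δt ^ 2 + αt) • x - (δt / 2) • gradient V y))
        = ((β₁*(β₂-β₁^2/2))*δt^3 + ((β₂-β₁^2/2)^2/2)*δt^4 + -βt) • y
          + ((((β₂-β₁^2/2)+(2*α₂-α₁^2))/2 - β₁*(β₁+2*α₁)/4 - α₂)*δt^3
              + (-(β₁*((β₂-β₁^2/2)+(2*α₂-α₁^2))/4))*δt^4 + -(δt*αt)) • (A x)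
          + (((α₁+β₁)/4)*δt^3 + (-(α₁*β₁/8))*δt^4) • (A (gradient V y)) := by
      simp only [hgY, hfY, hfX, hY0, hX0, map_add, map_sub, map_smul]
      module
    have he1 : |(β₁*(β₂-β₁^2/2))*δt^3 + ((β₂-β₁^2/2)^2/2)*δt^4 + -βt|
        ≤ (|β₁*(β₂-β₁^2/2)| + |(β₂-β₁^2/2)^2/2| + |C_β|) * δt^3 := by
      calc _ ≤ |(β₁*(β₂-β₁^2/2))*δt^3| + |((β₂-β₁^2/2)^2/2)*δt^4| + |-βt| :=
            abs_add_three _ _ _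
        _ ≤ |β₁*(β₂-β₁^2/2)| * δt^3 + |(β₂-β₁^2/2)^2/2| * δt^3 + |C_β| * δt^3 := by
            refine add_le_add (add_le_add ?_ ?_) ?_
            · exact mono_bound hδ0' hδ1 _ le_rfl
            · exact mono_bound hδ0' hδ1 _ (by norm_num)
            · rw [abs_neg]; exact hβt'
        _ = _ := by ring
    have he2 : |(((β₂-β₁^2/2)+(2*α₂-α₁^2))/2 - β₁*(β₁+2*α₁)/4 - α₂)*δt^3
            + (-(β₁*((β₂-β₁^2/2)+(2*α₂-α₁^2))/4))*δt^4 + -(δt*αt)|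
        ≤ (|((β₂-β₁^2/2)+(2*α₂-α₁^2))/2 - β₁*(β₁+2*α₁)/4 - α₂|
            + |β₁*((β₂-β₁^2/2)+(2*α₂-α₁^2))/4| + |C_α|) * δt^3 := by
      calc _ ≤ |(((β₂-β₁^2/2)+(2*α₂-α₁^2))/2 - β₁*(β₁+2*α₁)/4 - α₂)*δt^3|
            + |(-(β₁*((β₂-β₁^2/2)+(2*α₂-α₁^2))/4))*δt^4| + |-(δt*αt)| :=
            abs_add_three _ _ _
        _ ≤ |((β₂-β₁^2/2)+(2*α₂-α₁^2))/2 - β₁*(β₁+2*α₁)/4 - α₂| * δt^3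
            + |β₁*((β₂-β₁^2/2)+(2*α₂-α₁^2))/4| * δt^3 + |C_α| * δt^3 := by
            refine add_le_add (add_le_add ?_ ?_) ?_
            · exact mono_bound hδ0' hδ1 _ le_rfl
            · have := mono_bound hδ0' hδ1 (-(β₁*((β₂-β₁^2/2)+(2*α₂-α₁^2))/4))
                (show (3:ℕ) ≤ 4 by norm_num)
              rwa [abs_neg] at this
            · rw [abs_neg, abs_mul, abs_of_nonneg hδ0']
              calc δt * |αt| ≤ 1 * (|C_α| * δt^3) :=
                    mul_le_mul hδ1 hαt' (abs_nonneg _) zero_le_one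
                _ = |C_α| * δt^3 := one_mul _
        _ = _ := by ring
    have he3 : |((α₁+β₁)/4)*δt^3 + (-(α₁*β₁/8))*δt^4|
        ≤ (|(α₁+β₁)/4| + |α₁*β₁/8|) * δt^3 := by
      calc _ ≤ |((α₁+β₁)/4)*δt^3| + |(-(α₁*β₁/8))*δt^4| := abs_add_le _ _
        _ ≤ |(α₁+β₁)/4| * δt^3 + |α₁*β₁/8| * δt^3 := by
            refine add_le_add ?_ ?_
            · exact mono_bound hδ0' hδ1 _ le_rfl
            · have := mono_bound hδ0' hδ1 (-(α₁*β₁/8)) (show (3:ℕ) ≤ 4 by norm_num)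
              rwa [abs_neg] at this
        _ = _ := by ring
    have hv1 : ‖((β₁*(β₂-β₁^2/2))*δt^3 + ((β₂-β₁^2/2)^2/2)*δt^4 + -βt) • y‖
        ≤ ((|β₁*(β₂-β₁^2/2)| + |(β₂-β₁^2/2)^2/2| + |C_β|) * δt^3) * |R| := by
      rw [norm_smul, Real.norm_eq_abs]
      exact mul_le_mul he1 hy' (norm_nonneg _) (by positivity)
    have hv2 : ‖((((β₂-β₁^2/2)+(2*α₂-α₁^2))/2 - β₁*(β₁+2*α₁)/4 - α₂)*δt^3
            + (-(β₁*((β₂-β₁^2/2)+(2*α₂-α₁^2))/4))*δt^4 + -(δt*αt)) • (A x)‖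
        ≤ ((|((β₂-β₁^2/2)+(2*α₂-α₁^2))/2 - β₁*(β₁+2*α₁)/4 - α₂|
            + |β₁*((β₂-β₁^2/2)+(2*α₂-α₁^2))/4| + |C_α|) * δt^3) * (|C_M| * |R|) := by
      rw [norm_smul, Real.norm_eq_abs]
      exact mul_le_mul he2 hax (norm_nonneg _) (by positivity)
    have hv3 : ‖(((α₁+β₁)/4)*δt^3 + (-(α₁*β₁/8))*δt^4) • (A (gradient V y))‖
        ≤ ((|(α₁+β₁)/4| + |α₁*β₁/8|) * δt^3) * (|C_M| * |G₁|) := by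
      rw [norm_smul, Real.norm_eq_abs]
      exact mul_le_mul he3 hau (norm_nonneg _) (by positivity)
    have hsplit : Y δt - ((1 + β₁ * δt + β₂ * δt ^ 2 + βt) • y
          + δt • A ((1 + α₁ * δt + α₂ * δt ^ 2 + αt) • x - (δt / 2) • gradient V y))
        = (Y δt - (Y 0 + δt • fY 0 + (δt ^ 2 / 2) • gY 0))
          + ((Y 0 + δt • fY 0 + (δt ^ 2 / 2) • gY 0)
            - ((1 + β₁ * δt + β₂ * δt ^ 2 + βt) • y
              + δt • A ((1 + α₁ * δt + α₂ * δt ^ 2 + αt) • x - (δt / 2) • gradient V y))) := by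
      abel
    rw [hsplit, hidY]
    refine (norm_add_le _ _).trans ?_
    refine le_trans (add_le_add hTY norm_add₃_le) ?_
    refine le_trans (add_le_add le_rfl (add_le_add (add_le_add hv1 hv2) hv3)) ?_
    have hstep : (LY + EY) * δt ^ 3 ≤ (LY + EY + LX + EX) * δt ^ 3 :=
      mul_le_mul_of_nonneg_right
        ((le_add_of_nonneg_right hLXnn).trans (le_add_of_nonneg_right hEXnn)) h3pos.le
    refine le_trans (le_of_eq ?_) hstep
    rw [hEY]; ring
  · -- X component
    have hσ : |β₁*δt + β₂*δt^2 + βt| ≤ (|β₁|+|β₂|+|C_β|) * δt := by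
      calc _ ≤ |β₁*δt| + |β₂*δt^2| + |βt| := abs_add_three _ _ _
        _ ≤ |β₁| *δt + |β₂| *δt + |C_β| *δt := by
            refine add_le_add (add_le_add ?_ ?_) ?_
            · exact le_of_eq (by rw [abs_mul, abs_of_nonneg hδ0'])
            · rw [abs_mul, abs_pow, abs_of_nonneg hδ0']
              exact mul_le_mul_of_nonneg_left hδ2δ (abs_nonneg _)
            · refine hβt'.trans ?_
              exact mul_le_mul_of_nonneg_left hδ3δ (abs_nonneg _)
        _ = _ := by ring
    have hs1 : |1+α₁*δt+α₂*δt^2+αt| ≤ 1+|α₁|+|α₂|+|C_α| := by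
      have h1 : |α₁*δt| ≤ |α₁| := by
        rw [abs_mul, abs_of_nonneg hδ0']
        exact mul_le_of_le_one_right (abs_nonneg _) hδ1
      have h2 : |α₂*δt^2| ≤ |α₂| := by
        rw [abs_mul, abs_pow, abs_of_nonneg hδ0']
        exact mul_le_of_le_one_right (abs_nonneg _) hδ21
      have h3 : |αt| ≤ |C_α| :=
        hαt'.trans (mul_le_of_le_one_right (abs_nonneg _) hδ31)
      calc |1+α₁*δt+α₂*δt^2+αt| ≤ |1+α₁*δt+α₂*δt^2| + |αt| := abs_add_le _ _
        _ ≤ (|(1:ℝ)| + |α₁*δt| + |α₂*δt^2|) + |αt| :=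
            add_le_add (abs_add_three _ _ _) le_rfl
        _ = 1 + |α₁*δt| + |α₂*δt^2| + |αt| := by rw [abs_one]
        _ ≤ 1+|α₁|+|α₂|+|C_α| := add_le_add (add_le_add (add_le_add le_rfl h1) h2) h3
    have hyK : ‖((1 + β₁ * δt + β₂ * δt ^ 2 + βt) • y
          + δt • A ((1 + α₁ * δt + α₂ * δt ^ 2 + αt) • x - (δt / 2) • gradient V y)) - y‖
        ≤ K * δt := by
      have hid : ((1 + β₁ * δt + β₂ * δt ^ 2 + βt) • y
            + δt • A ((1 + α₁ * δt + α₂ * δt ^ 2 + αt) • x - (δt / 2) • gradient V y)) - y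
          = (β₁*δt + β₂*δt^2 + βt) • y
            + δt • A ((1 + α₁ * δt + α₂ * δt ^ 2 + αt) • x - (δt / 2) • gradient V y) := by
        module
      rw [hid]
      refine (norm_add_le _ _).trans ?_
      have hp1 : ‖(β₁*δt + β₂*δt^2 + βt) • y‖ ≤ ((|β₁|+|β₂|+|C_β|)*δt)* |R| := by
        rw [norm_smul, Real.norm_eq_abs]
        exact mul_le_mul hσ hy' (norm_nonneg _) (by positivity)
      have hp2 : ‖δt • A ((1 + α₁ * δt + α₂ * δt ^ 2 + αt) • x - (δt / 2) • gradient V y)‖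
          ≤ δt * (|C_M| * ((1+|α₁|+|α₂|+|C_α|)* |R| + (1/2)* |G₁|)) := by
        rw [norm_smul, Real.norm_eq_abs, abs_of_nonneg hδ0']
        refine mul_le_mul_of_nonneg_left ?_ hδ0'
        refine (A.le_opNorm _).trans ?_
        refine mul_le_mul (hA.trans (le_abs_self _)) ?_ (norm_nonneg _) (abs_nonneg _)
        refine (norm_sub_le _ _).trans ?_
        rw [norm_smul, norm_smul, Real.norm_eq_abs, Real.norm_eq_abs]
        refine add_le_add (mul_le_mul hs1 hx' (norm_nonneg _) (by positivity)) ?_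
        have hhalf : |δt/2| ≤ 1/2 := by
          rw [abs_of_nonneg (by positivity : (0:ℝ) ≤ δt/2)]; exact hhalfδ
        exact mul_le_mul hhalf hu (norm_nonneg _) (by norm_num)
      calc _ ≤ ((|β₁|+|β₂|+|C_β|)*δt)* |R|
            + δt*(|C_M| *((1+|α₁|+|α₂|+|C_α|)* |R| + (1/2)* |G₁|)) := add_le_add hp1 hp2
        _ = K*δt := by rw [hK]; ring
    have hErr : ‖gradient V ((1 + β₁ * δt + β₂ * δt ^ 2 + βt) • y
            + δt • A ((1 + α₁ * δt + α₂ * δt ^ 2 + αt) • x - (δt / 2) • gradient V y))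
          - gradient V y
          - (fderiv ℝ (gradient V) y) (((1 + β₁ * δt + β₂ * δt ^ 2 + βt) • y
            + δt • A ((1 + α₁ * δt + α₂ * δt ^ 2 + αt) • x - (δt / 2) • gradient V y)) - y)‖
        ≤ |G₃| * (K^2 * δt^2) := by
      have h0 := taylorGrad hgd hHlip y
        (((1 + β₁ * δt + β₂ * δt ^ 2 + βt) • y
          + δt • A ((1 + α₁ * δt + α₂ * δt ^ 2 + αt) • x - (δt / 2) • gradient V y)) - y)
      rw [show y + (((1 + β₁ * δt + β₂ * δt ^ 2 + βt) • y
          + δt • A ((1 + α₁ * δt + α₂ * δt ^ 2 + αt) • x - (δt / 2) • gradient V y)) - y)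
        = ((1 + β₁ * δt + β₂ * δt ^ 2 + βt) • y
          + δt • A ((1 + α₁ * δt + α₂ * δt ^ 2 + αt) • x - (δt / 2) • gradient V y))
        from by abel] at h0
      refine h0.trans ?_
      have hKδ : (0:ℝ) ≤ K*δt := le_trans (norm_nonneg _) hyK
      have hsq := mul_le_mul hyK hyK (norm_nonneg _) hKδ
      refine mul_le_mul_of_nonneg_left ?_ (abs_nonneg _)
      calc ‖_‖^2 = ‖_‖ * ‖_‖ := pow_two _
        _ ≤ (K*δt)*(K*δt) := hsq
        _ = K^2*δt^2 := by ring
    have hidX : (X 0 + δt • fX 0 + (δt ^ 2 / 2) • gX 0)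
        - ((1 + α₁ * δt + α₂ * δt ^ 2 + αt) ^ 2 • x
          - (δt / 2) • ((1 + α₁ * δt + α₂ * δt ^ 2 + αt) • gradient V y
            + gradient V ((1 + β₁ * δt + β₂ * δt ^ 2 + βt) • y
              + δt • A ((1 + α₁ * δt + α₂ * δt ^ 2 + αt) • x
                - (δt / 2) • gradient V y))))
        = ((2*α₁*(2*α₂-α₁^2) - 2*α₁*α₂)*δt^3 + ((2*α₂-α₁^2)^2/2 - α₂^2)*δt^4
            + -((2 + 2*α₁*δt + 2*α₂*δt^2)*αt) + -(αt*αt)) • x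
          + (((α₁^2 - (2*α₂-α₁^2) + α₂)/2)*δt^3 + ((2*α₂-α₁^2)*α₁/4)*δt^4
            + (δt/2)*αt) • gradient V y
          + (((α₁*β₁/2 - (β₂-β₁^2/2) + β₂)/2)*δt^3 + (α₁*(β₂-β₁^2/2)/4)*δt^4
            + (δt/2)*βt) • ((fderiv ℝ (gradient V) y) y)
          + (((((3*α₁+β₁)/4)*δt^3 + ((α₂-α₁*β₁/4)/2)*δt^4 + (δt^2/2)*αt)
              • ((fderiv ℝ (gradient V) y) (A x)))
            + (-(δt^3/4)) • ((fderiv ℝ (gradient V) y) (A (gradient V y)))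
            + (δt/2) • (gradient V ((1 + β₁ * δt + β₂ * δt ^ 2 + βt) • y
                + δt • A ((1 + α₁ * δt + α₂ * δt ^ 2 + αt) • x - (δt / 2) • gradient V y))
              - gradient V y
              - (fderiv ℝ (gradient V) y) (((1 + β₁ * δt + β₂ * δt ^ 2 + βt) • y
                + δt • A ((1 + α₁ * δt + α₂ * δt ^ 2 + αt) • x
                  - (δt / 2) • gradient V y)) - y))) := by
      simp only [hgX, hW, hfX, hfY, hY0, hX0, map_add, map_sub, map_smul]
      module
    -- scalar bounds
    have hd1 : |(2*α₁*(2*α₂-α₁^2) - 2*α₁*α₂)*δt^3 + ((2*α₂-α₁^2)^2/2 - α₂^2)*δt^4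
            + -((2 + 2*α₁*δt + 2*α₂*δt^2)*αt) + -(αt*αt)|
        ≤ (|2*α₁*(2*α₂-α₁^2) - 2*α₁*α₂| + |(2*α₂-α₁^2)^2/2 - α₂^2|
            + (|(2:ℝ)| + |2*α₁| + |2*α₂|)* |C_α| + |C_α|^2) * δt^3 := by
      have hco : |2 + 2*α₁*δt + 2*α₂*δt^2| ≤ |(2:ℝ)| + |2*α₁| + |2*α₂| := by
        calc _ ≤ |(2:ℝ)| + |2*α₁*δt| + |2*α₂*δt^2| := abs_add_three _ _ _
          _ ≤ _ := by
              refine add_le_add (add_le_add le_rfl ?_) ?_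
              · rw [show (2*α₁*δt) = (2*α₁)*δt from by ring, abs_mul, abs_of_nonneg hδ0']
                exact mul_le_of_le_one_right (abs_nonneg _) hδ1
              · rw [show (2*α₂*δt^2) = (2*α₂)*δt^2 from by ring, abs_mul, abs_pow,
                  abs_of_nonneg hδ0']
                exact mul_le_of_le_one_right (abs_nonneg _) hδ21
      calc _ ≤ |(2*α₁*(2*α₂-α₁^2) - 2*α₁*α₂)*δt^3 + ((2*α₂-α₁^2)^2/2 - α₂^2)*δt^4
              + -((2 + 2*α₁*δt + 2*α₂*δt^2)*αt)| + |-(αt*αt)| := abs_add_le _ _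
        _ ≤ (|(2*α₁*(2*α₂-α₁^2) - 2*α₁*α₂)*δt^3| + |((2*α₂-α₁^2)^2/2 - α₂^2)*δt^4|
              + |-((2 + 2*α₁*δt + 2*α₂*δt^2)*αt)|) + |-(αt*αt)| :=
            add_le_add (abs_add_three _ _ _) le_rfl
        _ ≤ (|2*α₁*(2*α₂-α₁^2) - 2*α₁*α₂| * δt^3 + |(2*α₂-α₁^2)^2/2 - α₂^2| * δt^3
              + ((|(2:ℝ)| + |2*α₁| + |2*α₂|)* |C_α|) * δt^3) + |C_α|^2 * δt^3 := by
            refine add_le_add (add_le_add (add_le_add ?_ ?_) ?_) ?_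
            · exact mono_bound hδ0' hδ1 _ le_rfl
            · exact mono_bound hδ0' hδ1 _ (by norm_num)
            · rw [abs_neg, abs_mul]
              calc |2 + 2*α₁*δt + 2*α₂*δt^2| * |αt|
                  ≤ (|(2:ℝ)| + |2*α₁| + |2*α₂|) * (|C_α| * δt^3) :=
                    mul_le_mul hco hαt' (abs_nonneg _) (by positivity)
                _ = ((|(2:ℝ)| + |2*α₁| + |2*α₂|)* |C_α|) * δt^3 := by ring
            · rw [abs_neg, abs_mul]
              calc |αt| * |αt| ≤ (|C_α| * δt^3) * (|C_α| * δt^3) :=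
                    mul_le_mul hαt' hαt' (abs_nonneg _) (by positivity)
                _ = (|C_α|^2 * δt^3) * δt^3 := by ring
                _ ≤ (|C_α|^2 * δt^3) * 1 :=
                    mul_le_mul_of_nonneg_left hδ31 (by positivity)
                _ = |C_α|^2 * δt^3 := mul_one _
        _ = _ := by ring
    have hd2 : |((α₁^2 - (2*α₂-α₁^2) + α₂)/2)*δt^3 + ((2*α₂-α₁^2)*α₁/4)*δt^4 + (δt/2)*αt|
        ≤ (|(α₁^2 - (2*α₂-α₁^2) + α₂)/2| + |(2*α₂-α₁^2)*α₁/4| + (1/2)* |C_α|) * δt^3 := by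
      calc _ ≤ |((α₁^2 - (2*α₂-α₁^2) + α₂)/2)*δt^3| + |((2*α₂-α₁^2)*α₁/4)*δt^4|
              + |(δt/2)*αt| := abs_add_three _ _ _
        _ ≤ |(α₁^2 - (2*α₂-α₁^2) + α₂)/2| * δt^3 + |(2*α₂-α₁^2)*α₁/4| * δt^3
              + ((1/2)* |C_α|) * δt^3 := by
            refine add_le_add (add_le_add ?_ ?_) ?_
            · exact mono_bound hδ0' hδ1 _ le_rfl
            · exact mono_bound hδ0' hδ1 _ (by norm_num)
            · rw [abs_mul, abs_of_nonneg (by positivity : (0:ℝ) ≤ δt/2)]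
              calc (δt/2) * |αt| ≤ (1/2) * (|C_α| * δt^3) :=
                    mul_le_mul hhalfδ hαt' (abs_nonneg _) (by norm_num)
                _ = ((1/2)* |C_α|) * δt^3 := by ring
        _ = _ := by ring
    have hd3 : |((α₁*β₁/2 - (β₂-β₁^2/2) + β₂)/2)*δt^3 + (α₁*(β₂-β₁^2/2)/4)*δt^4 + (δt/2)*βt|
        ≤ (|(α₁*β₁/2 - (β₂-β₁^2/2) + β₂)/2| + |α₁*(β₂-β₁^2/2)/4| + (1/2)* |C_β|) * δt^3 := by
      calc _ ≤ |((α₁*β₁/2 - (β₂-β₁^2/2) + β₂)/2)*δt^3| + |(α₁*(β₂-β₁^2/2)/4)*δt^4|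
              + |(δt/2)*βt| := abs_add_three _ _ _
        _ ≤ |(α₁*β₁/2 - (β₂-β₁^2/2) + β₂)/2| * δt^3 + |α₁*(β₂-β₁^2/2)/4| * δt^3
              + ((1/2)* |C_β|) * δt^3 := by
            refine add_le_add (add_le_add ?_ ?_) ?_
            · exact mono_bound hδ0' hδ1 _ le_rfl
            · exact mono_bound hδ0' hδ1 _ (by norm_num)
            · rw [abs_mul, abs_of_nonneg (by positivity : (0:ℝ) ≤ δt/2)]
              calc (δt/2) * |βt| ≤ (1/2) * (|C_β| * δt^3) :=
                    mul_le_mul hhalfδ hβt' (abs_nonneg _) (by norm_num)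
                _ = ((1/2)* |C_β|) * δt^3 := by ring
        _ = _ := by ring
    have hd4 : |((3*α₁+β₁)/4)*δt^3 + ((α₂-α₁*β₁/4)/2)*δt^4 + (δt^2/2)*αt|
        ≤ (|(3*α₁+β₁)/4| + |(α₂-α₁*β₁/4)/2| + (1/2)* |C_α|) * δt^3 := by
      calc _ ≤ |((3*α₁+β₁)/4)*δt^3| + |((α₂-α₁*β₁/4)/2)*δt^4| + |(δt^2/2)*αt| :=
            abs_add_three _ _ _
        _ ≤ |(3*α₁+β₁)/4| * δt^3 + |(α₂-α₁*β₁/4)/2| * δt^3 + ((1/2)* |C_α|) * δt^3 := by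
            refine add_le_add (add_le_add ?_ ?_) ?_
            · exact mono_bound hδ0' hδ1 _ le_rfl
            · exact mono_bound hδ0' hδ1 _ (by norm_num)
            · rw [abs_mul, abs_of_nonneg (by positivity : (0:ℝ) ≤ δt^2/2)]
              calc (δt^2/2) * |αt| ≤ (1/2) * (|C_α| * δt^3) :=
                    mul_le_mul hhalfδ2 hαt' (abs_nonneg _) (by norm_num)
                _ = ((1/2)* |C_α|) * δt^3 := by ring
        _ = _ := by ring
    -- norms of the atoms
    have hHy : ‖(fderiv ℝ (gradient V) y) y‖ ≤ |G₂| * |R| :=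
      (ContinuousLinearMap.le_opNorm _ _).trans
        (mul_le_mul ((hG₂ y).trans (le_abs_self _)) hy' (norm_nonneg _) (abs_nonneg _))
    have hHa : ‖(fderiv ℝ (gradient V) y) (A x)‖ ≤ |G₂| * (|C_M| * |R|) :=
      (ContinuousLinearMap.le_opNorm _ _).trans
        (mul_le_mul ((hG₂ y).trans (le_abs_self _)) hax (norm_nonneg _) (abs_nonneg _))
    have hHb : ‖(fderiv ℝ (gradient V) y) (A (gradient V y))‖ ≤ |G₂| * (|C_M| * |G₁|) :=
      (ContinuousLinearMap.le_opNorm _ _).trans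
        (mul_le_mul ((hG₂ y).trans (le_abs_self _)) hau (norm_nonneg _) (abs_nonneg _))
    have hw1 : ‖((2*α₁*(2*α₂-α₁^2) - 2*α₁*α₂)*δt^3 + ((2*α₂-α₁^2)^2/2 - α₂^2)*δt^4
            + -((2 + 2*α₁*δt + 2*α₂*δt^2)*αt) + -(αt*αt)) • x‖
        ≤ ((|2*α₁*(2*α₂-α₁^2) - 2*α₁*α₂| + |(2*α₂-α₁^2)^2/2 - α₂^2|
            + (|(2:ℝ)| + |2*α₁| + |2*α₂|)* |C_α| + |C_α|^2) * δt^3) * |R| := by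
      rw [norm_smul, Real.norm_eq_abs]
      exact mul_le_mul hd1 hx' (norm_nonneg _) (by positivity)
    have hw2 : ‖(((α₁^2 - (2*α₂-α₁^2) + α₂)/2)*δt^3 + ((2*α₂-α₁^2)*α₁/4)*δt^4
            + (δt/2)*αt) • gradient V y‖
        ≤ ((|(α₁^2 - (2*α₂-α₁^2) + α₂)/2| + |(2*α₂-α₁^2)*α₁/4| + (1/2)* |C_α|) * δt^3)
            * |G₁| := by
      rw [norm_smul, Real.norm_eq_abs]
      exact mul_le_mul hd2 hu (norm_nonneg _) (by positivity)
    have hw3 : ‖(((α₁*β₁/2 - (β₂-β₁^2/2) + β₂)/2)*δt^3 + (α₁*(β₂-β₁^2/2)/4)*δt^4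
            + (δt/2)*βt) • ((fderiv ℝ (gradient V) y) y)‖
        ≤ ((|(α₁*β₁/2 - (β₂-β₁^2/2) + β₂)/2| + |α₁*(β₂-β₁^2/2)/4| + (1/2)* |C_β|) * δt^3)
            * (|G₂| * |R|) := by
      rw [norm_smul, Real.norm_eq_abs]
      exact mul_le_mul hd3 hHy (norm_nonneg _) (by positivity)
    have hw4 : ‖(((3*α₁+β₁)/4)*δt^3 + ((α₂-α₁*β₁/4)/2)*δt^4 + (δt^2/2)*αt)
            • ((fderiv ℝ (gradient V) y) (A x))‖
        ≤ ((|(3*α₁+β₁)/4| + |(α₂-α₁*β₁/4)/2| + (1/2)* |C_α|) * δt^3)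
            * (|G₂| * (|C_M| * |R|)) := by
      rw [norm_smul, Real.norm_eq_abs]
      exact mul_le_mul hd4 hHa (norm_nonneg _) (by positivity)
    have hw5 : ‖(-(δt^3/4)) • ((fderiv ℝ (gradient V) y) (A (gradient V y)))‖
        ≤ ((1/4) * δt^3) * (|G₂| * (|C_M| * |G₁|)) := by
      rw [norm_smul, Real.norm_eq_abs, abs_neg, abs_of_nonneg (by positivity : (0:ℝ) ≤ δt^3/4)]
      refine mul_le_mul (le_of_eq (by ring)) hHb (norm_nonneg _) (by positivity)
    have hw6 : ‖(δt/2) • (gradient V ((1 + β₁ * δt + β₂ * δt ^ 2 + βt) • y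
            + δt • A ((1 + α₁ * δt + α₂ * δt ^ 2 + αt) • x - (δt / 2) • gradient V y))
          - gradient V y
          - (fderiv ℝ (gradient V) y) (((1 + β₁ * δt + β₂ * δt ^ 2 + βt) • y
            + δt • A ((1 + α₁ * δt + α₂ * δt ^ 2 + αt) • x
              - (δt / 2) • gradient V y)) - y))‖
        ≤ ((1/2) * (|G₃| * K^2)) * δt^3 := by
      rw [norm_smul, Real.norm_eq_abs, abs_of_nonneg (by positivity : (0:ℝ) ≤ δt/2)]
      calc (δt/2) * ‖_‖ ≤ (δt/2) * (|G₃| * (K^2 * δt^2)) :=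
            mul_le_mul_of_nonneg_left hErr (by positivity)
        _ = ((1/2) * (|G₃| * K^2)) * δt^3 := by ring
    have hsplitX : X δt - ((1 + α₁ * δt + α₂ * δt ^ 2 + αt) ^ 2 • x
          - (δt / 2) • ((1 + α₁ * δt + α₂ * δt ^ 2 + αt) • gradient V y
            + gradient V ((1 + β₁ * δt + β₂ * δt ^ 2 + βt) • y
              + δt • A ((1 + α₁ * δt + α₂ * δt ^ 2 + αt) • x
                - (δt / 2) • gradient V y))))
        = (X δt - (X 0 + δt • fX 0 + (δt ^ 2 / 2) • gX 0))
          + ((X 0 + δt • fX 0 + (δt ^ 2 / 2) • gX 0)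
            - ((1 + α₁ * δt + α₂ * δt ^ 2 + αt) ^ 2 • x
              - (δt / 2) • ((1 + α₁ * δt + α₂ * δt ^ 2 + αt) • gradient V y
                + gradient V ((1 + β₁ * δt + β₂ * δt ^ 2 + βt) • y
                  + δt • A ((1 + α₁ * δt + α₂ * δt ^ 2 + αt) • x
                    - (δt / 2) • gradient V y))))) := by
      abel
    rw [hsplitX, hidX]
    refine (norm_add_le _ _).trans ?_
    refine le_trans (add_le_add hTX (norm_add_le _ _)) ?_
    refine le_trans (add_le_add le_rfl (add_le_add norm_add₃_le norm_add₃_le)) ?_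
    refine le_trans (add_le_add le_rfl (add_le_add
      (add_le_add (add_le_add hw1 hw2) hw3)
      (add_le_add (add_le_add hw4 hw5) hw6))) ?_
    have hstep : (LX + EX) * δt ^ 3 ≤ (LY + EY + LX + EX) * δt ^ 3 :=
      mul_le_mul_of_nonneg_right
        (by
          have h1 : LY + EY + (LX + EX) = LY + EY + LX + EX := by ring
          calc LX + EX ≤ (LY + EY) + (LX + EX) :=
                le_add_of_nonneg_left (add_nonneg hLYnn hEYnn)
            _ = LY + EY + LX + EX := h1) h3pos.le
    refine le_trans (le_of_eq ?_) hstep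
    rw [hEX]; ring
end

section
/- Work in ℝ^d with A : ℝ^d → ℝ^d continuous linear, ‖A‖ ≤ C_M, and V : ℝ^d → ℝ three times continuously differentiable with ‖∇V(z)‖ ≤ G₁, ‖D²V(z)‖ ≤ G₂ and ‖D³V(z)‖ ≤ G₃ for all z ∈ ℝ^d. Fix constants α₂, β₂, C_α, C_β, R, R' and set the leapfrog parameters α = 1 + α₂·δt² + α̃(δt), β = 1 + β₂·δt² + β̃(δt) with |α̃(δt)| ≤ C_α·δt³, |β̃(δt)| ≤ C_β·δt³ (the case α₁ = β₁ = 0). Then there exists a constant C, depending only on these constants, such that: for every δt ∈ (0,1], every y, x ∈ ℝ^d with ‖y‖ ≤ R, ‖x‖ ≤ R, and every pair of differentiable curves Y, X : [0, δt] → ℝ^d satisfying Y(0) = y, X(0) = x, ‖Y(t)‖ ≤ R', ‖X(t)‖ ≤ R' for all t ∈ [0, δt], and the simplified modified equations Y'(t) = A·X(t) + δt·β₂·Y(t) and X'(t) = −∇V(Y(t)) + 2·δt·α₂·X(t), one has ‖Y(δt) − y⁺‖ ≤ C·δt³ and ‖X(δt) − x⁺‖ ≤ C·δt³, where (y⁺,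 x⁺) is one step of the parameterized leapfrog scheme from (y, x). -/
open Set
set_option maxHeartbeats 1000000

section Aux
variable {E : Type*} [NormedAddCommGroup E] [NormedSpace ℝ E]

lemma aux_poly (f f' : ℝ → E) (h K : ℝ) (n : ℕ) (hh : 0 ≤ h)
    (hf : ∀ t ∈ Icc (0:ℝ) h, HasDerivAt f (f' t) t)
    (hb : ∀ t ∈ Icc (0:ℝ) h, ‖f' t‖ ≤ K * t ^ n) :
    ‖f h - f 0‖ ≤ K * h ^ (n+1) / (n+1) := by
  have hB : ∀ t : ℝ, HasDerivAt (fun s : ℝ => K * s ^ (n+1) / (n+1)) (K * t ^ n) t := by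
    intro t
    have h1 : HasDerivAt (fun s : ℝ => K * s ^ (n+1) / (n+1))
        (K * ((n+1 : ℕ) * t ^ n) / (n+1)) t :=
      (((hasDerivAt_pow (n+1) t)).const_mul K).div_const _
    convert h1 using 1
    have : ((n:ℝ)+1) ≠ 0 := by positivity
    field_simp
    push_cast; ring
  have key := image_norm_le_of_norm_deriv_right_le_deriv_boundary
    (f := fun t => f t - f 0) (f' := f') (a := 0) (b := h)
    (B := fun t => K * t ^ (n+1) / (n+1)) (B' := fun t => K * t ^ n)
    (by
      have : ContinuousOn f (Icc 0 h) := fun t ht => ((hf t ht).continuousAt).continuousWithinAt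
      exact this.sub continuousOn_const)
    (fun t ht => (((hf t (Ico_subset_Icc_self ht)).sub_const (f 0)).hasDerivWithinAt))
    (by simp)
    hB
    (fun t ht => hb t (Ico_subset_Icc_self ht))
  have := key (right_mem_Icc.2 hh)
  simpa using this

lemma aux_drift (f f' : ℝ → E) (v : E) (h K : ℝ) (n : ℕ) (hh : 0 ≤ h)
    (hf : ∀ t ∈ Icc (0:ℝ) h, HasDerivAt f (f' t) t)
    (hb : ∀ t ∈ Icc (0:ℝ) h, ‖f' t - v‖ ≤ K * t ^ n) :
    ‖f h - f 0 - h • v‖ ≤ K * h ^ (n+1) / (n+1) := by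
  have key := aux_poly (fun t => f t - t • v) (fun t => f' t - v) h K n hh
    (fun t ht => by
      have h1 : HasDerivAt (fun s : ℝ => s • v) ((1:ℝ) • v) t :=
        (hasDerivAt_id t).smul_const v
      have h3 : HasDerivAt (fun s => f s - s • v) (f' t - (1:ℝ) • v) t := (hf t ht).sub h1
      simpa using h3)
    hb
  simpa [sub_sub_eq_add_sub, sub_right_comm] using key

lemma aux_taylor2 (f f' f'' : ℝ → E) (h L : ℝ) (hh : 0 ≤ h)
    (hf : ∀ t ∈ Icc (0:ℝ) h, HasDerivAt f (f' t) t)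
    (hf' : ∀ t ∈ Icc (0:ℝ) h, HasDerivAt f' (f'' t) t)
    (hb : ∀ t ∈ Icc (0:ℝ) h, ‖f'' t - f'' 0‖ ≤ L * t) :
    ‖f h - f 0 - h • f' 0 - (h^2/2) • f'' 0‖ ≤ L * h ^ 3 / 6 := by
  have step1 : ∀ t ∈ Icc (0:ℝ) h, ‖f' t - f' 0 - t • f'' 0‖ ≤ (L/2) * t ^ 2 := by
    intro t ht
    have hsub : Icc (0:ℝ) t ⊆ Icc 0 h := Icc_subset_Icc le_rfl ht.2
    have := aux_drift f' f'' (f'' 0) t L 1 ht.1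
      (fun s hs => hf' s (hsub hs)) (fun s hs => by simpa using hb s (hsub hs))
    calc ‖f' t - f' 0 - t • f'' 0‖ ≤ L * t ^ (1+1) / ((1:ℕ)+1) := this
      _ = (L/2) * t ^ 2 := by push_cast; ring
  have key := aux_poly (fun t => f t - t • f' 0 - (t^2/2) • f'' 0)
      (fun t => f' t - f' 0 - t • f'' 0) h (L/2) 2 hh
    (fun t ht => by
      have h1 : HasDerivAt (fun s : ℝ => s • f' 0) ((1:ℝ) • f' 0) t :=
        (hasDerivAt_id t).smul_const _
      have h2 : HasDerivAt (fun s : ℝ => (s^2/2) • f'' 0) ((2 * t ^ 1 / 2) • f'' 0) t :=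
        (((hasDerivAt_pow 2 t)).div_const 2).smul_const _
      have h2' : HasDerivAt (fun s : ℝ => (s^2/2) • f'' 0) (t • f'' 0) t := by
        convert h2 using 2; push_cast; ring
      have h3 : HasDerivAt (fun s => f s - s • f' 0 - (s^2/2) • f'' 0)
          (f' t - (1:ℝ) • f' 0 - t • f'' 0) t := ((hf t ht).sub h1).sub h2'
      simpa using h3)
    step1
  calc ‖f h - f 0 - h • f' 0 - (h^2/2) • f'' 0‖
      = ‖(fun t : ℝ => f t - t • f' 0 - (t^2/2) • f'' 0) h -
          (fun t : ℝ => f t - t • f' 0 - (t^2/2) • f'' 0) 0‖ := by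
        simp only []; congr 1; simp; abel
    _ ≤ L / 2 * h ^ (2+1) / ((2:ℕ)+1) := key
    _ = L * h ^ 3 / 6 := by push_cast; ring

lemma aux_smul_bound (c : ℝ) (v : E) (a b : ℝ) (h1 : |c| ≤ a) (h2 : ‖v‖ ≤ b) :
    ‖c • v‖ ≤ a * b := by
  rw [norm_smul, Real.norm_eq_abs]
  exact mul_le_mul h1 h2 (norm_nonneg v) (le_trans (abs_nonneg c) h1)

end Aux

/-- In the case `α₁ = β₁ = 0` (so `α = 1 + α₂·δt² + α̃`, `β = 1 + β₂·δt² + β̃`), the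
parameterized leapfrog scheme follows the flow of the simplified modified equations
`Y' = A·X + δt·β₂·Y`, `X' = −∇V(Y) + 2·δt·α₂·X` up to a one-step defect of order
`δt³`: `‖Y(δt) − y⁺‖ ≤ C·δt³` and `‖X(δt) − x⁺‖ ≤ C·δt³`. -/
theorem stmt8
    (d : ℕ) (hd : 1 ≤ d)
    (A : EuclideanSpace ℝ (Fin d) →L[ℝ] EuclideanSpace ℝ (Fin d))
    (C_M : ℝ) (hA : ‖A‖ ≤ C_M)
    (V : EuclideanSpace ℝ (Fin d) → ℝ) (hV : ContDiff ℝ 3 V)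
    (G₁ G₂ G₃ : ℝ)
    (hG₁ : ∀ z, ‖gradient V z‖ ≤ G₁)
    (hG₂ : ∀ z, ‖fderiv ℝ (gradient V) z‖ ≤ G₂)
    (hG₃ : ∀ z, ‖fderiv ℝ (fderiv ℝ (gradient V)) z‖ ≤ G₃)
    (α₂ β₂ C_α C_β R R' : ℝ) :
    ∃ C : ℝ, ∀ δt : ℝ, 0 < δt → δt ≤ 1 →
      ∀ αt βt : ℝ, |αt| ≤ C_α * δt ^ 3 → |βt| ≤ C_β * δt ^ 3 →
      ∀ y x : EuclideanSpace ℝ (Fin d), ‖y‖ ≤ R → ‖x‖ ≤ R →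
      ∀ Y X : ℝ → EuclideanSpace ℝ (Fin d), Y 0 = y → X 0 = x →
      (∀ t ∈ Set.Icc (0 : ℝ) δt, ‖Y t‖ ≤ R') →
      (∀ t ∈ Set.Icc (0 : ℝ) δt, ‖X t‖ ≤ R') →
      (∀ t ∈ Set.Icc (0 : ℝ) δt, HasDerivAt Y (A (X t) + (δt * β₂) • Y t) t) →
      (∀ t ∈ Set.Icc (0 : ℝ) δt, HasDerivAt X
        (-gradient V (Y t) + (2 * δt * α₂) • X t) t) →
      ‖Y δt - ((1 + β₂ * δt ^ 2 + βt) • y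
          + δt • A ((1 + α₂ * δt ^ 2 + αt) • x - (δt / 2) • gradient V y))‖
        ≤ C * δt ^ 3 ∧
      ‖X δt - ((1 + α₂ * δt ^ 2 + αt) ^ 2 • x
          - (δt / 2) • ((1 + α₂ * δt ^ 2 + αt) • gradient V y
            + gradient V ((1 + β₂ * δt ^ 2 + βt) • y
              + δt • A ((1 + α₂ * δt ^ 2 + αt) • x - (δt / 2) • gradient V y))))‖
        ≤ C * δt ^ 3 := by
  have hCM0 : 0 ≤ C_M := le_trans (norm_nonneg A) hA
  have hG10 : 0 ≤ G₁ := le_trans (norm_nonneg _) (hG₁ 0)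
  have hG20 : 0 ≤ G₂ := le_trans (norm_nonneg _) (hG₂ 0)
  have hG30 : 0 ≤ G₃ := le_trans (ContinuousLinearMap.opNorm_nonneg _) (hG₃ 0)
  have hgrad2 : ContDiff ℝ 2 (gradient V) := by
    have h1 : ContDiff ℝ 2 (fderiv ℝ V) := hV.fderiv_right (by norm_num)
    exact ((InnerProductSpace.toDual ℝ (EuclideanSpace ℝ (Fin d))).symm.contDiff.comp h1)
  have hgd : Differentiable ℝ (gradient V) := hgrad2.differentiable (by norm_num)
  have hD2cd : ContDiff ℝ 1 (fderiv ℝ (gradient V)) := hgrad2.fderiv_right (by norm_num)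
  have hD2d : Differentiable ℝ (fderiv ℝ (gradient V)) := hD2cd.differentiable one_ne_zero
  have hgradLip : ∀ a b : EuclideanSpace ℝ (Fin d),
      ‖gradient V b - gradient V a‖ ≤ G₂ * ‖b - a‖ := fun a b =>
    convex_univ.norm_image_sub_le_of_norm_fderiv_le (fun z _ => hgd z) (fun z _ => hG₂ z)
      (mem_univ a) (mem_univ b)
  have hD2Lip : ∀ a b : EuclideanSpace ℝ (Fin d),
      ‖fderiv ℝ (gradient V) b - fderiv ℝ (gradient V) a‖ ≤ G₃ * ‖b - a‖ := fun a b =>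
    convex_univ.norm_image_sub_le_of_norm_fderiv_le (fun z _ => hD2d z) (fun z _ => hG₃ z)
      (mem_univ a) (mem_univ b)
  have hgradTaylor : ∀ a b : EuclideanSpace ℝ (Fin d),
      ‖gradient V b - gradient V a - fderiv ℝ (gradient V) a (b - a)‖
        ≤ G₃ * ‖b - a‖ * ‖b - a‖ := by
    intro a b
    have hball : b ∈ Metric.closedBall a ‖b - a‖ := by
      simp [Metric.mem_closedBall, dist_eq_norm]
    have hbound : ∀ z ∈ Metric.closedBall a ‖b - a‖,
        ‖fderiv ℝ (gradient V) z - fderiv ℝ (gradient V) a‖ ≤ G₃ * ‖b - a‖ := by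
      intro z hz
      rw [Metric.mem_closedBall, dist_eq_norm] at hz
      calc ‖fderiv ℝ (gradient V) z - fderiv ℝ (gradient V) a‖ ≤ G₃ * ‖z - a‖ := hD2Lip a z
        _ ≤ G₃ * ‖b - a‖ := mul_le_mul_of_nonneg_left hz hG30
    exact (convex_closedBall a ‖b - a‖).norm_image_sub_le_of_norm_hasFDerivWithin_le'
      (fun z _ => (hgd z).hasFDerivAt.hasFDerivWithinAt) hbound
      (Metric.mem_closedBall_self (norm_nonneg _)) hball
  obtain ⟨SY, hSYdef⟩ : ∃ c : ℝ, c = C_M * R' + |β₂| * R' := ⟨_, rfl⟩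
  obtain ⟨SX, hSXdef⟩ : ∃ c : ℝ, c = G₁ + 2 * |α₂| * R' := ⟨_, rfl⟩
  obtain ⟨KX, hKXdef⟩ : ∃ c : ℝ, c = G₂ * SY + 2 * |α₂| * SX := ⟨_, rfl⟩
  obtain ⟨KY, hKYdef⟩ : ∃ c : ℝ, c = C_M * SX + |β₂| * SY := ⟨_, rfl⟩
  obtain ⟨LY, hLYdef⟩ : ∃ c : ℝ, c = C_M * KX + |β₂| * KY := ⟨_, rfl⟩
  obtain ⟨LX, hLXdef⟩ : ∃ c : ℝ, c = G₃ * SY * SY + G₂ * KY + 2 * |α₂| * KX := ⟨_, rfl⟩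
  obtain ⟨EY, hEYdef⟩ : ∃ c : ℝ, c = |β₂| * (C_M * R) / 2 + β₂^2 * R / 2 + C_β * R + C_α * (C_M * R) := ⟨_, rfl⟩
  obtain ⟨D1, hD1def⟩ : ∃ c : ℝ, c = (|β₂| + C_β) * R + C_M * ((1 + |α₂| + C_α) * R + G₁ / 2) := ⟨_, rfl⟩
  obtain ⟨EX, hEXdef⟩ : ∃ c : ℝ, c = (2*C_α + (|α₂|+C_α)^2 + 2*α₂^2) * R + (|α₂|/2 + C_α/2) * G₁
      + (C_β/2) * (G₂ * R) + ((|α₂|+C_α)/2) * (G₂ * (C_M * R)) + (1/4) * (G₂ * (C_M * G₁))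
      + (G₃ * D1^2 / 2) * 1 := ⟨_, rfl⟩
  refine ⟨LY + EY + LX + EX, ?_⟩
  intro δt hδ hδ1 αt βt hαt hβt y x hy hx Y X hY0 hX0 hYR hXR hYd hXd
  have hδ0 : (0:ℝ) ≤ δt := hδ.le
  have h3pos : (0:ℝ) < δt ^ 3 := pow_pos hδ 3
  have hδ21 : δt ^ 2 ≤ δt := by
    simpa using pow_le_pow_of_le_one hδ0 hδ1 (by norm_num : 1 ≤ 2)
  have hδ31 : δt ^ 3 ≤ δt := by
    simpa using pow_le_pow_of_le_one hδ0 hδ1 (by norm_num : 1 ≤ 3)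
  have hδ32 : δt ^ 3 ≤ δt ^ 2 := pow_le_pow_of_le_one hδ0 hδ1 (by norm_num)
  have hδ43 : δt ^ 4 ≤ δt ^ 3 := pow_le_pow_of_le_one hδ0 hδ1 (by norm_num)
  have hR0 : 0 ≤ R := le_trans (norm_nonneg y) hy
  have hR'0 : 0 ≤ R' := le_trans (norm_nonneg (Y 0)) (hYR 0 ⟨le_rfl, hδ0⟩)
  have hCα0 : 0 ≤ C_α := by
    have h1 : (0:ℝ) ≤ C_α * δt ^ 3 := le_trans (abs_nonneg αt) hαt
    exact (mul_nonneg_iff_of_pos_right h3pos).mp h1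
  have hCβ0 : 0 ≤ C_β := by
    have h1 : (0:ℝ) ≤ C_β * δt ^ 3 := le_trans (abs_nonneg βt) hβt
    exact (mul_nonneg_iff_of_pos_right h3pos).mp h1
  have hSY0 : 0 ≤ SY := by
    rw [hSYdef]; exact add_nonneg (mul_nonneg hCM0 hR'0) (mul_nonneg (abs_nonneg _) hR'0)
  have hSX0 : 0 ≤ SX := by
    rw [hSXdef]
    exact add_nonneg hG10 (mul_nonneg (by positivity) hR'0)
  have hKX0 : 0 ≤ KX := by
    rw [hKXdef]; exact add_nonneg (mul_nonneg hG20 hSY0) (mul_nonneg (by positivity) hSX0)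
  have hKY0 : 0 ≤ KY := by
    rw [hKYdef]; exact add_nonneg (mul_nonneg hCM0 hSX0) (mul_nonneg (abs_nonneg _) hSY0)
  have hLY0 : 0 ≤ LY := by
    rw [hLYdef]; exact add_nonneg (mul_nonneg hCM0 hKX0) (mul_nonneg (abs_nonneg _) hKY0)
  have hLX0 : 0 ≤ LX := by
    rw [hLXdef]
    exact add_nonneg (add_nonneg (mul_nonneg (mul_nonneg hG30 hSY0) hSY0)
      (mul_nonneg hG20 hKY0)) (mul_nonneg (by positivity) hKX0)
  have hD10 : 0 ≤ D1 := by
    rw [hD1def]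
    have : (0:ℝ) ≤ (1 + |α₂| + C_α) * R := mul_nonneg (by positivity) hR0
    exact add_nonneg (mul_nonneg (by positivity) hR0)
      (mul_nonneg hCM0 (add_nonneg this (by linarith)))
  have hEY0 : 0 ≤ EY := by
    rw [hEYdef]
    have h1 : (0:ℝ) ≤ |β₂| * (C_M * R) / 2 := by
      have := mul_nonneg (abs_nonneg β₂) (mul_nonneg hCM0 hR0); linarith
    have h2 : (0:ℝ) ≤ β₂^2 * R / 2 := by positivity
    have h3 : (0:ℝ) ≤ C_β * R := mul_nonneg hCβ0 hR0
    have h4 : (0:ℝ) ≤ C_α * (C_M * R) := mul_nonneg hCα0 (mul_nonneg hCM0 hR0)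
    linarith
  have hEX0 : 0 ≤ EX := by
    rw [hEXdef]
    have h1 : (0:ℝ) ≤ (2*C_α + (|α₂|+C_α)^2 + 2*α₂^2) * R :=
      mul_nonneg (by positivity) hR0
    have h2 : (0:ℝ) ≤ (|α₂|/2 + C_α/2) * G₁ := mul_nonneg (by positivity) hG10
    have h3 : (0:ℝ) ≤ (C_β/2) * (G₂ * R) := mul_nonneg (by linarith) (mul_nonneg hG20 hR0)
    have h4 : (0:ℝ) ≤ ((|α₂|+C_α)/2) * (G₂ * (C_M * R)) :=
      mul_nonneg (by positivity) (mul_nonneg hG20 (mul_nonneg hCM0 hR0))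
    have h5 : (0:ℝ) ≤ (1/4) * (G₂ * (C_M * G₁)) := by
      have := mul_nonneg hG20 (mul_nonneg hCM0 hG10); linarith
    have h6 : (0:ℝ) ≤ (G₃ * D1^2 / 2) * 1 := by positivity
    linarith
  -- derivative setup
  obtain ⟨FY, hFYdef⟩ : ∃ F : ℝ → EuclideanSpace ℝ (Fin d),
      F = fun t => A (X t) + (δt * β₂) • Y t := ⟨_, rfl⟩
  obtain ⟨FX, hFXdef⟩ : ∃ F : ℝ → EuclideanSpace ℝ (Fin d),
      F = fun t => -gradient V (Y t) + (2 * δt * α₂) • X t := ⟨_, rfl⟩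
  obtain ⟨GY, hGYdef⟩ : ∃ F : ℝ → EuclideanSpace ℝ (Fin d),
      F = fun t => A (FX t) + (δt * β₂) • FY t := ⟨_, rfl⟩
  obtain ⟨GX, hGXdef⟩ : ∃ F : ℝ → EuclideanSpace ℝ (Fin d),
      F = fun t => -(fderiv ℝ (gradient V) (Y t) (FY t)) + (2 * δt * α₂) • FX t := ⟨_, rfl⟩
  have hYd' : ∀ t ∈ Icc (0:ℝ) δt, HasDerivAt Y (FY t) t := by
    intro t ht; rw [hFYdef]; exact hYd t ht
  have hXd' : ∀ t ∈ Icc (0:ℝ) δt, HasDerivAt X (FX t) t := by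
    intro t ht; rw [hFXdef]; exact hXd t ht
  have hFYd : ∀ t ∈ Icc (0:ℝ) δt, HasDerivAt FY (GY t) t := by
    intro t ht
    rw [hFYdef, hGYdef]
    have h1 : HasDerivAt (fun s => A (X s)) (A (FX t)) t :=
      A.hasFDerivAt.comp_hasDerivAt t (hXd' t ht)
    have h2 : HasDerivAt (fun s => (δt * β₂) • Y s) ((δt * β₂) • FY t) t :=
      (hYd' t ht).const_smul (δt * β₂)
    exact h1.add h2
  have hFXd : ∀ t ∈ Icc (0:ℝ) δt, HasDerivAt FX (GX t) t := by
    intro t ht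
    rw [hFXdef, hGXdef]
    have h1 : HasDerivAt (fun s => gradient V (Y s)) (fderiv ℝ (gradient V) (Y t) (FY t)) t :=
      (hgd (Y t)).hasFDerivAt.comp_hasDerivAt t (hYd' t ht)
    have h2 : HasDerivAt (fun s => (2 * δt * α₂) • X s) ((2 * δt * α₂) • FX t) t :=
      (hXd' t ht).const_smul (2 * δt * α₂)
    exact h1.neg.add h2
  -- basic bounds
  have hAop : ∀ v : EuclideanSpace ℝ (Fin d), ‖A v‖ ≤ C_M * ‖v‖ := fun v =>
    (A.le_opNorm v).trans (mul_le_mul_of_nonneg_right hA (norm_nonneg v))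
  have hFYb : ∀ t ∈ Icc (0:ℝ) δt, ‖FY t‖ ≤ SY := by
    intro t ht
    rw [hFYdef]
    have h1 : ‖A (X t)‖ ≤ C_M * R' :=
      (hAop _).trans (mul_le_mul_of_nonneg_left (hXR t ht) hCM0)
    have h2 : ‖(δt * β₂) • Y t‖ ≤ |β₂| * R' := by
      rw [norm_smul, Real.norm_eq_abs, abs_mul, abs_of_pos hδ]
      have h4 : δt * |β₂| ≤ 1 * |β₂| := mul_le_mul_of_nonneg_right hδ1 (abs_nonneg β₂)
      rw [one_mul] at h4
      exact mul_le_mul h4 (hYR t ht) (norm_nonneg _) (abs_nonneg β₂)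
    calc ‖A (X t) + (δt * β₂) • Y t‖ ≤ ‖A (X t)‖ + ‖(δt * β₂) • Y t‖ := norm_add_le _ _
      _ ≤ C_M * R' + |β₂| * R' := add_le_add h1 h2
      _ = SY := by rw [hSYdef]
  have hFXb : ∀ t ∈ Icc (0:ℝ) δt, ‖FX t‖ ≤ SX := by
    intro t ht
    rw [hFXdef]
    have h2 : ‖(2 * δt * α₂) • X t‖ ≤ 2 * |α₂| * R' := by
      rw [norm_smul, Real.norm_eq_abs, abs_mul, abs_of_pos (mul_pos two_pos hδ)]
      have h6 : δt * |α₂| ≤ 1 * |α₂| := mul_le_mul_of_nonneg_right hδ1 (abs_nonneg α₂)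
      rw [one_mul] at h6
      have h5 : 2 * δt * |α₂| ≤ 2 * |α₂| := by
        calc 2 * δt * |α₂| = 2 * (δt * |α₂|) := by ring
          _ ≤ 2 * |α₂| := mul_le_mul_of_nonneg_left h6 (by norm_num)
      exact mul_le_mul h5 (hXR t ht) (norm_nonneg _) (by positivity)
    calc ‖-gradient V (Y t) + (2 * δt * α₂) • X t‖
        ≤ ‖-gradient V (Y t)‖ + ‖(2 * δt * α₂) • X t‖ := norm_add_le _ _
      _ ≤ G₁ + 2 * |α₂| * R' := by rw [norm_neg]; exact add_le_add (hG₁ _) h2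
      _ = SX := by rw [hSXdef]
  have hmoveY : ∀ t ∈ Icc (0:ℝ) δt, ‖Y t - y‖ ≤ SY * t := by
    intro t ht
    have hsub : Icc (0:ℝ) t ⊆ Icc 0 δt := Icc_subset_Icc le_rfl ht.2
    have key := aux_poly Y FY t SY 0 ht.1 (fun s hs => hYd' s (hsub hs))
      (fun s hs => by simpa using hFYb s (hsub hs))
    rw [hY0] at key
    simpa using key
  have hmoveX : ∀ t ∈ Icc (0:ℝ) δt, ‖X t - x‖ ≤ SX * t := by
    intro t ht
    have hsub : Icc (0:ℝ) t ⊆ Icc 0 δt := Icc_subset_Icc le_rfl ht.2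
    have key := aux_poly X FX t SX 0 ht.1 (fun s hs => hXd' s (hsub hs))
      (fun s hs => by simpa using hFXb s (hsub hs))
    rw [hX0] at key
    simpa using key
  have hFXlip : ∀ t ∈ Icc (0:ℝ) δt, ‖FX t - FX 0‖ ≤ KX * t := by
    intro t ht
    have ht0 : 0 ≤ t := ht.1
    have e : FX t - FX 0 = -(gradient V (Y t) - gradient V (Y 0)) + (2*δt*α₂) • (X t - X 0) := by
      rw [hFXdef]; simp only [smul_sub]; abel
    rw [e]
    have h1 : ‖gradient V (Y t) - gradient V (Y 0)‖ ≤ (G₂ * SY) * t := by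
      calc ‖gradient V (Y t) - gradient V (Y 0)‖ ≤ G₂ * ‖Y t - Y 0‖ := hgradLip _ _
        _ ≤ G₂ * (SY * t) := by
            rw [hY0]; exact mul_le_mul_of_nonneg_left (hmoveY t ht) hG20
        _ = (G₂ * SY) * t := by ring
    have h2 : ‖(2*δt*α₂) • (X t - X 0)‖ ≤ (2 * |α₂| * SX) * t := by
      rw [norm_smul, Real.norm_eq_abs, abs_mul, abs_of_pos (mul_pos two_pos hδ), hX0]
      have h6 : δt * |α₂| ≤ 1 * |α₂| := mul_le_mul_of_nonneg_right hδ1 (abs_nonneg α₂)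
      rw [one_mul] at h6
      have h5 : 2 * δt * |α₂| ≤ 2 * |α₂| := by
        calc 2 * δt * |α₂| = 2 * (δt * |α₂|) := by ring
          _ ≤ 2 * |α₂| := mul_le_mul_of_nonneg_left h6 (by norm_num)
      calc 2 * δt * |α₂| * ‖X t - x‖ ≤ (2 * |α₂|) * (SX * t) :=
            mul_le_mul h5 (hmoveX t ht) (norm_nonneg _) (by positivity)
        _ = (2 * |α₂| * SX) * t := by ring
    calc ‖-(gradient V (Y t) - gradient V (Y 0)) + (2*δt*α₂) • (X t - X 0)‖
        ≤ ‖-(gradient V (Y t) - gradient V (Y 0))‖ + ‖(2*δt*α₂) • (X t - X 0)‖ := norm_add_le _ _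
      _ ≤ (G₂ * SY) * t + (2 * |α₂| * SX) * t := by rw [norm_neg]; exact add_le_add h1 h2
      _ = KX * t := by rw [hKXdef]; ring
  have hFYlip : ∀ t ∈ Icc (0:ℝ) δt, ‖FY t - FY 0‖ ≤ KY * t := by
    intro t ht
    have ht0 : 0 ≤ t := ht.1
    have e : FY t - FY 0 = A (X t - X 0) + (δt*β₂) • (Y t - Y 0) := by
      rw [hFYdef]; simp only [smul_sub, map_sub]; abel
    rw [e]
    have h1 : ‖A (X t - X 0)‖ ≤ (C_M * SX) * t := by
      calc ‖A (X t - X 0)‖ ≤ C_M * ‖X t - X 0‖ := hAop _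
        _ ≤ C_M * (SX * t) := by
            rw [hX0]; exact mul_le_mul_of_nonneg_left (hmoveX t ht) hCM0
        _ = (C_M * SX) * t := by ring
    have h2 : ‖(δt*β₂) • (Y t - Y 0)‖ ≤ (|β₂| * SY) * t := by
      rw [norm_smul, Real.norm_eq_abs, abs_mul, abs_of_pos hδ, hY0]
      have h4 : δt * |β₂| ≤ 1 * |β₂| := mul_le_mul_of_nonneg_right hδ1 (abs_nonneg β₂)
      rw [one_mul] at h4
      calc δt * |β₂| * ‖Y t - y‖ ≤ |β₂| * (SY * t) :=
            mul_le_mul h4 (hmoveY t ht) (norm_nonneg _) (abs_nonneg β₂)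
        _ = (|β₂| * SY) * t := by ring
    calc ‖A (X t - X 0) + (δt*β₂) • (Y t - Y 0)‖
        ≤ ‖A (X t - X 0)‖ + ‖(δt*β₂) • (Y t - Y 0)‖ := norm_add_le _ _
      _ ≤ (C_M * SX) * t + (|β₂| * SY) * t := add_le_add h1 h2
      _ = KY * t := by rw [hKYdef]; ring
  have hGYlip : ∀ t ∈ Icc (0:ℝ) δt, ‖GY t - GY 0‖ ≤ LY * t := by
    intro t ht
    have ht0 : 0 ≤ t := ht.1
    have e : GY t - GY 0 = A (FX t - FX 0) + (δt*β₂) • (FY t - FY 0) := by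
      rw [hGYdef]; simp only [smul_sub, map_sub]; abel
    rw [e]
    have h1 : ‖A (FX t - FX 0)‖ ≤ (C_M * KX) * t := by
      calc ‖A (FX t - FX 0)‖ ≤ C_M * ‖FX t - FX 0‖ := hAop _
        _ ≤ C_M * (KX * t) := mul_le_mul_of_nonneg_left (hFXlip t ht) hCM0
        _ = (C_M * KX) * t := by ring
    have h2 : ‖(δt*β₂) • (FY t - FY 0)‖ ≤ (|β₂| * KY) * t := by
      rw [norm_smul, Real.norm_eq_abs, abs_mul, abs_of_pos hδ]
      have h4 : δt * |β₂| ≤ 1 * |β₂| := mul_le_mul_of_nonneg_right hδ1 (abs_nonneg β₂)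
      rw [one_mul] at h4
      calc δt * |β₂| * ‖FY t - FY 0‖ ≤ |β₂| * (KY * t) :=
            mul_le_mul h4 (hFYlip t ht) (norm_nonneg _) (abs_nonneg β₂)
        _ = (|β₂| * KY) * t := by ring
    calc ‖A (FX t - FX 0) + (δt*β₂) • (FY t - FY 0)‖
        ≤ ‖A (FX t - FX 0)‖ + ‖(δt*β₂) • (FY t - FY 0)‖ := norm_add_le _ _
      _ ≤ (C_M * KX) * t + (|β₂| * KY) * t := add_le_add h1 h2
      _ = LY * t := by rw [hLYdef]; ring
  have hGXlip : ∀ t ∈ Icc (0:ℝ) δt, ‖GX t - GX 0‖ ≤ LX * t := by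
    intro t ht
    have ht0 : 0 ≤ t := ht.1
    have e : GX t - GX 0
        = -((fderiv ℝ (gradient V) (Y t) - fderiv ℝ (gradient V) (Y 0)) (FY t))
          - (fderiv ℝ (gradient V) (Y 0)) (FY t - FY 0) + (2*δt*α₂) • (FX t - FX 0) := by
      rw [hGXdef]
      simp only [smul_sub, map_sub, ContinuousLinearMap.sub_apply]
      abel
    rw [e]
    have h1 : ‖(fderiv ℝ (gradient V) (Y t) - fderiv ℝ (gradient V) (Y 0)) (FY t)‖
        ≤ (G₃ * SY * SY) * t := by
      calc ‖(fderiv ℝ (gradient V) (Y t) - fderiv ℝ (gradient V) (Y 0)) (FY t)‖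
          ≤ ‖fderiv ℝ (gradient V) (Y t) - fderiv ℝ (gradient V) (Y 0)‖ * ‖FY t‖ :=
            ContinuousLinearMap.le_opNorm _ _
        _ ≤ (G₃ * ‖Y t - Y 0‖) * SY := by
            apply mul_le_mul (hD2Lip _ _) (hFYb t ht) (norm_nonneg _)
            exact mul_nonneg hG30 (norm_nonneg _)
        _ ≤ (G₃ * (SY * t)) * SY := by
            apply mul_le_mul_of_nonneg_right _ hSY0
            rw [hY0]
            exact mul_le_mul_of_nonneg_left (hmoveY t ht) hG30
        _ = (G₃ * SY * SY) * t := by ring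
    have h2 : ‖(fderiv ℝ (gradient V) (Y 0)) (FY t - FY 0)‖ ≤ (G₂ * KY) * t := by
      calc ‖(fderiv ℝ (gradient V) (Y 0)) (FY t - FY 0)‖
          ≤ ‖fderiv ℝ (gradient V) (Y 0)‖ * ‖FY t - FY 0‖ := ContinuousLinearMap.le_opNorm _ _
        _ ≤ G₂ * (KY * t) := by
            apply mul_le_mul (hG₂ _) (hFYlip t ht) (norm_nonneg _) hG20
        _ = (G₂ * KY) * t := by ring
    have h3 : ‖(2*δt*α₂) • (FX t - FX 0)‖ ≤ (2 * |α₂| * KX) * t := by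
      rw [norm_smul, Real.norm_eq_abs, abs_mul, abs_of_pos (mul_pos two_pos hδ)]
      have h6 : δt * |α₂| ≤ 1 * |α₂| := mul_le_mul_of_nonneg_right hδ1 (abs_nonneg α₂)
      rw [one_mul] at h6
      have h5 : 2 * δt * |α₂| ≤ 2 * |α₂| := by
        calc 2 * δt * |α₂| = 2 * (δt * |α₂|) := by ring
          _ ≤ 2 * |α₂| := mul_le_mul_of_nonneg_left h6 (by norm_num)
      calc 2 * δt * |α₂| * ‖FX t - FX 0‖ ≤ (2 * |α₂|) * (KX * t) :=
            mul_le_mul h5 (hFXlip t ht) (norm_nonneg _) (by positivity)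
        _ = (2 * |α₂| * KX) * t := by ring
    calc ‖-((fderiv ℝ (gradient V) (Y t) - fderiv ℝ (gradient V) (Y 0)) (FY t))
          - (fderiv ℝ (gradient V) (Y 0)) (FY t - FY 0) + (2*δt*α₂) • (FX t - FX 0)‖
        ≤ ‖-((fderiv ℝ (gradient V) (Y t) - fderiv ℝ (gradient V) (Y 0)) (FY t))
          - (fderiv ℝ (gradient V) (Y 0)) (FY t - FY 0)‖ + ‖(2*δt*α₂) • (FX t - FX 0)‖ :=
          norm_add_le _ _
      _ ≤ ‖-((fderiv ℝ (gradient V) (Y t) - fderiv ℝ (gradient V) (Y 0)) (FY t))‖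
          + ‖(fderiv ℝ (gradient V) (Y 0)) (FY t - FY 0)‖ + ‖(2*δt*α₂) • (FX t - FX 0)‖ := by
          gcongr; exact norm_sub_le _ _
      _ ≤ (G₃ * SY * SY) * t + (G₂ * KY) * t + (2 * |α₂| * KX) * t := by
          rw [norm_neg]; exact add_le_add (add_le_add h1 h2) h3
      _ = LX * t := by rw [hLXdef]; ring
  -- Taylor expansions
  have tayY : ‖Y δt - y - δt • FY 0 - (δt^2/2) • GY 0‖ ≤ LY * δt^3/6 := by
    have key := aux_taylor2 Y FY GY δt LY hδ0 hYd' hFYd hGYlip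
    rw [hY0] at key
    exact key
  have tayX : ‖X δt - x - δt • FX 0 - (δt^2/2) • GX 0‖ ≤ LX * δt^3/6 := by
    have key := aux_taylor2 X FX GX δt LX hδ0 hXd' hFXd hGXlip
    rw [hX0] at key
    exact key
  -- pointwise bounds at the initial data
  have hAx : ‖A x‖ ≤ C_M * R := (hAop x).trans (mul_le_mul_of_nonneg_left hx hCM0)
  have hgy : ‖gradient V y‖ ≤ G₁ := hG₁ y
  have hAg : ‖A (gradient V y)‖ ≤ C_M * G₁ :=
    (hAop _).trans (mul_le_mul_of_nonneg_left hgy hCM0)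
  have hHy : ‖(fderiv ℝ (gradient V) y) y‖ ≤ G₂ * R :=
    ((fderiv ℝ (gradient V) y).le_opNorm y).trans (mul_le_mul (hG₂ y) hy (norm_nonneg y) hG20)
  have hHAx : ‖(fderiv ℝ (gradient V) y) (A x)‖ ≤ G₂ * (C_M * R) :=
    ((fderiv ℝ (gradient V) y).le_opNorm _).trans (mul_le_mul (hG₂ y) hAx (norm_nonneg _) hG20)
  have hHAg : ‖(fderiv ℝ (gradient V) y) (A (gradient V y))‖ ≤ G₂ * (C_M * G₁) :=
    ((fderiv ℝ (gradient V) y).le_opNorm _).trans (mul_le_mul (hG₂ y) hAg (norm_nonneg _) hG20)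
  have h3n : (0:ℝ) ≤ δt ^ 3 := h3pos.le
  constructor
  · -- the Y component
    have algY : y + δt • FY 0 + (δt^2/2) • GY 0
        - ((1 + β₂ * δt ^ 2 + βt) • y
          + δt • A ((1 + α₂ * δt ^ 2 + αt) • x - (δt / 2) • gradient V y))
        = (δt^3*β₂/2) • A x + (δt^4*β₂^2/2) • y + (-βt) • y + (-(δt*αt)) • A x := by
      simp only [hGYdef, hFYdef, hFXdef, hY0, hX0, map_add, map_sub, map_smul, map_neg,
        smul_add, smul_sub, smul_neg, neg_smul, smul_smul]
      module
    have s1 : |δt^3*β₂/2| ≤ (|β₂|/2) * δt^3 := by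
      rw [abs_div, abs_mul, abs_of_pos h3pos, abs_two]
      exact le_of_eq (by ring)
    have s2 : |δt^4*β₂^2/2| ≤ (β₂^2/2) * δt^3 := by
      rw [abs_of_nonneg (by positivity : (0:ℝ) ≤ δt^4*β₂^2/2)]
      calc δt^4*β₂^2/2 = (β₂^2/2) * δt^4 := by ring
        _ ≤ (β₂^2/2) * δt^3 := mul_le_mul_of_nonneg_left hδ43 (by positivity)
    have s3 : |(-βt)| ≤ C_β * δt^3 := by rw [abs_neg]; exact hβt
    have s4 : |(-(δt*αt))| ≤ C_α * δt^3 := by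
      rw [abs_neg, abs_mul, abs_of_pos hδ]
      calc δt * |αt| ≤ δt * (C_α * δt^3) := mul_le_mul_of_nonneg_left hαt hδ0
        _ = C_α * δt^4 := by ring
        _ ≤ C_α * δt^3 := mul_le_mul_of_nonneg_left hδ43 hCα0
    have t1 := aux_smul_bound (δt^3*β₂/2) (A x) _ _ s1 hAx
    have t2 := aux_smul_bound (δt^4*β₂^2/2) y _ _ s2 hy
    have t3 := aux_smul_bound (-βt) y _ _ s3 hy
    have t4 := aux_smul_bound (-(δt*αt)) (A x) _ _ s4 hAx
    have hcombo : ‖(δt^3*β₂/2) • A x + (δt^4*β₂^2/2) • y + (-βt) • y + (-(δt*αt)) • A x‖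
        ≤ EY * δt^3 := by
      calc ‖(δt^3*β₂/2) • A x + (δt^4*β₂^2/2) • y + (-βt) • y + (-(δt*αt)) • A x‖
          ≤ ‖(δt^3*β₂/2) • A x + (δt^4*β₂^2/2) • y + (-βt) • y‖ + ‖(-(δt*αt)) • A x‖ :=
            norm_add_le _ _
        _ ≤ (‖(δt^3*β₂/2) • A x + (δt^4*β₂^2/2) • y‖ + ‖(-βt) • y‖) + ‖(-(δt*αt)) • A x‖ :=
            add_le_add (norm_add_le _ _) le_rfl
        _ ≤ ((‖(δt^3*β₂/2) • A x‖ + ‖(δt^4*β₂^2/2) • y‖) + ‖(-βt) • y‖) + ‖(-(δt*αt)) • A x‖ :=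
            add_le_add (add_le_add (norm_add_le _ _) le_rfl) le_rfl
        _ ≤ (((|β₂|/2) * δt^3 * (C_M*R) + (β₂^2/2) * δt^3 * R) + C_β * δt^3 * R)
              + C_α * δt^3 * (C_M*R) :=
            add_le_add (add_le_add (add_le_add t1 t2) t3) t4
        _ = EY * δt^3 := by rw [hEYdef]; ring
    have decompY : Y δt - ((1 + β₂ * δt ^ 2 + βt) • y
          + δt • A ((1 + α₂ * δt ^ 2 + αt) • x - (δt / 2) • gradient V y))
        = (Y δt - y - δt • FY 0 - (δt^2/2) • GY 0)
          + (y + δt • FY 0 + (δt^2/2) • GY 0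
            - ((1 + β₂ * δt ^ 2 + βt) • y
              + δt • A ((1 + α₂ * δt ^ 2 + αt) • x - (δt / 2) • gradient V y))) := by
      abel
    calc ‖Y δt - ((1 + β₂ * δt ^ 2 + βt) • y
          + δt • A ((1 + α₂ * δt ^ 2 + αt) • x - (δt / 2) • gradient V y))‖
        = ‖(Y δt - y - δt • FY 0 - (δt^2/2) • GY 0)
          + (y + δt • FY 0 + (δt^2/2) • GY 0
            - ((1 + β₂ * δt ^ 2 + βt) • y
              + δt • A ((1 + α₂ * δt ^ 2 + αt) • x - (δt / 2) • gradient V y)))‖ := by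
          rw [decompY]
      _ ≤ ‖Y δt - y - δt • FY 0 - (δt^2/2) • GY 0‖
          + ‖y + δt • FY 0 + (δt^2/2) • GY 0
            - ((1 + β₂ * δt ^ 2 + βt) • y
              + δt • A ((1 + α₂ * δt ^ 2 + αt) • x - (δt / 2) • gradient V y))‖ :=
          norm_add_le _ _
      _ ≤ LY * δt^3/6 + EY * δt^3 := by
          refine add_le_add tayY ?_
          rw [algY]; exact hcombo
      _ ≤ (LY + EY + LX + EX) * δt^3 := by
          have e1 : LY * δt^3/6 ≤ LY * δt^3 := by
            have h := mul_nonneg hLY0 h3n; linarith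
          have e2 : 0 ≤ LX * δt^3 := mul_nonneg hLX0 h3n
          have e3 : 0 ≤ EX * δt^3 := mul_nonneg hEX0 h3n
          calc LY * δt^3/6 + EY * δt^3
              ≤ LY * δt^3 + EY * δt^3 + (LX * δt^3 + EX * δt^3) := by linarith
            _ = (LY + EY + LX + EX) * δt^3 := by ring
  · -- the X component
    have hyp_y : ‖((1 + β₂ * δt ^ 2 + βt) • y
          + δt • A ((1 + α₂ * δt ^ 2 + αt) • x - (δt / 2) • gradient V y)) - y‖ ≤ D1 * δt := by
      have e : ((1 + β₂ * δt ^ 2 + βt) • y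
          + δt • A ((1 + α₂ * δt ^ 2 + αt) • x - (δt / 2) • gradient V y)) - y
          = (β₂ * δt ^ 2 + βt) • y
            + δt • A ((1 + α₂ * δt ^ 2 + αt) • x - (δt / 2) • gradient V y) := by
        module
      rw [e]
      have b1 : |β₂ * δt ^ 2 + βt| ≤ (|β₂| + C_β) * δt := by
        calc |β₂ * δt ^ 2 + βt| ≤ |β₂ * δt ^ 2| + |βt| := abs_add_le _ _
          _ = |β₂| * δt ^ 2 + |βt| := by rw [abs_mul, abs_of_pos (pow_pos hδ 2)]
          _ ≤ |β₂| * δt + C_β * δt := by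
              refine add_le_add (mul_le_mul_of_nonneg_left hδ21 (abs_nonneg β₂)) ?_
              calc |βt| ≤ C_β * δt ^ 3 := hβt
                _ ≤ C_β * δt := mul_le_mul_of_nonneg_left hδ31 hCβ0
          _ = (|β₂| + C_β) * δt := by ring
      have hw : ‖(1 + α₂ * δt ^ 2 + αt) • x - (δt / 2) • gradient V y‖
          ≤ (1 + |α₂| + C_α) * R + G₁ / 2 := by
        have b2 : |1 + α₂ * δt ^ 2 + αt| ≤ 1 + |α₂| + C_α := by
          calc |1 + α₂ * δt ^ 2 + αt| ≤ |1 + α₂ * δt ^ 2| + |αt| := abs_add_le _ _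
            _ ≤ 1 + |α₂ * δt ^ 2| + |αt| := by
                refine add_le_add ((abs_add_le _ _).trans ?_) le_rfl
                rw [abs_one]
            _ = 1 + |α₂| * δt ^ 2 + |αt| := by rw [abs_mul, abs_of_pos (pow_pos hδ 2)]
            _ ≤ 1 + |α₂| * 1 + C_α * δt ^ 3 := by
                refine add_le_add (add_le_add le_rfl ?_) hαt
                exact mul_le_mul_of_nonneg_left (hδ21.trans hδ1) (abs_nonneg α₂)
            _ ≤ 1 + |α₂| + C_α := by
                have h1 : C_α * δt ^ 3 ≤ C_α * 1 := mul_le_mul_of_nonneg_left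
                  (hδ31.trans hδ1) hCα0
                have h2 := mul_one C_α
                have h3 := mul_one |α₂|
                linarith
        have b3 : |δt / 2| ≤ 1 / 2 := by
          rw [abs_div, abs_of_pos hδ, abs_two]
          linarith
        calc ‖(1 + α₂ * δt ^ 2 + αt) • x - (δt / 2) • gradient V y‖
            ≤ ‖(1 + α₂ * δt ^ 2 + αt) • x‖ + ‖(δt / 2) • gradient V y‖ := norm_sub_le _ _
          _ ≤ (1 + |α₂| + C_α) * R + (1/2) * G₁ :=
              add_le_add (aux_smul_bound _ _ _ _ b2 hx) (aux_smul_bound _ _ _ _ b3 hgy)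
          _ = (1 + |α₂| + C_α) * R + G₁ / 2 := by ring
      calc ‖(β₂ * δt ^ 2 + βt) • y
            + δt • A ((1 + α₂ * δt ^ 2 + αt) • x - (δt / 2) • gradient V y)‖
          ≤ ‖(β₂ * δt ^ 2 + βt) • y‖
            + ‖δt • A ((1 + α₂ * δt ^ 2 + αt) • x - (δt / 2) • gradient V y)‖ := norm_add_le _ _
        _ ≤ ((|β₂| + C_β) * δt) * R
            + δt * (C_M * ((1 + |α₂| + C_α) * R + G₁ / 2)) := by
            refine add_le_add (aux_smul_bound _ _ _ _ b1 hy) ?_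
            rw [norm_smul, Real.norm_eq_abs, abs_of_pos hδ]
            refine mul_le_mul_of_nonneg_left ((hAop _).trans ?_) hδ0
            exact mul_le_mul_of_nonneg_left hw hCM0
        _ = D1 * δt := by rw [hD1def]; ring
    have hr1 : ‖gradient V ((1 + β₂ * δt ^ 2 + βt) • y
            + δt • A ((1 + α₂ * δt ^ 2 + αt) • x - (δt / 2) • gradient V y))
          - gradient V y
          - (fderiv ℝ (gradient V) y) (((1 + β₂ * δt ^ 2 + βt) • y
            + δt • A ((1 + α₂ * δt ^ 2 + αt) • x - (δt / 2) • gradient V y)) - y)‖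
        ≤ G₃ * (D1 * δt) * (D1 * δt) := by
      refine (hgradTaylor y _).trans ?_
      have hmm : ‖((1 + β₂ * δt ^ 2 + βt) • y
          + δt • A ((1 + α₂ * δt ^ 2 + αt) • x - (δt / 2) • gradient V y)) - y‖
          * ‖((1 + β₂ * δt ^ 2 + βt) • y
          + δt • A ((1 + α₂ * δt ^ 2 + αt) • x - (δt / 2) • gradient V y)) - y‖
          ≤ (D1 * δt) * (D1 * δt) :=
        mul_le_mul hyp_y hyp_y (norm_nonneg _) (mul_nonneg hD10 hδ0)
      calc G₃ * ‖_ - y‖ * ‖_ - y‖ = G₃ * (‖_ - y‖ * ‖_ - y‖) := by ring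
        _ ≤ G₃ * ((D1 * δt) * (D1 * δt)) := mul_le_mul_of_nonneg_left hmm hG30
        _ = G₃ * (D1 * δt) * (D1 * δt) := by ring
    have εb : |α₂ * δt ^ 2 + αt| ≤ (|α₂| + C_α) * δt ^ 2 := by
      calc |α₂ * δt ^ 2 + αt| ≤ |α₂ * δt ^ 2| + |αt| := abs_add_le _ _
        _ = |α₂| * δt ^ 2 + |αt| := by rw [abs_mul, abs_of_pos (pow_pos hδ 2)]
        _ ≤ |α₂| * δt ^ 2 + C_α * δt ^ 2 := by
            refine add_le_add le_rfl (hαt.trans ?_)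
            exact mul_le_mul_of_nonneg_left hδ32 hCα0
        _ = (|α₂| + C_α) * δt ^ 2 := by ring
    have εsq : (α₂ * δt ^ 2 + αt)^2 ≤ (|α₂| + C_α)^2 * δt ^ 3 := by
      calc (α₂ * δt ^ 2 + αt)^2 = |α₂ * δt ^ 2 + αt|^2 := (sq_abs _).symm
        _ ≤ ((|α₂| + C_α) * δt ^ 2)^2 := pow_le_pow_left₀ (abs_nonneg _) εb 2
        _ = (|α₂| + C_α)^2 * δt ^ 4 := by ring
        _ ≤ (|α₂| + C_α)^2 * δt ^ 3 := mul_le_mul_of_nonneg_left hδ43 (sq_nonneg _)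
    have u1 : |(-(2*αt + (α₂*δt^2+αt)^2 - 2*δt^4*α₂^2))|
        ≤ (2*C_α + (|α₂|+C_α)^2 + 2*α₂^2) * δt^3 := by
      rw [abs_neg]
      have c1 : |2*αt + (α₂*δt^2+αt)^2 - 2*δt^4*α₂^2|
          ≤ |2*αt| + |(α₂*δt^2+αt)^2| + |2*δt^4*α₂^2| := by
        calc |2*αt + (α₂*δt^2+αt)^2 - 2*δt^4*α₂^2|
            ≤ |2*αt + (α₂*δt^2+αt)^2| + |2*δt^4*α₂^2| := abs_sub _ _
          _ ≤ |2*αt| + |(α₂*δt^2+αt)^2| + |2*δt^4*α₂^2| :=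
              add_le_add (abs_add_le _ _) le_rfl
      have c2 : |2*αt| ≤ 2*C_α*δt^3 := by
        rw [abs_mul, abs_two]
        calc 2 * |αt| ≤ 2 * (C_α * δt^3) := mul_le_mul_of_nonneg_left hαt (by norm_num)
          _ = 2*C_α*δt^3 := by ring
      have c3 : |(α₂*δt^2+αt)^2| ≤ (|α₂|+C_α)^2*δt^3 := by
        rw [abs_of_nonneg (sq_nonneg _)]; exact εsq
      have c4 : |2*δt^4*α₂^2| ≤ 2*α₂^2*δt^3 := by
        rw [abs_of_nonneg (by positivity : (0:ℝ) ≤ 2*δt^4*α₂^2)]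
        calc 2*δt^4*α₂^2 = (2*α₂^2) * δt^4 := by ring
          _ ≤ (2*α₂^2) * δt^3 := mul_le_mul_of_nonneg_left hδ43 (by positivity)
          _ = 2*α₂^2*δt^3 := by ring
      calc |2*αt + (α₂*δt^2+αt)^2 - 2*δt^4*α₂^2|
          ≤ |2*αt| + |(α₂*δt^2+αt)^2| + |2*δt^4*α₂^2| := c1
        _ ≤ 2*C_α*δt^3 + (|α₂|+C_α)^2*δt^3 + 2*α₂^2*δt^3 := add_le_add (add_le_add c2 c3) c4
        _ = (2*C_α + (|α₂|+C_α)^2 + 2*α₂^2) * δt^3 := by ring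
    have u2 : |(-(α₂*δt^3/2 - δt*αt/2))| ≤ (|α₂|/2 + C_α/2) * δt^3 := by
      rw [abs_neg]
      calc |α₂*δt^3/2 - δt*αt/2| ≤ |α₂*δt^3/2| + |δt*αt/2| := abs_sub _ _
        _ ≤ (|α₂|/2)*δt^3 + (C_α/2)*δt^3 := by
            refine add_le_add ?_ ?_
            · rw [abs_div, abs_mul, abs_of_pos h3pos, abs_two]
              exact le_of_eq (by ring)
            · rw [abs_div, abs_mul, abs_of_pos hδ, abs_two]
              calc δt * |αt| / 2 ≤ δt * (C_α * δt^3) / 2 := by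
                    have := mul_le_mul_of_nonneg_left hαt hδ0; linarith
                _ = (C_α/2) * δt^4 := by ring
                _ ≤ (C_α/2) * δt^3 := mul_le_mul_of_nonneg_left hδ43 (by linarith)
        _ = (|α₂|/2 + C_α/2) * δt^3 := by ring
    have u3 : |δt/2*βt| ≤ (C_β/2) * δt^3 := by
      rw [abs_mul, abs_div, abs_of_pos hδ, abs_two]
      calc δt / 2 * |βt| ≤ δt / 2 * (C_β * δt^3) := by
            have h1 : 0 ≤ δt / 2 := by linarith
            exact mul_le_mul_of_nonneg_left hβt h1
        _ = (C_β/2) * δt^4 := by ring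
        _ ≤ (C_β/2) * δt^3 := mul_le_mul_of_nonneg_left hδ43 (by linarith)
    have u4 : |δt^2/2*(α₂*δt^2+αt)| ≤ ((|α₂|+C_α)/2) * δt^3 := by
      rw [abs_mul, abs_div, abs_of_pos (pow_pos hδ 2), abs_two]
      calc δt^2/2 * |α₂*δt^2+αt| ≤ δt^2/2 * ((|α₂| + C_α) * δt ^ 2) := by
            have h1 : (0:ℝ) ≤ δt^2/2 := by positivity
            exact mul_le_mul_of_nonneg_left εb h1
        _ = ((|α₂|+C_α)/2) * δt^4 := by ring
        _ ≤ ((|α₂|+C_α)/2) * δt^3 := mul_le_mul_of_nonneg_left hδ43 (by positivity)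
    have u5 : |(-(δt^3/4))| ≤ (1/4) * δt^3 := by
      rw [abs_neg, abs_of_pos (by positivity : (0:ℝ) < δt^3/4)]
      exact le_of_eq (by ring)
    have algX : x + δt • FX 0 + (δt^2/2) • GX 0
        - ((1 + α₂ * δt ^ 2 + αt) ^ 2 • x
          - (δt / 2) • ((1 + α₂ * δt ^ 2 + αt) • gradient V y
            + gradient V ((1 + β₂ * δt ^ 2 + βt) • y
          + δt • A ((1 + α₂ * δt ^ 2 + αt) • x - (δt / 2) • gradient V y))))
        = (-(2*αt + (α₂*δt^2+αt)^2 - 2*δt^4*α₂^2)) • x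
          + (-(α₂*δt^3/2 - δt*αt/2)) • gradient V y
          + (δt/2*βt) • (fderiv ℝ (gradient V) y) y
          + (δt^2/2*(α₂*δt^2+αt)) • (fderiv ℝ (gradient V) y) (A x)
          + (-(δt^3/4)) • (fderiv ℝ (gradient V) y) (A (gradient V y))
          + (δt/2) • (gradient V ((1 + β₂ * δt ^ 2 + βt) • y
          + δt • A ((1 + α₂ * δt ^ 2 + αt) • x - (δt / 2) • gradient V y))
              - gradient V y
              - (fderiv ℝ (gradient V) y) (((1 + β₂ * δt ^ 2 + βt) • y
          + δt • A ((1 + α₂ * δt ^ 2 + αt) • x - (δt / 2) • gradient V y)) - y)) := by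
      simp only [hGXdef, hFXdef, hFYdef, hY0, hX0, map_add, map_sub, map_smul, map_neg,
        smul_add, smul_sub, smul_neg, neg_smul, smul_smul]
      module
    have t1 := aux_smul_bound (-(2*αt + (α₂*δt^2+αt)^2 - 2*δt^4*α₂^2)) x _ _ u1 hx
    have t2 := aux_smul_bound (-(α₂*δt^3/2 - δt*αt/2)) (gradient V y) _ _ u2 hgy
    have t3 := aux_smul_bound (δt/2*βt) ((fderiv ℝ (gradient V) y) y) _ _ u3 hHy
    have t4 := aux_smul_bound (δt^2/2*(α₂*δt^2+αt)) ((fderiv ℝ (gradient V) y) (A x)) _ _ u4 hHAx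
    have t5 := aux_smul_bound (-(δt^3/4)) ((fderiv ℝ (gradient V) y) (A (gradient V y))) _ _ u5 hHAg
    have t6 : ‖(δt/2) • (gradient V ((1 + β₂ * δt ^ 2 + βt) • y
          + δt • A ((1 + α₂ * δt ^ 2 + αt) • x - (δt / 2) • gradient V y))
          - gradient V y
          - (fderiv ℝ (gradient V) y) (((1 + β₂ * δt ^ 2 + βt) • y
          + δt • A ((1 + α₂ * δt ^ 2 + αt) • x - (δt / 2) • gradient V y)) - y))‖
        ≤ ((G₃ * D1^2 / 2) * 1) * δt^3 := by
      rw [norm_smul, Real.norm_eq_abs, abs_div, abs_of_pos hδ, abs_two]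
      calc δt / 2 * ‖gradient V ((1 + β₂ * δt ^ 2 + βt) • y
          + δt • A ((1 + α₂ * δt ^ 2 + αt) • x - (δt / 2) • gradient V y))
          - gradient V y
          - (fderiv ℝ (gradient V) y) (((1 + β₂ * δt ^ 2 + βt) • y
          + δt • A ((1 + α₂ * δt ^ 2 + αt) • x - (δt / 2) • gradient V y)) - y)‖
          ≤ δt / 2 * (G₃ * (D1 * δt) * (D1 * δt)) := by
            have h1 : (0:ℝ) ≤ δt / 2 := by linarith
            exact mul_le_mul_of_nonneg_left hr1 h1
        _ = ((G₃ * D1^2 / 2) * 1) * δt^3 := by ring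
    have hcombo : ‖(-(2*αt + (α₂*δt^2+αt)^2 - 2*δt^4*α₂^2)) • x
          + (-(α₂*δt^3/2 - δt*αt/2)) • gradient V y
          + (δt/2*βt) • (fderiv ℝ (gradient V) y) y
          + (δt^2/2*(α₂*δt^2+αt)) • (fderiv ℝ (gradient V) y) (A x)
          + (-(δt^3/4)) • (fderiv ℝ (gradient V) y) (A (gradient V y))
          + (δt/2) • (gradient V ((1 + β₂ * δt ^ 2 + βt) • y
          + δt • A ((1 + α₂ * δt ^ 2 + αt) • x - (δt / 2) • gradient V y))
              - gradient V y
              - (fderiv ℝ (gradient V) y) (((1 + β₂ * δt ^ 2 + βt) • y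
          + δt • A ((1 + α₂ * δt ^ 2 + αt) • x - (δt / 2) • gradient V y)) - y))‖
        ≤ EX * δt^3 := by
      calc ‖_ + _ + _ + _ + _ + _‖ ≤ ‖_ + _ + _ + _ + _‖ + ‖_‖ := norm_add_le _ _
        _ ≤ (‖_ + _ + _ + _‖ + ‖_‖) + ‖_‖ := add_le_add (norm_add_le _ _) le_rfl
        _ ≤ ((‖_ + _ + _‖ + ‖_‖) + ‖_‖) + ‖_‖ :=
            add_le_add (add_le_add (norm_add_le _ _) le_rfl) le_rfl
        _ ≤ (((‖_ + _‖ + ‖_‖) + ‖_‖) + ‖_‖) + ‖_‖ :=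
            add_le_add (add_le_add (add_le_add (norm_add_le _ _) le_rfl) le_rfl) le_rfl
        _ ≤ ((((‖_‖ + ‖_‖) + ‖_‖) + ‖_‖) + ‖_‖) + ‖_‖ :=
            add_le_add (add_le_add (add_le_add
              (add_le_add (norm_add_le _ _) le_rfl) le_rfl) le_rfl) le_rfl
        _ ≤ (((((2*C_α + (|α₂|+C_α)^2 + 2*α₂^2) * δt^3 * R
              + (|α₂|/2 + C_α/2) * δt^3 * G₁)
              + (C_β/2) * δt^3 * (G₂ * R))
              + ((|α₂|+C_α)/2) * δt^3 * (G₂ * (C_M * R)))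
              + (1/4) * δt^3 * (G₂ * (C_M * G₁)))
              + ((G₃ * D1^2 / 2) * 1) * δt^3 :=
            add_le_add (add_le_add (add_le_add (add_le_add (add_le_add t1 t2) t3) t4) t5) t6
        _ = EX * δt^3 := by rw [hEXdef]; ring
    have decompX : X δt - ((1 + α₂ * δt ^ 2 + αt) ^ 2 • x
          - (δt / 2) • ((1 + α₂ * δt ^ 2 + αt) • gradient V y
            + gradient V ((1 + β₂ * δt ^ 2 + βt) • y
          + δt • A ((1 + α₂ * δt ^ 2 + αt) • x - (δt / 2) • gradient V y))))
        = (X δt - x - δt • FX 0 - (δt^2/2) • GX 0)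
          + (x + δt • FX 0 + (δt^2/2) • GX 0
            - ((1 + α₂ * δt ^ 2 + αt) ^ 2 • x
              - (δt / 2) • ((1 + α₂ * δt ^ 2 + αt) • gradient V y
                + gradient V ((1 + β₂ * δt ^ 2 + βt) • y
          + δt • A ((1 + α₂ * δt ^ 2 + αt) • x - (δt / 2) • gradient V y))))) := by
      abel
    calc ‖X δt - ((1 + α₂ * δt ^ 2 + αt) ^ 2 • x
          - (δt / 2) • ((1 + α₂ * δt ^ 2 + αt) • gradient V y
            + gradient V ((1 + β₂ * δt ^ 2 + βt) • y
          + δt • A ((1 + α₂ * δt ^ 2 + αt) • x - (δt / 2) • gradient V y))))‖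
        = ‖(X δt - x - δt • FX 0 - (δt^2/2) • GX 0)
          + (x + δt • FX 0 + (δt^2/2) • GX 0
            - ((1 + α₂ * δt ^ 2 + αt) ^ 2 • x
              - (δt / 2) • ((1 + α₂ * δt ^ 2 + αt) • gradient V y
                + gradient V ((1 + β₂ * δt ^ 2 + βt) • y
          + δt • A ((1 + α₂ * δt ^ 2 + αt) • x - (δt / 2) • gradient V y)))))‖ := by rw [decompX]
      _ ≤ ‖X δt - x - δt • FX 0 - (δt^2/2) • GX 0‖
          + ‖x + δt • FX 0 + (δt^2/2) • GX 0
            - ((1 + α₂ * δt ^ 2 + αt) ^ 2 • x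
              - (δt / 2) • ((1 + α₂ * δt ^ 2 + αt) • gradient V y
                + gradient V ((1 + β₂ * δt ^ 2 + βt) • y
          + δt • A ((1 + α₂ * δt ^ 2 + αt) • x - (δt / 2) • gradient V y))))‖ := norm_add_le _ _
      _ ≤ LX * δt^3/6 + EX * δt^3 := by
          refine add_le_add tayX ?_
          rw [algX]; exact hcombo
      _ ≤ (LY + EY + LX + EX) * δt^3 := by
          have e1 : LX * δt^3/6 ≤ LX * δt^3 := by
            have h := mul_nonneg hLX0 h3n; linarith
          have e2 : 0 ≤ LY * δt^3 := mul_nonneg hLY0 h3n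
          have e3 : 0 ≤ EY * δt^3 := mul_nonneg hEY0 h3n
          calc LX * δt^3/6 + EX * δt^3
              ≤ LX * δt^3 + EX * δt^3 + (LY * δt^3 + EY * δt^3) := by linarith
            _ = (LY + EY + LX + EX) * δt^3 := by ring
end

section
/- Work in ℝ^d with A : ℝ^d → ℝ^d continuous linear, ‖A‖ ≤ C_M, and V : ℝ^d → ℝ three times continuously differentiable with ‖∇V(z)‖ ≤ G₁, ‖D²V(z)‖ ≤ G₂ and ‖D³V(z)‖ ≤ G₃ for all z ∈ ℝ^d. Let δt > 0, t₀ ∈ ℝ, and let y, x : [t₀, t₀ + δt] → ℝ^d be differentiable with y'(t) = A·x(t) and x'(t) = −∇V(y(t)) on [t₀, t₀ + δt], and suppose ‖x(t)‖ ≤ R for all t ∈ [t₀, t₀ + δt]. Then ‖y(t₀ + δt) − y(t₀) − δt·A·x(t₀) + (δt²/2)·A(∇V(y(t₀))) + (δt³/6)·A(D²V(y(t₀))(A·x(t₀)))‖ ≤ (C_M·(C_M²·G₃·R² + C_M·G₁·G₂)/24)·δt⁴. -/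
open Set

private lemma grow_step {E : Type*} [NormedAddCommGroup E] [NormedSpace ℝ E]
    {f f' : ℝ → E} {a b : ℝ} {B B' : ℝ → ℝ}
    (hderiv : ∀ t ∈ Set.Icc a b, HasDerivAt f (f' t) t)
    (hB : ∀ t, HasDerivAt B (B' t) t)
    (ha : ‖f a‖ ≤ B a)
    (hbound : ∀ t ∈ Set.Icc a b, ‖f' t‖ ≤ B' t) :
    ∀ t ∈ Set.Icc a b, ‖f t‖ ≤ B t := by
  intro t ht
  exact image_norm_le_of_norm_deriv_right_le_deriv_boundary
    (fun s hs => (hderiv s hs).continuousAt.continuousWithinAt)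
    (fun s hs => ((hderiv s (Ico_subset_Icc_self hs)).hasDerivWithinAt)) ha hB
    (fun s hs => hbound s (Ico_subset_Icc_self hs)) ht

private lemma hasDerivAt_poly (K c : ℝ) (n : ℕ) (t : ℝ) :
    HasDerivAt (fun s => K * (s - c) ^ (n + 1) / (n + 1).factorial)
      (K * (t - c) ^ n / n.factorial) t := by
  have h : HasDerivAt (fun s : ℝ => (s - c) ^ (n + 1)) ((n + 1) * (t - c) ^ n) t := by
    simpa using ((hasDerivAt_id t).sub_const c).fun_pow (n + 1)
  have h2 := (h.const_mul K).div_const ((n + 1).factorial : ℝ)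
  refine h2.congr_deriv ?_
  have hfac : ((n + 1).factorial : ℝ) = (n + 1) * n.factorial := by
    push_cast [Nat.factorial_succ]; ring
  have hpos : (n.factorial : ℝ) ≠ 0 := by positivity
  have hpos2 : ((n:ℝ) + 1) ≠ 0 := by positivity
  rw [hfac]
  field_simp
/-- Fourth-order Taylor expansion of the exact position solution of the Hamiltonian
system `y' = A·x`, `x' = −∇V(y)` with explicit remainder bound:
`‖y(t₀+δt) − y(t₀) − δt·A·x(t₀) + (δt²/2)·A(∇V(y(t₀))) + (δt³/6)·A(D²V(y(t₀))(A·x(t₀)))‖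
  ≤ (C_M·(C_M²·G₃·R² + C_M·G₁·G₂)/24)·δt⁴`. -/
theorem stmt10
    (d : ℕ) (hd : 1 ≤ d)
    (A : EuclideanSpace ℝ (Fin d) →L[ℝ] EuclideanSpace ℝ (Fin d))
    (C_M : ℝ) (hA : ‖A‖ ≤ C_M)
    (V : EuclideanSpace ℝ (Fin d) → ℝ) (hV : ContDiff ℝ 3 V)
    (G₁ G₂ G₃ : ℝ)
    (hG₁ : ∀ z, ‖gradient V z‖ ≤ G₁)
    (hG₂ : ∀ z, ‖fderiv ℝ (gradient V) z‖ ≤ G₂)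
    (hG₃ : ∀ z, ‖fderiv ℝ (fderiv ℝ (gradient V)) z‖ ≤ G₃)
    (R : ℝ) (δt t₀ : ℝ) (hδt : 0 < δt)
    (y x : ℝ → EuclideanSpace ℝ (Fin d))
    (hy : ∀ t ∈ Set.Icc t₀ (t₀ + δt), HasDerivAt y (A (x t)) t)
    (hx : ∀ t ∈ Set.Icc t₀ (t₀ + δt), HasDerivAt x (-gradient V (y t)) t)
    (hxR : ∀ t ∈ Set.Icc t₀ (t₀ + δt), ‖x t‖ ≤ R) :
    ‖y (t₀ + δt) - y t₀ - δt • A (x t₀) + (δt ^ 2 / 2) • A (gradient V (y t₀))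
        + (δt ^ 3 / 6) • A (fderiv ℝ (gradient V) (y t₀) (A (x t₀)))‖
      ≤ (C_M * (C_M ^ 2 * G₃ * R ^ 2 + C_M * G₁ * G₂) / 24) * δt ^ 4 := by
  have hCM : (0:ℝ) ≤ C_M := le_trans (norm_nonneg _) hA
  have ht₀mem : t₀ ∈ Set.Icc t₀ (t₀ + δt) := ⟨le_refl _, by linarith⟩
  -- regularity of the gradient
  have hgradC : ContDiff ℝ 2 (gradient V) := by
    have heq : gradient V = fun z => (InnerProductSpace.toDual ℝ _).symm (fderiv ℝ V z) := rfl
    rw [heq]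
    exact (InnerProductSpace.toDual ℝ _).symm.contDiff.comp (hV.fderiv_right (by norm_num))
  have h1 : Differentiable ℝ (gradient V) := hgradC.differentiable (by norm_num)
  have h2 : Differentiable ℝ (fderiv ℝ (gradient V)) :=
    (hgradC.fderiv_right (m := 1) (by norm_num)).differentiable (by norm_num)
  set K : ℝ := C_M * (C_M ^ 2 * G₃ * R ^ 2 + C_M * G₁ * G₂) with hK
  set J : Set ℝ := Set.Icc t₀ (t₀ + δt) with hJdef
  -- derivative chains
  have hgy : ∀ t ∈ J, HasDerivAt (fun s => gradient V (y s))
      (fderiv ℝ (gradient V) (y t) (A (x t))) t :=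
    fun t ht => (h1 (y t)).hasFDerivAt.comp_hasDerivAt t (hy t ht)
  have hD2y : ∀ t ∈ J, HasDerivAt (fun s => fderiv ℝ (gradient V) (y s))
      (fderiv ℝ (fderiv ℝ (gradient V)) (y t) (A (x t))) t :=
    fun t ht => (h2 (y t)).hasFDerivAt.comp_hasDerivAt t (hy t ht)
  have hAx : ∀ t ∈ J, HasDerivAt (fun s => A (x s)) (A (-gradient V (y t))) t :=
    fun t ht => A.hasFDerivAt.comp_hasDerivAt t (hx t ht)
  -- the four remainder functions
  set g₃ : ℝ → EuclideanSpace ℝ (Fin d) := fun t =>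
    A (fderiv ℝ (gradient V) (y t₀) (A (x t₀))) - A (fderiv ℝ (gradient V) (y t) (A (x t)))
    with hg₃def
  set g₂ : ℝ → EuclideanSpace ℝ (Fin d) := fun t =>
    A (gradient V (y t₀)) - A (gradient V (y t))
      + (t - t₀) • A (fderiv ℝ (gradient V) (y t₀) (A (x t₀))) with hg₂def
  set g₁ : ℝ → EuclideanSpace ℝ (Fin d) := fun t =>
    A (x t) - A (x t₀) + (t - t₀) • A (gradient V (y t₀))
      + ((t - t₀) ^ 2 / 2) • A (fderiv ℝ (gradient V) (y t₀) (A (x t₀))) with hg₁def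
  set g₀ : ℝ → EuclideanSpace ℝ (Fin d) := fun t =>
    y t - y t₀ - (t - t₀) • A (x t₀) + ((t - t₀) ^ 2 / 2) • A (gradient V (y t₀))
      + ((t - t₀) ^ 3 / 6) • A (fderiv ℝ (gradient V) (y t₀) (A (x t₀))) with hg₀def
  set g₃' : ℝ → EuclideanSpace ℝ (Fin d) := fun t =>
    -(A ((fderiv ℝ (fderiv ℝ (gradient V)) (y t) (A (x t))) (A (x t))
        + (fderiv ℝ (gradient V) (y t)) (A (-gradient V (y t))))) with hg₃'def
  -- derivatives of the remainder functions
  have hd₃ : ∀ t ∈ J, HasDerivAt g₃ (g₃' t) t := by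
    intro t ht
    have hw : HasDerivAt (fun s => (fderiv ℝ (gradient V) (y s)) (A (x s)))
        ((fderiv ℝ (fderiv ℝ (gradient V)) (y t) (A (x t))) (A (x t))
          + (fderiv ℝ (gradient V) (y t)) (A (-gradient V (y t)))) t :=
      (hD2y t ht).clm_apply (hAx t ht)
    have hAw := A.hasFDerivAt.comp_hasDerivAt t hw
    have := (hasDerivAt_const t
      (A (fderiv ℝ (gradient V) (y t₀) (A (x t₀))))).sub hAw
    refine this.congr_deriv ?_
    simp [hg₃'def, map_add]
  have hd₂ : ∀ t ∈ J, HasDerivAt g₂ (g₃ t) t := by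
    intro t ht
    have hgyA : HasDerivAt (fun s => A (gradient V (y s)))
        (A (fderiv ℝ (gradient V) (y t) (A (x t)))) t :=
      A.hasFDerivAt.comp_hasDerivAt t (hgy t ht)
    have hlin : HasDerivAt (fun s : ℝ => (s - t₀) • A (fderiv ℝ (gradient V) (y t₀) (A (x t₀))))
        ((1:ℝ) • A (fderiv ℝ (gradient V) (y t₀) (A (x t₀)))) t :=
      ((hasDerivAt_id t).sub_const t₀).smul_const _
    have := ((hasDerivAt_const t (A (gradient V (y t₀)))).sub hgyA).add hlin
    refine this.congr_deriv ?_
    simp [hg₃def]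
    module
  have hd₁ : ∀ t ∈ J, HasDerivAt g₁ (g₂ t) t := by
    intro t ht
    have hlin : HasDerivAt (fun s : ℝ => (s - t₀) • A (gradient V (y t₀)))
        ((1:ℝ) • A (gradient V (y t₀))) t :=
      ((hasDerivAt_id t).sub_const t₀).smul_const _
    have hquad : HasDerivAt (fun s : ℝ =>
        ((s - t₀) ^ 2 / 2) • A (fderiv ℝ (gradient V) (y t₀) (A (x t₀))))
        ((↑2 * (t - t₀) ^ 1 * 1 / 2) • A (fderiv ℝ (gradient V) (y t₀) (A (x t₀)))) t := by
      exact ((((hasDerivAt_id t).sub_const t₀).pow 2).div_const 2).smul_const _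
    have := (((hAx t ht).sub (hasDerivAt_const t (A (x t₀)))).add hlin).add hquad
    refine this.congr_deriv ?_
    simp [hg₂def, map_neg]
    module
  have hd₀ : ∀ t ∈ J, HasDerivAt g₀ (g₁ t) t := by
    intro t ht
    have hlin : HasDerivAt (fun s : ℝ => (s - t₀) • A (x t₀)) ((1:ℝ) • A (x t₀)) t :=
      ((hasDerivAt_id t).sub_const t₀).smul_const _
    have hquad : HasDerivAt (fun s : ℝ => ((s - t₀) ^ 2 / 2) • A (gradient V (y t₀)))
        ((↑2 * (t - t₀) ^ 1 * 1 / 2) • A (gradient V (y t₀))) t :=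
      ((((hasDerivAt_id t).sub_const t₀).pow 2).div_const 2).smul_const _
    have hcub : HasDerivAt (fun s : ℝ =>
        ((s - t₀) ^ 3 / 6) • A (fderiv ℝ (gradient V) (y t₀) (A (x t₀))))
        ((↑3 * (t - t₀) ^ 2 * 1 / 6) • A (fderiv ℝ (gradient V) (y t₀) (A (x t₀)))) t :=
      ((((hasDerivAt_id t).sub_const t₀).pow 3).div_const 6).smul_const _
    have := ((((hy t ht).sub (hasDerivAt_const t (y t₀))).sub hlin).add hquad).add hcub
    refine this.congr_deriv ?_
    simp [hg₁def]
    module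
  -- bound on the top derivative
  have hb₃' : ∀ t ∈ J, ‖g₃' t‖ ≤ K := by
    intro t ht
    have hxRt := hxR t ht
    have hR : (0:ℝ) ≤ R := le_trans (norm_nonneg _) hxRt
    have hAxb : ‖A (x t)‖ ≤ C_M * R := by
      calc ‖A (x t)‖ ≤ ‖A‖ * ‖x t‖ := A.le_opNorm _
        _ ≤ C_M * R := by
          apply mul_le_mul hA hxRt (norm_nonneg _) hCM
    have hAgb : ‖A (-gradient V (y t))‖ ≤ C_M * G₁ := by
      calc ‖A (-gradient V (y t))‖ ≤ ‖A‖ * ‖-gradient V (y t)‖ := A.le_opNorm _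
        _ ≤ C_M * G₁ := by
          rw [norm_neg]
          exact mul_le_mul hA (hG₁ _) (norm_nonneg _) hCM
    have hG₁0 : (0:ℝ) ≤ G₁ := le_trans (norm_nonneg _) (hG₁ (y t))
    have hG₂0 : (0:ℝ) ≤ G₂ := le_trans (norm_nonneg _) (hG₂ (y t))
    have hG₃0 : (0:ℝ) ≤ G₃ := by have := hG₃ (y t); exact le_trans (by positivity) this
    have t1 : ‖(fderiv ℝ (fderiv ℝ (gradient V)) (y t) (A (x t))) (A (x t))‖
        ≤ G₃ * (C_M * R) * (C_M * R) := by
      calc ‖(fderiv ℝ (fderiv ℝ (gradient V)) (y t) (A (x t))) (A (x t))‖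
          ≤ ‖fderiv ℝ (fderiv ℝ (gradient V)) (y t) (A (x t))‖ * ‖A (x t)‖ :=
            ContinuousLinearMap.le_opNorm _ _
        _ ≤ (G₃ * (C_M * R)) * (C_M * R) := by
            apply mul_le_mul _ hAxb (norm_nonneg _) (by positivity)
            calc ‖fderiv ℝ (fderiv ℝ (gradient V)) (y t) (A (x t))‖
                ≤ ‖fderiv ℝ (fderiv ℝ (gradient V)) (y t)‖ * ‖A (x t)‖ :=
                  ContinuousLinearMap.le_opNorm _ _
              _ ≤ G₃ * (C_M * R) := mul_le_mul (hG₃ _) hAxb (norm_nonneg _) hG₃0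
        _ = G₃ * (C_M * R) * (C_M * R) := by ring
    have t2 : ‖(fderiv ℝ (gradient V) (y t)) (A (-gradient V (y t)))‖ ≤ G₂ * (C_M * G₁) := by
      calc ‖(fderiv ℝ (gradient V) (y t)) (A (-gradient V (y t)))‖
          ≤ ‖fderiv ℝ (gradient V) (y t)‖ * ‖A (-gradient V (y t))‖ :=
            ContinuousLinearMap.le_opNorm _ _
        _ ≤ G₂ * (C_M * G₁) := mul_le_mul (hG₂ _) hAgb (norm_nonneg _) hG₂0
    calc ‖g₃' t‖ = ‖A ((fderiv ℝ (fderiv ℝ (gradient V)) (y t) (A (x t))) (A (x t))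
          + (fderiv ℝ (gradient V) (y t)) (A (-gradient V (y t))))‖ := by
            rw [hg₃'def]; exact norm_neg _
      _ ≤ ‖A‖ * ‖(fderiv ℝ (fderiv ℝ (gradient V)) (y t) (A (x t))) (A (x t))
          + (fderiv ℝ (gradient V) (y t)) (A (-gradient V (y t)))‖ := A.le_opNorm _
      _ ≤ C_M * (G₃ * (C_M * R) * (C_M * R) + G₂ * (C_M * G₁)) := by
          apply mul_le_mul hA _ (norm_nonneg _) hCM
          exact le_trans (norm_add_le _ _) (add_le_add t1 t2)
      _ = K := by rw [hK]; ring
  -- iterate the growth bound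
  have b₃ : ∀ t ∈ J, ‖g₃ t‖ ≤ K * (t - t₀) ^ 1 / (1:ℕ).factorial := by
    apply grow_step hd₃ (fun t => hasDerivAt_poly K t₀ 0 t)
    · simp [hg₃def]
    · intro t ht; simpa using hb₃' t ht
  have b₂ : ∀ t ∈ J, ‖g₂ t‖ ≤ K * (t - t₀) ^ 2 / (2:ℕ).factorial := by
    apply grow_step hd₂ (fun t => hasDerivAt_poly K t₀ 1 t)
    · simp [hg₂def]
    · exact b₃
  have b₁ : ∀ t ∈ J, ‖g₁ t‖ ≤ K * (t - t₀) ^ 3 / (3:ℕ).factorial := by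
    apply grow_step hd₁ (fun t => hasDerivAt_poly K t₀ 2 t)
    · simp [hg₁def]
    · exact b₂
  have b₀ : ∀ t ∈ J, ‖g₀ t‖ ≤ K * (t - t₀) ^ 4 / (4:ℕ).factorial := by
    apply grow_step hd₀ (fun t => hasDerivAt_poly K t₀ 3 t)
    · simp [hg₀def]
    · exact b₁
  have hfin := b₀ (t₀ + δt) ⟨by linarith, le_refl _⟩
  have heq : g₀ (t₀ + δt) = y (t₀ + δt) - y t₀ - δt • A (x t₀)
      + (δt ^ 2 / 2) • A (gradient V (y t₀))
      + (δt ^ 3 / 6) • A (fderiv ℝ (gradient V) (y t₀) (A (x t₀))) := by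
    rw [hg₀def]; simp
  rw [heq, show t₀ + δt - t₀ = δt by ring] at hfin
  calc ‖y (t₀ + δt) - y t₀ - δt • A (x t₀) + (δt ^ 2 / 2) • A (gradient V (y t₀))
        + (δt ^ 3 / 6) • A (fderiv ℝ (gradient V) (y t₀) (A (x t₀)))‖
      ≤ K * δt ^ 4 / (4:ℕ).factorial := hfin
    _ = (C_M * (C_M ^ 2 * G₃ * R ^ 2 + C_M * G₁ * G₂) / 24) * δt ^ 4 := by
        rw [hK]; norm_num [Nat.factorial]; ring
end

section
/- Work in ℝ^d with A : ℝ^d → ℝ^d continuous linear, ‖A‖ ≤ C_M, and V : ℝ^d → ℝ three times continuously differentiable with ‖∇V(z)‖ ≤ G₁, ‖D²V(z)‖ ≤ G₂ and ‖D³V(z)‖ ≤ G₃ for all z ∈ ℝ^d. Let δt > 0, t₀ ∈ ℝ, and let y, x : [t₀, t₀ + δt] → ℝ^d be differentiable with y'(t) = A·x(t) and x'(t) = −∇V(y(t)) on [t₀, t₀ + δt], and suppose ‖x(t)‖ ≤ R for all t ∈ [t₀, t₀ + δt]. Then ‖x(t₀ + δt) − x(t₀) + δt·∇V(y(t₀))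 + (δt²/2)·D²V(y(t₀))(A·x(t₀))‖ ≤ ((G₃·C_M²·R² + G₂·C_M·G₁)/6)·δt³. -/
/-- Third-order Taylor expansion of the exact momentum solution of the Hamiltonian
system `y' = A·x`, `x' = −∇V(y)` with explicit remainder bound:
`‖x(t₀+δt) − x(t₀) + δt·∇V(y(t₀)) + (δt²/2)·D²V(y(t₀))(A·x(t₀))‖
  ≤ ((G₃·C_M²·R² + G₂·C_M·G₁)/6)·δt³`. -/
theorem stmt11
    (d : ℕ) (hd : 1 ≤ d)
    (A : EuclideanSpace ℝ (Fin d) →L[ℝ] EuclideanSpace ℝ (Fin d))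
    (C_M : ℝ) (hA : ‖A‖ ≤ C_M)
    (V : EuclideanSpace ℝ (Fin d) → ℝ) (hV : ContDiff ℝ 3 V)
    (G₁ G₂ G₃ : ℝ)
    (hG₁ : ∀ z, ‖gradient V z‖ ≤ G₁)
    (hG₂ : ∀ z, ‖fderiv ℝ (gradient V) z‖ ≤ G₂)
    (hG₃ : ∀ z, ‖fderiv ℝ (fderiv ℝ (gradient V)) z‖ ≤ G₃)
    (R : ℝ) (δt t₀ : ℝ) (hδt : 0 < δt)
    (y x : ℝ → EuclideanSpace ℝ (Fin d))
    (hy : ∀ t ∈ Set.Icc t₀ (t₀ + δt), HasDerivAt y (A (x t)) t)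
    (hx : ∀ t ∈ Set.Icc t₀ (t₀ + δt), HasDerivAt x (-gradient V (y t)) t)
    (hxR : ∀ t ∈ Set.Icc t₀ (t₀ + δt), ‖x t‖ ≤ R) :
    ‖x (t₀ + δt) - x t₀ + δt • gradient V (y t₀)
        + (δt ^ 2 / 2) • fderiv ℝ (gradient V) (y t₀) (A (x t₀))‖
      ≤ ((G₃ * C_M ^ 2 * R ^ 2 + G₂ * C_M * G₁) / 6) * δt ^ 3 := by
  set F := gradient V with hFdef
  set DF := fderiv ℝ F with hDFdef
  set D2F := fderiv ℝ DF with hD2Fdef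
  have ht₀ : t₀ ∈ Set.Icc t₀ (t₀ + δt) := ⟨le_refl _, by linarith⟩
  have hCM : 0 ≤ C_M := le_trans (norm_nonneg A) hA
  have hR : 0 ≤ R := le_trans (norm_nonneg _) (hxR t₀ ht₀)
  have hG1 : 0 ≤ G₁ := le_trans (norm_nonneg _) (hG₁ 0)
  have hG2 : 0 ≤ G₂ := le_trans (norm_nonneg _) (hG₂ 0)
  have hG3 : 0 ≤ G₃ := le_trans (norm_nonneg (D2F 0)) (hG₃ 0)
  -- smoothness of the gradient
  have hF2 : ContDiff ℝ 2 F := by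
    have h1 : ContDiff ℝ 2 (fderiv ℝ V) := hV.fderiv_right (by norm_num)
    have h2 := ((InnerProductSpace.toDual ℝ
      (EuclideanSpace ℝ (Fin d))).symm.contDiff).comp h1
    exact h2
  have hDF1 : ContDiff ℝ 1 DF := hF2.fderiv_right (by norm_num)
  have hFdiff : Differentiable ℝ F := hF2.differentiable (by norm_num)
  have hDFdiff : Differentiable ℝ DF := hDF1.differentiable (by norm_num)
  set K := G₃ * C_M ^ 2 * R ^ 2 + G₂ * C_M * G₁ with hKdef
  -- derivative of t ↦ DF (y t) (A (x t))
  have hh : ∀ t ∈ Set.Icc t₀ (t₀ + δt),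
      HasDerivAt (fun s => DF (y s) (A (x s)))
        (D2F (y t) (A (x t)) (A (x t)) + DF (y t) (A (-(F (y t))))) t := by
    intro t ht
    have h1 : HasDerivAt (fun s => DF (y s)) (D2F (y t) (A (x t))) t :=
      ((hDFdiff (y t)).hasFDerivAt).comp_hasDerivAt t (hy t ht)
    have h2 : HasDerivAt (fun s => A (x s)) (A (-(F (y t)))) t :=
      A.hasFDerivAt.comp_hasDerivAt t (hx t ht)
    exact h1.clm_apply h2
  have hhbound : ∀ t ∈ Set.Icc t₀ (t₀ + δt),
      ‖D2F (y t) (A (x t)) (A (x t)) + DF (y t) (A (-(F (y t))))‖ ≤ K := by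
    intro t ht
    have hAx : ‖A (x t)‖ ≤ C_M * R :=
      le_trans (A.le_opNorm _) (mul_le_mul hA (hxR t ht) (norm_nonneg _) hCM)
    have h1 : ‖D2F (y t) (A (x t)) (A (x t))‖ ≤ G₃ * (C_M * R) * (C_M * R) := by
      calc ‖D2F (y t) (A (x t)) (A (x t))‖
          ≤ ‖D2F (y t) (A (x t))‖ * ‖A (x t)‖ := ContinuousLinearMap.le_opNorm _ _
        _ ≤ ‖D2F (y t)‖ * ‖A (x t)‖ * ‖A (x t)‖ :=
            mul_le_mul_of_nonneg_right (ContinuousLinearMap.le_opNorm _ _)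
              (norm_nonneg _)
        _ ≤ G₃ * (C_M * R) * (C_M * R) :=
            mul_le_mul (mul_le_mul (hG₃ _) hAx (norm_nonneg _) hG3)
              hAx (norm_nonneg _) (mul_nonneg hG3 (mul_nonneg hCM hR))
    have h2 : ‖DF (y t) (A (-(F (y t))))‖ ≤ G₂ * (C_M * G₁) := by
      have hAF : ‖A (-(F (y t)))‖ ≤ C_M * G₁ := by
        calc ‖A (-(F (y t)))‖ ≤ ‖A‖ * ‖-(F (y t))‖ := A.le_opNorm _
          _ = ‖A‖ * ‖F (y t)‖ := by rw [norm_neg]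
          _ ≤ C_M * G₁ := mul_le_mul hA (hG₁ _) (norm_nonneg _) hCM
      calc ‖DF (y t) (A (-(F (y t))))‖ ≤ ‖DF (y t)‖ * ‖A (-(F (y t)))‖ :=
            ContinuousLinearMap.le_opNorm _ _
        _ ≤ G₂ * (C_M * G₁) :=
            mul_le_mul (hG₂ _) hAF (norm_nonneg _) hG2
    calc ‖D2F (y t) (A (x t)) (A (x t)) + DF (y t) (A (-(F (y t))))‖
        ≤ ‖D2F (y t) (A (x t)) (A (x t))‖ + ‖DF (y t) (A (-(F (y t))))‖ :=
          norm_add_le _ _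
      _ ≤ G₃ * (C_M * R) * (C_M * R) + G₂ * (C_M * G₁) := add_le_add h1 h2
      _ = K := by ring
  -- Step A : bound on second-derivative increment
  have stepA : ∀ t ∈ Set.Icc t₀ (t₀ + δt),
      ‖DF (y t) (A (x t)) - DF (y t₀) (A (x t₀))‖ ≤ K * (t - t₀) := by
    exact norm_image_sub_le_of_norm_deriv_le_segment'
      (f := fun s => DF (y s) (A (x s)))
      (f' := fun s => D2F (y s) (A (x s)) (A (x s)) + DF (y s) (A (-(F (y s)))))
      (a := t₀) (b := t₀ + δt)
      (fun t ht => (hh t ht).hasDerivWithinAt)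
      (fun t ht => hhbound t (Set.mem_Icc_of_Ico ht))
  -- Step B : bound on first-derivative increment
  have stepB : ∀ t ∈ Set.Icc t₀ (t₀ + δt),
      ‖F (y t) - F (y t₀) - (t - t₀) • DF (y t₀) (A (x t₀))‖
        ≤ K / 2 * (t - t₀) ^ 2 := by
    set f₁ : ℝ → EuclideanSpace ℝ (Fin d) :=
      fun t => F (y t) - F (y t₀) - (t - t₀) • DF (y t₀) (A (x t₀)) with hf₁def
    have hf₁' : ∀ t ∈ Set.Icc t₀ (t₀ + δt),
        HasDerivAt f₁ (DF (y t) (A (x t)) - DF (y t₀) (A (x t₀))) t := by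
      intro t ht
      have h1 : HasDerivAt (fun s => F (y s)) (DF (y t) (A (x t))) t :=
        ((hFdiff (y t)).hasFDerivAt).comp_hasDerivAt t (hy t ht)
      have h2 : HasDerivAt (fun s : ℝ => (s - t₀) • DF (y t₀) (A (x t₀)))
          (DF (y t₀) (A (x t₀))) t := by
        simpa using ((hasDerivAt_id t).sub_const t₀).smul_const
          (DF (y t₀) (A (x t₀)))
      exact (h1.sub_const (F (y t₀))).sub h2
    have key := image_norm_le_of_norm_deriv_right_le_deriv_boundary
      (f := f₁)
      (f' := fun t => DF (y t) (A (x t)) - DF (y t₀) (A (x t₀)))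
      (a := t₀) (b := t₀ + δt)
      (fun t ht => (hf₁' t ht).continuousAt.continuousWithinAt)
      (fun t ht => (hf₁' t (Set.mem_Icc_of_Ico ht)).hasDerivWithinAt)
      (B := fun t => K / 2 * (t - t₀) ^ 2) (B' := fun t => K * (t - t₀))
      (by simp [hf₁def])
      (fun t => by
        have : HasDerivAt (fun t : ℝ => K / 2 * (t - t₀) ^ 2)
            (K / 2 * (2 * (t - t₀) ^ 1 * 1)) t := by
          exact (((hasDerivAt_id t).sub_const t₀).pow 2).const_mul (K / 2)
        simpa using this.congr_deriv (by ring))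
      (fun t ht => stepA t (Set.mem_Icc_of_Ico ht))
    intro t ht
    exact key ht
  -- Step C : final bound
  set f₂ : ℝ → EuclideanSpace ℝ (Fin d) :=
    fun t => x t - x t₀ + (t - t₀) • F (y t₀)
      + ((t - t₀) ^ 2 / 2) • DF (y t₀) (A (x t₀)) with hf₂def
  have hf₂' : ∀ t ∈ Set.Icc t₀ (t₀ + δt),
      HasDerivAt f₂ (-(F (y t) - F (y t₀) - (t - t₀) • DF (y t₀) (A (x t₀)))) t := by
    intro t ht
    have h1 : HasDerivAt (fun s : ℝ => (s - t₀) • F (y t₀)) (F (y t₀)) t := by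
      simpa using ((hasDerivAt_id t).sub_const t₀).smul_const (F (y t₀))
    have h2 : HasDerivAt (fun s : ℝ => ((s - t₀) ^ 2 / 2) • DF (y t₀) (A (x t₀)))
        ((t - t₀) • DF (y t₀) (A (x t₀))) t := by
      have hsq : HasDerivAt (fun s : ℝ => (s - t₀) ^ 2 / 2) (t - t₀) t := by
        have : HasDerivAt (fun s : ℝ => (s - t₀) ^ 2 / 2)
            (2 * (t - t₀) ^ 1 * 1 / 2) t :=
          (((hasDerivAt_id t).sub_const t₀).pow 2).div_const 2
        simpa using this.congr_deriv (by ring)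
      simpa using hsq.smul_const (DF (y t₀) (A (x t₀)))
    have := (((hx t ht).sub_const (x t₀)).add h1).add h2
    refine this.congr_deriv ?_
    abel
  have key := image_norm_le_of_norm_deriv_right_le_deriv_boundary
    (f := f₂)
    (f' := fun t => -(F (y t) - F (y t₀) - (t - t₀) • DF (y t₀) (A (x t₀))))
    (a := t₀) (b := t₀ + δt)
    (fun t ht => (hf₂' t ht).continuousAt.continuousWithinAt)
    (fun t ht => (hf₂' t (Set.mem_Icc_of_Ico ht)).hasDerivWithinAt)
    (B := fun t => K / 6 * (t - t₀) ^ 3) (B' := fun t => K / 2 * (t - t₀) ^ 2)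
    (by simp [hf₂def])
    (fun t => by
      have : HasDerivAt (fun t : ℝ => K / 6 * (t - t₀) ^ 3)
          (K / 6 * (3 * (t - t₀) ^ 2 * 1)) t :=
        (((hasDerivAt_id t).sub_const t₀).pow 3).const_mul (K / 6)
      simpa using this.congr_deriv (by ring))
    (fun t ht => by
      rw [norm_neg]; exact stepB t (Set.mem_Icc_of_Ico ht))
  have hfin := key (Set.right_mem_Icc.2 (by linarith))
  have heq : f₂ (t₀ + δt) = x (t₀ + δt) - x t₀ + δt • F (y t₀)
      + (δt ^ 2 / 2) • DF (y t₀) (A (x t₀)) := by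
    simp [hf₂def]
  rw [heq] at hfin
  calc ‖x (t₀ + δt) - x t₀ + δt • gradient V (y t₀)
        + (δt ^ 2 / 2) • fderiv ℝ (gradient V) (y t₀) (A (x t₀))‖
      ≤ K / 6 * (t₀ + δt - t₀) ^ 3 := hfin
    _ = ((G₃ * C_M ^ 2 * R ^ 2 + G₂ * C_M * G₁) / 6) * δt ^ 3 := by
        rw [hKdef]; ring_nf
end
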